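/- arXiv:2604.02297 — 3 statements merged into one kernel-verified Lean document; each statement's English description precedes it below -/
import Mathlib

section
/- Let d ≥ 1 be an integer, p ∈ [1,∞) a real number, μ ∈ ℝ, ħ ∈ (0,1] and β > 0 with βħ ≤ 1. Set F(r) = (1 + e^{β(r−μ)})^{-1}, λ_n = (2n+d)ħ for integers n ≥ 0, λ_{−1} = (d−2)ħ, N_n = binom(n+d−1, d−1), and define S_p ≥ 0 by S_p^p = (2π/ħ^{p−1}) Σ_{n=0}^∞ N_n (2πħ)^{d−1} |F(λ_n) − F(λ_{n−1})|^p (λ_n − dħ)^{p/2}. Then there exist constants 0 < c ≤ C depending only on d and p such that: if μ < dħ then c β^{1/2 − d/p} e^{β(μ−dħ)} ≤ S_p ≤ C β^{1/2 − d/p} e^{β(μ−dħ)}, and if μ ≥ dħ then c β^{1/2 − d/p}((β(μ − dħ + ħ))^{1/2 + (d−1)/p} + 1) ≤ S_p ≤ C β^{1/2 − d/p}((β(μ − dħ + ħ))^{1/2 + (d−1)/p} + 1). -/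
/-- The Fermi–Dirac function `F(r) = (1 + e^{β(r−μ)})⁻¹`. -/
noncomputable def FD (β μ r : ℝ) : ℝ := (1 + Real.exp (β * (r - μ)))⁻¹

open Real



lemma sp_rpow_mul_exp_le {a : ℝ} (ha : 0 < a) {x : ℝ} (hx : 0 ≤ x) :
    x ^ a * Real.exp (-x) ≤ a ^ a := by
  rcases eq_or_lt_of_le hx with h | h
  · rw [← h, Real.zero_rpow ha.ne', zero_mul]
    positivity
  · have hlog : Real.log x - Real.log a ≤ x / a - 1 := by
      have h2 := Real.log_le_sub_one_of_pos (show 0 < x / a by positivity)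
      rwa [Real.log_div h.ne' ha.ne'] at h2
    have h3 : a * Real.log x + -x ≤ a * Real.log a := by
      have h4 := mul_le_mul_of_nonneg_left hlog ha.le
      rw [mul_sub, mul_sub, mul_div_cancel₀ _ ha.ne', mul_one] at h4
      linarith
    calc x ^ a * Real.exp (-x) = Real.exp (a * Real.log x + -x) := by
          rw [Real.rpow_def_of_pos h, Real.exp_add, mul_comm (Real.log x) a]
      _ ≤ Real.exp (a * Real.log a) := Real.exp_le_exp.2 h3
      _ = a ^ a := by rw [Real.rpow_def_of_pos ha, mul_comm]

lemma sp_summable_exp {s : ℝ} (hs : 0 < s) :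
    Summable (fun n : ℕ => Real.exp (-(s * n))) := by
  have h : (fun n : ℕ => Real.exp (-(s * n))) = fun n : ℕ => (Real.exp (-s)) ^ n := by
    funext n; rw [← Real.exp_nat_mul]; ring_nf
  rw [h]
  exact summable_geometric_of_lt_one (Real.exp_pos _).le
    (Real.exp_lt_one_iff.2 (by linarith))

lemma sp_one_sub_exp_neg_ge {s : ℝ} (hs : 0 < s) : s / (1 + s) ≤ 1 - Real.exp (-s) := by
  have h2 : s + 1 ≤ Real.exp s := Real.add_one_le_exp s
  have h5 : Real.exp (-s) * (1 + s) ≤ 1 := by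
    rw [Real.exp_neg]
    rw [inv_mul_le_iff₀ (Real.exp_pos s)]
    linarith
  rw [div_le_iff₀ (by linarith : (0:ℝ) < 1 + s)]
  nlinarith

lemma sp_tsum_exp_le {s : ℝ} (hs : 0 < s) :
    ∑' n : ℕ, Real.exp (-(s * n)) ≤ (1 + s) / s := by
  have h : (fun n : ℕ => Real.exp (-(s * n))) = fun n : ℕ => (Real.exp (-s)) ^ n := by
    funext n; rw [← Real.exp_nat_mul]; ring_nf
  rw [h, tsum_geometric_of_lt_one (Real.exp_pos _).le (Real.exp_lt_one_iff.2 (by linarith))]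
  have h1 := sp_one_sub_exp_neg_ge hs
  have h6 : (0:ℝ) < 1 - Real.exp (-s) := lt_of_lt_of_le (by positivity) h1
  rw [inv_eq_one_div, div_le_div_iff₀ h6 hs]
  calc 1 * s = (1 + s) * (s / (1 + s)) := by field_simp
    _ ≤ (1 + s) * (1 - Real.exp (-s)) := mul_le_mul_of_nonneg_left h1 (by linarith)

lemma sp_summable_poly_exp {a : ℝ} (ha : 0 < a) {s : ℝ} (hs : 0 < s) :
    Summable (fun n : ℕ => (n : ℝ) ^ a * Real.exp (-(s * n))) := by
  have key : ∀ n : ℕ, (n : ℝ) ^ a * Real.exp (-(s * n)) ≤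
      (a ^ a * (2 / s) ^ a) * Real.exp (-(s / 2 * n)) := by
    intro n
    have hsn : (0:ℝ) ≤ s / 2 * n := by positivity
    have h1 : (s / 2 * n) ^ a * Real.exp (-(s / 2 * n)) ≤ a ^ a :=
      sp_rpow_mul_exp_le ha hsn
    have h2 : (s / 2 * n) ^ a = (s / 2) ^ a * (n : ℝ) ^ a :=
      Real.mul_rpow (by positivity) (Nat.cast_nonneg n)
    have h3 : (n : ℝ) ^ a * Real.exp (-(s / 2 * n)) ≤ a ^ a * (2 / s) ^ a := by
      have h4 : (2 / s) ^ a * ((s / 2) ^ a * ((n:ℝ) ^ a * Real.exp (-(s / 2 * n))))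
          ≤ (2 / s) ^ a * a ^ a := by
        apply mul_le_mul_of_nonneg_left _ (Real.rpow_nonneg (by positivity) a)
        rw [← mul_assoc, ← h2]; exact h1
      have h5 : (2 / s) ^ a * (s / 2) ^ a = 1 := by
        rw [← Real.mul_rpow (by positivity) (by positivity)]
        rw [show 2 / s * (s / 2) = 1 by field_simp]
        exact Real.one_rpow a
      rw [← mul_assoc, h5, one_mul] at h4
      linarith [h4]
    calc (n : ℝ) ^ a * Real.exp (-(s * n))
        = ((n:ℝ) ^ a * Real.exp (-(s/2 * n))) * Real.exp (-(s/2 * n)) := by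
          rw [mul_assoc, ← Real.exp_add]; ring_nf
      _ ≤ (a ^ a * (2 / s) ^ a) * Real.exp (-(s / 2 * n)) := by
          apply mul_le_mul_of_nonneg_right h3 (Real.exp_pos _).le
  apply Summable.of_nonneg_of_le (fun n => by positivity) key
  exact (sp_summable_exp (by positivity)).mul_left _


/-- Upper bound `∑ n^a e^{-ns} ≤ C s^{-1-a}` for `0 < s ≤ M`. -/
lemma sp_tsum_poly_exp_le {a M : ℝ} (ha : 0 < a) (hM : 0 < M) :
    ∃ C : ℝ, 0 < C ∧ ∀ s : ℝ, 0 < s → s ≤ M →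
      ∑' n : ℕ, (n : ℝ) ^ a * Real.exp (-(s * n)) ≤ C * s ^ (-1 - a) := by
  refine ⟨a ^ a * 2 ^ a * ((1 + M / 2) * 2), by positivity, fun s hs hsM => ?_⟩
  have key : ∀ n : ℕ, (n : ℝ) ^ a * Real.exp (-(s * n)) ≤
      (a ^ a * (2 / s) ^ a) * Real.exp (-(s / 2 * n)) := by
    intro n
    have hsn : (0:ℝ) ≤ s / 2 * n := by positivity
    have h1 : (s / 2 * n) ^ a * Real.exp (-(s / 2 * n)) ≤ a ^ a :=
      sp_rpow_mul_exp_le ha hsn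
    have h2 : (s / 2 * n) ^ a = (s / 2) ^ a * (n : ℝ) ^ a :=
      Real.mul_rpow (by positivity) (Nat.cast_nonneg n)
    have h3 : (n : ℝ) ^ a * Real.exp (-(s / 2 * n)) ≤ a ^ a * (2 / s) ^ a := by
      have h4 : (2 / s) ^ a * ((s / 2) ^ a * ((n:ℝ) ^ a * Real.exp (-(s / 2 * n))))
          ≤ (2 / s) ^ a * a ^ a := by
        apply mul_le_mul_of_nonneg_left _ (Real.rpow_nonneg (by positivity) a)
        rw [← mul_assoc, ← h2]; exact h1
      have h5 : (2 / s) ^ a * (s / 2) ^ a = 1 := by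
        rw [← Real.mul_rpow (by positivity) (by positivity)]
        rw [show 2 / s * (s / 2) = 1 by field_simp]
        exact Real.one_rpow a
      rw [← mul_assoc, h5, one_mul] at h4
      linarith [h4]
    calc (n : ℝ) ^ a * Real.exp (-(s * n))
        = ((n:ℝ) ^ a * Real.exp (-(s/2 * n))) * Real.exp (-(s/2 * n)) := by
          rw [mul_assoc, ← Real.exp_add]; ring_nf
      _ ≤ (a ^ a * (2 / s) ^ a) * Real.exp (-(s / 2 * n)) :=
          mul_le_mul_of_nonneg_right h3 (Real.exp_pos _).le
  have h6 : ∑' n : ℕ, (n : ℝ) ^ a * Real.exp (-(s * n)) ≤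
      (a ^ a * (2 / s) ^ a) * ∑' n : ℕ, Real.exp (-(s / 2 * n)) := by
    rw [← tsum_mul_left]
    exact Summable.tsum_le_tsum key (sp_summable_poly_exp ha hs)
      ((sp_summable_exp (by positivity)).mul_left _)
  have h7 : ∑' n : ℕ, Real.exp (-(s / 2 * n)) ≤ (1 + M / 2) * 2 / s := by
    calc ∑' n : ℕ, Real.exp (-(s / 2 * n)) ≤ (1 + s / 2) / (s / 2) :=
          sp_tsum_exp_le (by positivity)
      _ ≤ (1 + M / 2) / (s / 2) := by
          gcongr
      _ = (1 + M / 2) * 2 / s := by ring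
  have h8 : (2 / s) ^ a = 2 ^ a * (s ^ a)⁻¹ := by
    rw [Real.div_rpow (by norm_num) hs.le, div_eq_mul_inv]
  have h9 : s ^ (-1 - a) = (s ^ a)⁻¹ * s⁻¹ := by
    rw [show (-1 - a) = -a + -1 by ring, Real.rpow_add hs, Real.rpow_neg hs.le,
      Real.rpow_neg_one]
  calc ∑' n : ℕ, (n : ℝ) ^ a * Real.exp (-(s * n))
      ≤ (a ^ a * (2 / s) ^ a) * ((1 + M / 2) * 2 / s) := by
        refine le_trans h6 (mul_le_mul_of_nonneg_left h7 (by positivity))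
    _ = a ^ a * 2 ^ a * ((1 + M / 2) * 2) * ((s ^ a)⁻¹ * s⁻¹) := by
        rw [h8]; ring
    _ = a ^ a * 2 ^ a * ((1 + M / 2) * 2) * s ^ (-1 - a) := by rw [h9]

/-- Lower bound `c s^{-1-a} ≤ ∑ n^a e^{-ns}` for `0 < s ≤ M`. -/
lemma sp_tsum_poly_exp_ge {a M : ℝ} (ha : 0 < a) (hM : 0 < M) :
    ∃ c : ℝ, 0 < c ∧ ∀ s : ℝ, 0 < s → s ≤ M →
      c * s ^ (-1 - a) ≤ ∑' n : ℕ, (n : ℝ) ^ a * Real.exp (-(s * n)) := by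
  refine ⟨Real.exp (-(2 + 2 * M)), Real.exp_pos _, fun s hs hsM => ?_⟩
  set N : ℕ := ⌈1 / s⌉₊ with hN
  have hNs : (1:ℝ) / s ≤ N := Nat.le_ceil _
  have hNs' : (N : ℝ) < 1 / s + 1 := Nat.ceil_lt_add_one (by positivity)
  have hterm : ∀ n ∈ Finset.Icc N (2 * N), s ^ (-a) * Real.exp (-(2 + 2 * M)) ≤
      (n : ℝ) ^ a * Real.exp (-(s * n)) := by
    intro n hn
    rw [Finset.mem_Icc] at hn
    have h1 : (1:ℝ) / s ≤ n := le_trans hNs (by exact_mod_cast hn.1)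
    have h2 : s ^ (-a) ≤ (n : ℝ) ^ a := by
      rw [Real.rpow_neg hs.le, ← Real.inv_rpow hs.le, inv_eq_one_div]
      exact Real.rpow_le_rpow (by positivity) h1 ha.le
    have h3 : s * n ≤ 2 + 2 * M := by
      have h4 : (n : ℝ) ≤ 2 * N := by exact_mod_cast hn.2
      have h5 : (N : ℝ) ≤ 1 / s + 1 := hNs'.le
      have : s * n ≤ s * (2 * (1 / s + 1)) := by
        apply mul_le_mul_of_nonneg_left _ hs.le
        linarith
      calc s * n ≤ s * (2 * (1 / s + 1)) := this
        _ = 2 + 2 * s := by field_simp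
        _ ≤ 2 + 2 * M := by linarith
    have h6 : Real.exp (-(2 + 2 * M)) ≤ Real.exp (-(s * n)) :=
      Real.exp_le_exp.2 (by linarith)
    exact mul_le_mul h2 h6 (Real.exp_pos _).le (Real.rpow_nonneg (Nat.cast_nonneg n) a)
  have hsum : (Finset.Icc N (2 * N)).card • (s ^ (-a) * Real.exp (-(2 + 2 * M))) ≤
      ∑ n ∈ Finset.Icc N (2 * N), (n : ℝ) ^ a * Real.exp (-(s * n)) := by
    rw [← Finset.sum_const]
    exact Finset.sum_le_sum hterm
  have hcard : (Finset.Icc N (2 * N)).card = N + 1 := by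
    rw [Nat.card_Icc]; omega
  have hcard' : (1:ℝ) / s ≤ ((Finset.Icc N (2 * N)).card : ℝ) := by
    rw [hcard]; push_cast; linarith
  have hfin : ∑ n ∈ Finset.Icc N (2 * N), (n : ℝ) ^ a * Real.exp (-(s * n)) ≤
      ∑' n : ℕ, (n : ℝ) ^ a * Real.exp (-(s * n)) :=
    Summable.sum_le_tsum _ (fun n _ => by positivity) (sp_summable_poly_exp ha hs)
  have h7 : Real.exp (-(2 + 2 * M)) * s ^ (-1 - a) ≤
      ((Finset.Icc N (2 * N)).card : ℝ) * (s ^ (-a) * Real.exp (-(2 + 2 * M))) := by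
    have h8 : s ^ (-1 - a) = s⁻¹ * s ^ (-a) := by
      rw [show (-1 - a) = -1 + -a by ring, Real.rpow_add hs, Real.rpow_neg_one]
    rw [h8]
    have h9 : s⁻¹ ≤ ((Finset.Icc N (2 * N)).card : ℝ) := by
      rw [inv_eq_one_div]; exact hcard'
    calc Real.exp (-(2 + 2 * M)) * (s⁻¹ * s ^ (-a))
        = s⁻¹ * (s ^ (-a) * Real.exp (-(2 + 2 * M))) := by ring
      _ ≤ ((Finset.Icc N (2 * N)).card : ℝ) * (s ^ (-a) * Real.exp (-(2 + 2 * M))) := by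
          apply mul_le_mul_of_nonneg_right h9 (by positivity)
  calc Real.exp (-(2 + 2 * M)) * s ^ (-1 - a)
      ≤ ((Finset.Icc N (2 * N)).card : ℝ) * (s ^ (-a) * Real.exp (-(2 + 2 * M))) := h7
    _ = (Finset.Icc N (2 * N)).card • (s ^ (-a) * Real.exp (-(2 + 2 * M))) := by
        rw [nsmul_eq_mul]
    _ ≤ ∑ n ∈ Finset.Icc N (2 * N), (n : ℝ) ^ a * Real.exp (-(s * n)) := hsum
    _ ≤ ∑' n : ℕ, (n : ℝ) ^ a * Real.exp (-(s * n)) := hfin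

/-- Folding a summable nonneg sequence around `n₀` at most doubles the sum. -/
lemma sp_tsum_dist_le {ψ : ℕ → ℝ} (hψ0 : ∀ n, 0 ≤ ψ n) (hψ : Summable ψ) (n₀ : ℕ) :
    Summable (fun n => ψ (Nat.dist n n₀)) ∧
      ∑' n : ℕ, ψ (Nat.dist n n₀) ≤ 2 * ∑' n, ψ n := by
  have hshift : ∀ n : ℕ, ψ (Nat.dist (n + n₀) n₀) = ψ n := by
    intro n; congr 1; simp only [Nat.dist]; omega
  have hsummable : Summable (fun n => ψ (Nat.dist n n₀)) := by
    rw [← summable_nat_add_iff n₀]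
    simpa only [hshift] using hψ
  refine ⟨hsummable, ?_⟩
  have hsplit := Summable.sum_add_tsum_nat_add n₀ hsummable
  have htail : ∑' n : ℕ, ψ (Nat.dist (n + n₀) n₀) = ∑' n, ψ n := by
    exact tsum_congr hshift
  have hhead : ∑ n ∈ Finset.range n₀, ψ (Nat.dist n n₀) ≤ ∑' n, ψ n := by
    have e1 : ∑ n ∈ Finset.range n₀, ψ (Nat.dist n n₀) =
        ∑ n ∈ Finset.range n₀, ψ (n + 1) := by
      rw [← Finset.sum_range_reflect]
      apply Finset.sum_congr rfl
      intro i hi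
      rw [Finset.mem_range] at hi
      congr 1
      simp only [Nat.dist]; omega
    rw [e1]
    have e2 : ∑ n ∈ Finset.range n₀, ψ (n + 1) ≤ ∑' n : ℕ, ψ (n + 1) :=
      Summable.sum_le_tsum _ (fun n _ => hψ0 _) ((summable_nat_add_iff 1).2 hψ)
    have e3 : ∑' n : ℕ, ψ (n + 1) ≤ ∑' n, ψ n := by
      have := Summable.sum_add_tsum_nat_add 1 hψ
      have h0 : 0 ≤ ∑ n ∈ Finset.range 1, ψ n := by
        simp [hψ0 0]
      linarith
    linarith
  linarith [hsplit, htail ▸ hsplit]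


/-- The model sequence. -/
noncomputable def spF (a p t m : ℝ) (n : ℕ) : ℝ :=
    (n : ℝ) ^ a * Real.exp (-(p * |2 * n * t - m|))

lemma sp_cast_dist (n m : ℕ) : (Nat.dist n m : ℝ) = |(n : ℝ) - m| := by
  rcases le_total n m with h | h
  · rw [Nat.dist_eq_sub_of_le h,
      abs_of_nonpos (sub_nonpos.2 (show (n:ℝ) ≤ m by exact_mod_cast h)), neg_sub,
      Nat.cast_sub h]
  · rw [Nat.dist_eq_sub_of_le_right h,
      abs_of_nonneg (sub_nonneg.2 (show (m:ℝ) ≤ n by exact_mod_cast h)),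
      Nat.cast_sub h]

lemma sp_add_rpow_le {x y a : ℝ} (hx : 0 ≤ x) (hy : 0 ≤ y) (ha : 0 ≤ a) :
    (x + y) ^ a ≤ 2 ^ a * (x ^ a + y ^ a) := by
  have key : ∀ u v : ℝ, 0 ≤ u → u ≤ v → (u + v) ^ a ≤ 2 ^ a * (u ^ a + v ^ a) := by
    intro u v hu huv
    calc (u + v) ^ a ≤ (2 * v) ^ a :=
          Real.rpow_le_rpow (by linarith) (by linarith) ha
      _ = 2 ^ a * v ^ a := Real.mul_rpow (by norm_num) (by linarith)
      _ ≤ 2 ^ a * (u ^ a + v ^ a) := by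
          have := Real.rpow_nonneg hu a
          have h2 : (0:ℝ) ≤ (2:ℝ) ^ a := Real.rpow_nonneg (by norm_num) a
          nlinarith
  rcases le_total x y with h | h
  · exact key x y hx h
  · have := key y x hy h
    rw [add_comm y x, add_comm ((y:ℝ)^a)] at this
    exact this

lemma sp_core_nonneg (a p t m : ℝ) (n : ℕ) : 0 ≤ spF a p t m n := by
  unfold spF; positivity

lemma sp_core_summable {a p t : ℝ} (m : ℝ) (ha : 0 < a) (hp : 0 < p) (ht : 0 < t) :
    Summable (spF a p t m) := by
  refine Summable.of_nonneg_of_le (sp_core_nonneg a p t m) (fun n => ?_)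
    (((sp_summable_poly_exp ha (show (0:ℝ) < 2*p*t by positivity)).mul_left
      (Real.exp (p * m))))
  · unfold spF
    have h1 : 2 * (n:ℝ) * t - m ≤ |2 * (n:ℝ) * t - m| := le_abs_self _
    have h2 : Real.exp (-(p * |2 * (n:ℝ) * t - m|)) ≤
        Real.exp (p * m) * Real.exp (-(2 * p * t * n)) := by
      rw [← Real.exp_add]
      apply Real.exp_le_exp.2
      nlinarith
    calc (n:ℝ) ^ a * Real.exp (-(p * |2 * n * t - m|)) ≤
          (n:ℝ) ^ a * (Real.exp (p * m) * Real.exp (-(2 * p * t * n))) :=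
            mul_le_mul_of_nonneg_left h2 (Real.rpow_nonneg (Nat.cast_nonneg n) a)
      _ = Real.exp (p * m) * ((n : ℝ) ^ a * Real.exp (-(2 * p * t * n))) := by ring

/-- Core two-sided bound in the regime `m ≤ 0`. -/
lemma sp_core_neg {a p : ℝ} (ha : 0 < a) (hp : 1 ≤ p) :
    ∃ c C : ℝ, 0 < c ∧ 0 < C ∧ ∀ t m : ℝ, 0 < t → t ≤ 1 → m ≤ 0 →
      c * (t ^ (-1 - a) * Real.exp (p * m)) ≤ ∑' n, spF a p t m n ∧
      ∑' n, spF a p t m n ≤ C * (t ^ (-1 - a) * Real.exp (p * m)) := by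
  have hp0 : 0 < p := by linarith
  obtain ⟨c1, hc1, hc1le⟩ := sp_tsum_poly_exp_ge ha (show (0:ℝ) < 2 * p by positivity)
  obtain ⟨C1, hC1, hC1le⟩ := sp_tsum_poly_exp_le ha (show (0:ℝ) < 2 * p by positivity)
  refine ⟨c1 * (2 * p) ^ (-1 - a), C1 * (2 * p) ^ (-1 - a), by positivity, by positivity,
    fun t m ht ht1 hm => ?_⟩
  have hs : (0:ℝ) < 2 * p * t := by positivity
  have hsM : 2 * p * t ≤ 2 * p := by nlinarith
  have hrw : ∀ n : ℕ, spF a p t m n =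
      Real.exp (p * m) * ((n : ℝ) ^ a * Real.exp (-(2 * p * t * n))) := by
    intro n
    unfold spF
    have habs : |2 * (n:ℝ) * t - m| = 2 * (n:ℝ) * t - m := by
      apply abs_of_nonneg
      have : (0:ℝ) ≤ 2 * (n:ℝ) * t := by positivity
      linarith
    rw [habs, show -(p * (2 * (n:ℝ) * t - m)) = p * m + -(2 * p * t * n) by ring,
      Real.exp_add]
    ring
  have htsum : ∑' n, spF a p t m n =
      Real.exp (p * m) * ∑' n : ℕ, (n : ℝ) ^ a * Real.exp (-(2 * p * t * n)) := by
    rw [← tsum_mul_left]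
    exact tsum_congr hrw
  have hpow : (2 * p * t) ^ (-1 - a) = (2 * p) ^ (-1 - a) * t ^ (-1 - a) :=
    Real.mul_rpow (by positivity) ht.le
  constructor
  · rw [htsum]
    have := hc1le (2 * p * t) hs hsM
    calc c1 * (2 * p) ^ (-1 - a) * (t ^ (-1 - a) * Real.exp (p * m)) =
          Real.exp (p * m) * (c1 * (2 * p * t) ^ (-1 - a)) := by rw [hpow]; ring
      _ ≤ Real.exp (p * m) * ∑' n : ℕ, (n : ℝ) ^ a * Real.exp (-(2 * p * t * n)) :=
          mul_le_mul_of_nonneg_left this (Real.exp_pos _).le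
  · rw [htsum]
    have := hC1le (2 * p * t) hs hsM
    calc Real.exp (p * m) * ∑' n : ℕ, (n : ℝ) ^ a * Real.exp (-(2 * p * t * n)) ≤
          Real.exp (p * m) * (C1 * (2 * p * t) ^ (-1 - a)) :=
          mul_le_mul_of_nonneg_left this (Real.exp_pos _).le
      _ = C1 * (2 * p) ^ (-1 - a) * (t ^ (-1 - a) * Real.exp (p * m)) := by rw [hpow]; ring



/-- Core upper bound in the regime `m ≥ 0`. -/
lemma sp_core_pos_upper {a p : ℝ} (ha : 0 < a) (hp : 1 ≤ p) :
    ∃ C : ℝ, 0 < C ∧ ∀ t m : ℝ, 0 < t → t ≤ 1 → 0 ≤ m →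
      ∑' n, spF a p t m n ≤ C * (t ^ (-1 - a) * ((m + t) ^ a + 1)) := by
  have hp0 : 0 < p := lt_of_lt_of_le one_pos hp
  obtain ⟨C1, hC1, hC1le⟩ := sp_tsum_poly_exp_le ha (show (0:ℝ) < 2 * p by positivity)
  refine ⟨2 ^ a * Real.exp (2 * p) * 2 * (2 ^ a * (1 + 2 * p) + C1), by positivity,
    fun t m ht ht1 hm => ?_⟩
  set s : ℝ := 2 * p * t with hs_def
  have hs : 0 < s := by positivity
  set q : ℝ := m / (2 * t) with hq_def
  have hq0 : 0 ≤ q := by positivity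
  set n₀ : ℕ := ⌈q⌉₊ with hn₀_def
  have hqn₀ : q ≤ n₀ := Nat.le_ceil q
  have hn₀q : (n₀ : ℝ) < q + 1 := Nat.ceil_lt_add_one hq0
  set ψ : ℕ → ℝ := fun k =>
    (n₀ : ℝ) ^ a * Real.exp (-(s * k)) + (k : ℝ) ^ a * Real.exp (-(s * k)) with hψ_def
  have hψ0 : ∀ k, 0 ≤ ψ k := fun k => by rw [hψ_def]; positivity
  have hψs : Summable ψ := by
    rw [hψ_def]
    exact ((sp_summable_exp hs).mul_left _).add (sp_summable_poly_exp ha hs)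
  obtain ⟨hds, hdle⟩ := sp_tsum_dist_le hψ0 hψs n₀
  -- pointwise bound
  have hpt : ∀ n : ℕ, spF a p t m n ≤
      2 ^ a * Real.exp (2 * p) * ψ (Nat.dist n n₀) := by
    intro n
    have heq : 2 * (n : ℝ) * t - m = 2 * t * ((n : ℝ) - q) := by
      rw [hq_def]; field_simp
    have habs : p * |2 * (n : ℝ) * t - m| = s * |(n : ℝ) - q| := by
      rw [heq, abs_mul, abs_of_pos (show (0:ℝ) < 2 * t by positivity), hs_def]; ring
    have hd1 : |(n : ℝ) - n₀| ≤ |(n : ℝ) - q| + 1 := by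
      have h1 : |(n : ℝ) - n₀| ≤ |(n : ℝ) - q| + |q - n₀| := by
        have := abs_sub_abs_le_abs_sub ((n:ℝ) - q) ((n:ℝ) - n₀)
        calc |(n : ℝ) - n₀| = |((n : ℝ) - q) + (q - n₀)| := by ring_nf
          _ ≤ |(n : ℝ) - q| + |q - n₀| := abs_add_le _ _
      have h2 : |q - (n₀:ℝ)| ≤ 1 := by
        rw [abs_of_nonpos (by linarith)]
        linarith
      linarith
    have hd2 : s * (Nat.dist n n₀ : ℝ) - 2 * p ≤ s * |(n : ℝ) - q| := by
      rw [sp_cast_dist]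
      have h3 : s * |(n : ℝ) - n₀| ≤ s * (|(n : ℝ) - q| + 1) :=
        mul_le_mul_of_nonneg_left hd1 hs.le
      have h4 : s * 1 ≤ 2 * p := by rw [hs_def]; nlinarith
      nlinarith [h3, h4]
    have hexp : Real.exp (-(p * |2 * (n : ℝ) * t - m|)) ≤
        Real.exp (2 * p) * Real.exp (-(s * (Nat.dist n n₀ : ℝ))) := by
      rw [habs, ← Real.exp_add]
      apply Real.exp_le_exp.2
      linarith
    have hna : (n : ℝ) ^ a ≤ 2 ^ a * ((n₀ : ℝ) ^ a + (Nat.dist n n₀ : ℝ) ^ a) := by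
      have h5 : (n : ℝ) ≤ (n₀ : ℝ) + (Nat.dist n n₀ : ℝ) := by
        have := Nat.dist_tri_right' n n₀
        exact_mod_cast this
      calc (n : ℝ) ^ a ≤ ((n₀ : ℝ) + (Nat.dist n n₀ : ℝ)) ^ a :=
            Real.rpow_le_rpow (Nat.cast_nonneg n) h5 ha.le
        _ ≤ 2 ^ a * ((n₀ : ℝ) ^ a + (Nat.dist n n₀ : ℝ) ^ a) :=
            sp_add_rpow_le (Nat.cast_nonneg n₀) (Nat.cast_nonneg _) ha.le
    calc spF a p t m n = (n : ℝ) ^ a * Real.exp (-(p * |2 * (n:ℝ) * t - m|)) := rfl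
      _ ≤ (2 ^ a * ((n₀ : ℝ) ^ a + (Nat.dist n n₀ : ℝ) ^ a)) *
          (Real.exp (2 * p) * Real.exp (-(s * (Nat.dist n n₀ : ℝ)))) := by
          apply mul_le_mul hna hexp (Real.exp_pos _).le (by positivity)
      _ = 2 ^ a * Real.exp (2 * p) * ψ (Nat.dist n n₀) := by
          rw [hψ_def]; ring
  -- sum the pointwise bound
  have hsum1 : ∑' n, spF a p t m n ≤
      2 ^ a * Real.exp (2 * p) * ∑' n : ℕ, ψ (Nat.dist n n₀) := by
    rw [← tsum_mul_left]
    exact Summable.tsum_le_tsum hpt (sp_core_summable m ha hp0 ht) (hds.mul_left _)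
  have hsum2 : ∑' n : ℕ, ψ (Nat.dist n n₀) ≤ 2 * ∑' k, ψ k := hdle
  have hsum3 : ∑' k, ψ k ≤ (2 ^ a * (1 + 2 * p) + C1) * (t ^ (-1 - a) * ((m + t) ^ a + 1)) := by
    have e1 : ∑' k, ψ k = (n₀ : ℝ) ^ a * (∑' k : ℕ, Real.exp (-(s * k))) +
        ∑' k : ℕ, (k : ℝ) ^ a * Real.exp (-(s * k)) := by
      rw [hψ_def, Summable.tsum_add ((sp_summable_exp hs).mul_left _) (sp_summable_poly_exp ha hs),
        tsum_mul_left]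
    have e2 : ∑' k : ℕ, Real.exp (-(s * k)) ≤ (1 + 2 * p) / t := by
      calc ∑' k : ℕ, Real.exp (-(s * k)) ≤ (1 + s) / s := sp_tsum_exp_le hs
        _ ≤ (1 + 2 * p) / s := by
            gcongr
            rw [hs_def]; nlinarith
        _ ≤ (1 + 2 * p) / t := by
            apply div_le_div_of_nonneg_left (by linarith) ht
            rw [hs_def]; nlinarith
    have e3 : ∑' k : ℕ, (k : ℝ) ^ a * Real.exp (-(s * k)) ≤ C1 * t ^ (-1 - a) := by
      have h6 := hC1le s hs (by rw [hs_def]; nlinarith)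
      have h7 : s ^ (-1 - a) ≤ t ^ (-1 - a) := by
        apply Real.rpow_le_rpow_of_nonpos ht ?_ (by linarith)
        rw [hs_def]; nlinarith
      calc ∑' k : ℕ, (k : ℝ) ^ a * Real.exp (-(s * k)) ≤ C1 * s ^ (-1 - a) := h6
        _ ≤ C1 * t ^ (-1 - a) := mul_le_mul_of_nonneg_left h7 hC1.le
    have e4 : (n₀ : ℝ) ^ a ≤ 2 ^ a * ((m + t) ^ a * t ^ (-a) + 1) := by
      have h8 : (n₀ : ℝ) ^ a ≤ (q + 1) ^ a :=
        Real.rpow_le_rpow (Nat.cast_nonneg n₀) hn₀q.le ha.le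
      have h9 : (q + 1) ^ a ≤ 2 ^ a * (q ^ a + 1) := by
        have := sp_add_rpow_le hq0 (zero_le_one) ha.le
        rwa [Real.one_rpow] at this
      have h10 : q ^ a ≤ (m + t) ^ a * t ^ (-a) := by
        have h11 : q ≤ (m + t) / t := by
          rw [hq_def, div_le_div_iff₀ (by positivity) ht]
          nlinarith
        calc q ^ a ≤ ((m + t) / t) ^ a :=
              Real.rpow_le_rpow hq0 h11 ha.le
          _ = (m + t) ^ a * t ^ (-a) := by
              rw [Real.div_rpow (by linarith) ht.le, Real.rpow_neg ht.le, div_eq_mul_inv]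
        -- done
      calc (n₀ : ℝ) ^ a ≤ 2 ^ a * (q ^ a + 1) := le_trans h8 h9
        _ ≤ 2 ^ a * ((m + t) ^ a * t ^ (-a) + 1) := by
            apply mul_le_mul_of_nonneg_left _ (by positivity)
            linarith
    -- combine
    have e5 : (n₀ : ℝ) ^ a * ((1 + 2 * p) / t) ≤
        2 ^ a * (1 + 2 * p) * (t ^ (-1 - a) * ((m + t) ^ a + 1)) := by
      have hfrac : (1 + 2*p)/t = (1 + 2*p) * t ^ (-1:ℝ) := by
        rw [Real.rpow_neg_one, div_eq_mul_inv]
      have h12 : ((m + t) ^ a * t ^ (-a) + 1) * t ^ (-1:ℝ) ≤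
          t ^ (-1 - a) * ((m + t) ^ a + 1) := by
        have h13 : t ^ (-a) * t ^ (-1:ℝ) = t ^ (-1 - a) := by
          rw [← Real.rpow_add ht]; ring_nf
        have h14 : t ^ (-1:ℝ) ≤ t ^ (-1 - a) :=
          Real.rpow_le_rpow_of_exponent_ge ht ht1 (by linarith)
        calc ((m + t) ^ a * t ^ (-a) + 1) * t ^ (-1:ℝ)
            = (m + t) ^ a * (t ^ (-a) * t ^ (-1:ℝ)) + t ^ (-1:ℝ) := by ring
          _ ≤ (m + t) ^ a * t ^ (-1 - a) + t ^ (-1 - a) := by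
              rw [h13]
              exact add_le_add (le_refl _) h14
          _ = t ^ (-1 - a) * ((m + t) ^ a + 1) := by ring
      calc (n₀ : ℝ) ^ a * ((1 + 2 * p) / t)
          ≤ (2 ^ a * ((m + t) ^ a * t ^ (-a) + 1)) * ((1 + 2 * p) / t) := by
            apply mul_le_mul_of_nonneg_right e4 (by positivity)
        _ = 2 ^ a * (1 + 2 * p) * (((m + t) ^ a * t ^ (-a) + 1) * t ^ (-1:ℝ)) := by
            rw [hfrac]; ring
        _ ≤ 2 ^ a * (1 + 2 * p) * (t ^ (-1 - a) * ((m + t) ^ a + 1)) := by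
            apply mul_le_mul_of_nonneg_left h12 (by positivity)
    have e6 : C1 * t ^ (-1 - a) ≤ C1 * (t ^ (-1 - a) * ((m + t) ^ a + 1)) := by
      have h15 : (1:ℝ) ≤ (m + t) ^ a + 1 := by
        have := Real.rpow_nonneg (show (0:ℝ) ≤ m + t by linarith) a
        linarith
      calc C1 * t ^ (-1 - a) = C1 * (t ^ (-1 - a) * 1) := by ring
        _ ≤ C1 * (t ^ (-1 - a) * ((m + t) ^ a + 1)) := by
            apply mul_le_mul_of_nonneg_left _ hC1.le
            apply mul_le_mul_of_nonneg_left h15 (by positivity)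
    have e7 : (n₀ : ℝ) ^ a * (∑' k : ℕ, Real.exp (-(s * k))) ≤
        (n₀ : ℝ) ^ a * ((1 + 2 * p) / t) :=
      mul_le_mul_of_nonneg_left e2 (by positivity)
    rw [e1, show (2 ^ a * (1 + 2 * p) + C1) * (t ^ (-1 - a) * ((m + t) ^ a + 1)) =
      2 ^ a * (1 + 2 * p) * (t ^ (-1 - a) * ((m + t) ^ a + 1)) +
      C1 * (t ^ (-1 - a) * ((m + t) ^ a + 1)) from by ring]
    have e8 := le_trans e7 e5
    have e9 := le_trans e3 e6
    linarith
  calc ∑' n, spF a p t m n ≤ 2 ^ a * Real.exp (2 * p) * ∑' n : ℕ, ψ (Nat.dist n n₀) := hsum1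
    _ ≤ 2 ^ a * Real.exp (2 * p) * (2 * ∑' k, ψ k) := by
        apply mul_le_mul_of_nonneg_left hsum2 (by positivity)
    _ ≤ 2 ^ a * Real.exp (2 * p) * (2 *
        ((2 ^ a * (1 + 2 * p) + C1) * (t ^ (-1 - a) * ((m + t) ^ a + 1)))) := by
        apply mul_le_mul_of_nonneg_left _ (by positivity)
        apply mul_le_mul_of_nonneg_left hsum3 (by norm_num)
    _ = 2 ^ a * Real.exp (2 * p) * 2 * (2 ^ a * (1 + 2 * p) + C1) *
        (t ^ (-1 - a) * ((m + t) ^ a + 1)) := by ring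



/-- Core lower bound in the regime `m ≥ 0`. -/
lemma sp_core_pos_lower {a p : ℝ} (ha : 0 < a) (hp : 1 ≤ p) :
    ∃ c : ℝ, 0 < c ∧ ∀ t m : ℝ, 0 < t → t ≤ 1 → 0 ≤ m →
      c * (t ^ (-1 - a) * ((m + t) ^ a + 1)) ≤ ∑' n, spF a p t m n := by
  have hp0 : 0 < p := lt_of_lt_of_le one_pos hp
  refine ⟨Real.exp (-(10 * p)) / (2 * ((4:ℝ) ^ a + 2 ^ a + 1)), by positivity,
    fun t m ht ht1 hm => ?_⟩
  set q : ℝ := m / (2 * t) with hq_def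
  have hq0 : 0 ≤ q := by positivity
  set N : ℕ := ⌈1 / t⌉₊ with hN_def
  have hN1 : 1 / t ≤ (N : ℝ) := Nat.le_ceil _
  have hN2 : (N : ℝ) < 1 / t + 1 := Nat.ceil_lt_add_one (by positivity)
  set n₁ : ℕ := ⌈q⌉₊ + N with hn₁_def
  have hn₁q : q ≤ (n₁ : ℝ) := by
    have h1 : q ≤ (⌈q⌉₊ : ℝ) := Nat.le_ceil q
    have h2 : ((⌈q⌉₊ : ℕ) : ℝ) ≤ (n₁ : ℝ) := by
      rw [hn₁_def]; push_cast; linarith [Nat.cast_nonneg (α := ℝ) N]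
    linarith
  have hn₁up : (n₁ : ℝ) < q + 1 + (N : ℝ) := by
    rw [hn₁_def]; push_cast
    have := Nat.ceil_lt_add_one hq0
    linarith
  -- bound each term in the block from below
  have hterm : ∀ n ∈ Finset.Icc n₁ (n₁ + N),
      (q ^ a + t ^ (-a)) / 2 * Real.exp (-(10 * p)) ≤ spF a p t m n := by
    intro n hn
    rw [Finset.mem_Icc] at hn
    have hnq : q ≤ (n : ℝ) := le_trans hn₁q (by exact_mod_cast hn.1)
    have hnt : 1 / t ≤ (n : ℝ) := by
      have h3 : (N : ℝ) ≤ (n₁ : ℝ) := by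
        rw [hn₁_def]; push_cast; linarith [Nat.cast_nonneg (α := ℝ) ⌈q⌉₊]
      have h4 : (n₁ : ℝ) ≤ (n : ℝ) := by exact_mod_cast hn.1
      linarith
    have hnup : (n : ℝ) ≤ q + 1 + 2 * (N : ℝ) := by
      have h5 : (n : ℝ) ≤ (n₁ : ℝ) + (N : ℝ) := by exact_mod_cast hn.2
      linarith
    have habs : |2 * (n : ℝ) * t - m| ≤ 10 := by
      have heq : 2 * (n : ℝ) * t - m = 2 * t * ((n : ℝ) - q) := by
        rw [hq_def]; field_simp
      rw [heq, abs_of_nonneg (by nlinarith)]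
      have h6 : (n : ℝ) - q ≤ 1 + 2 * (N : ℝ) := by linarith
      have h7 : 2 * t * ((n : ℝ) - q) ≤ 2 * t * (1 + 2 * (N : ℝ)) := by
        apply mul_le_mul_of_nonneg_left h6 (by positivity)
      have h8 : 2 * t * (1 + 2 * (N : ℝ)) ≤ 2 * t * (1 + 2 * (1 / t + 1)) := by
        apply mul_le_mul_of_nonneg_left (by linarith) (by positivity)
      have h9 : 2 * t * (1 + 2 * (1 / t + 1)) = 6 * t + 4 := by field_simp; ring
      nlinarith
    have hexp : Real.exp (-(10 * p)) ≤ Real.exp (-(p * |2 * (n : ℝ) * t - m|)) := by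
      apply Real.exp_le_exp.2
      have := abs_nonneg (2 * (n : ℝ) * t - m)
      nlinarith
    have hna : (q ^ a + t ^ (-a)) / 2 ≤ (n : ℝ) ^ a := by
      have h10 : q ^ a ≤ (n : ℝ) ^ a := Real.rpow_le_rpow hq0 hnq ha.le
      have h11 : t ^ (-a) ≤ (n : ℝ) ^ a := by
        have h12 : t ^ (-a) = (1 / t) ^ a := by
          rw [one_div, Real.inv_rpow ht.le, Real.rpow_neg ht.le]
        rw [h12]
        exact Real.rpow_le_rpow (by positivity) hnt ha.le
      linarith
    calc (q ^ a + t ^ (-a)) / 2 * Real.exp (-(10 * p))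
        ≤ (n : ℝ) ^ a * Real.exp (-(p * |2 * (n : ℝ) * t - m|)) :=
          mul_le_mul hna hexp (Real.exp_pos _).le (Real.rpow_nonneg (Nat.cast_nonneg n) a)
      _ = spF a p t m n := rfl
  -- sum over the block
  have hcardn : (Finset.Icc n₁ (n₁ + N)).card = N + 1 := by
    rw [Nat.card_Icc]; omega
  have hcard : ((Finset.Icc n₁ (n₁ + N)).card : ℝ) = (N : ℝ) + 1 := by
    rw [hcardn]; push_cast; ring
  have hblock : ((N : ℝ) + 1) * ((q ^ a + t ^ (-a)) / 2 * Real.exp (-(10 * p))) ≤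
      ∑ n ∈ Finset.Icc n₁ (n₁ + N), spF a p t m n := by
    have hss := Finset.sum_le_sum hterm
    rw [Finset.sum_const, nsmul_eq_mul] at hss
    calc ((N : ℝ) + 1) * ((q ^ a + t ^ (-a)) / 2 * Real.exp (-(10 * p)))
        = ((Finset.Icc n₁ (n₁ + N)).card : ℝ) *
          ((q ^ a + t ^ (-a)) / 2 * Real.exp (-(10 * p))) := by rw [hcard]
      _ ≤ ∑ n ∈ Finset.Icc n₁ (n₁ + N), spF a p t m n := hss
  have htsum : ∑ n ∈ Finset.Icc n₁ (n₁ + N), spF a p t m n ≤ ∑' n, spF a p t m n :=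
    Summable.sum_le_tsum _ (fun n _ => sp_core_nonneg a p t m n) (sp_core_summable m ha hp0 ht)
  -- final algebra
  have hfin : Real.exp (-(10 * p)) / (2 * ((4:ℝ) ^ a + 2 ^ a + 1)) *
      (t ^ (-1 - a) * ((m + t) ^ a + 1)) ≤
      ((N : ℝ) + 1) * ((q ^ a + t ^ (-a)) / 2 * Real.exp (-(10 * p))) := by
    have key : t ^ (-1 - a) * ((m + t) ^ a + 1) ≤
        ((4:ℝ) ^ a + 2 ^ a + 1) * ((1 / t) * (q ^ a + t ^ (-a))) := by
      have k1 : (m + t) ^ a ≤ 2 ^ a * (m ^ a + t ^ a) := sp_add_rpow_le hm ht.le ha.le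
      have k2 : m ^ a = 2 ^ a * t ^ a * q ^ a := by
        have : m = 2 * t * q := by rw [hq_def]; field_simp
        rw [this, Real.mul_rpow (by positivity) hq0, Real.mul_rpow (by norm_num) ht.le]
      have k3 : t ^ a ≤ 1 := Real.rpow_le_one ht.le ht1 ha.le
      have k4 : (m + t) ^ a + 1 ≤ 4 ^ a * t ^ a * q ^ a + (2 ^ a + 1) := by
        rw [k2] at k1
        have k5 : (2:ℝ) ^ a * (2 ^ a * t ^ a * q ^ a + t ^ a) =
            4 ^ a * t ^ a * q ^ a + 2 ^ a * t ^ a := by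
          rw [show (4:ℝ) = 2 * 2 by norm_num, Real.mul_rpow (by norm_num) (by norm_num)]
          ring
        rw [k5] at k1
        have k6 : (2:ℝ) ^ a * t ^ a ≤ 2 ^ a := by
          calc (2:ℝ) ^ a * t ^ a ≤ 2 ^ a * 1 :=
                mul_le_mul_of_nonneg_left k3 (by positivity)
            _ = 2 ^ a := mul_one _
        linarith
      have k7 : t ^ (-1 - a) * (4 ^ a * t ^ a * q ^ a) = 4 ^ a * (t ^ (-1:ℝ) * q ^ a) := by
        rw [show t ^ (-1 - a) * (4 ^ a * t ^ a * q ^ a) =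
          4 ^ a * ((t ^ (-1 - a) * t ^ a) * q ^ a) from by ring,
          ← Real.rpow_add ht, show (-1 - a + a : ℝ) = -1 by ring]
      have k8 : t ^ (-1 - a) * (2 ^ a + 1) = (2 ^ a + 1) * (t ^ (-1:ℝ) * t ^ (-a)) := by
        rw [← Real.rpow_add ht, show (-1 + -a : ℝ) = -1 - a by ring]; ring
      have k9 : t ^ (-1:ℝ) = 1 / t := by rw [Real.rpow_neg_one, one_div]
      have k10 : t ^ (-1 - a) * ((m + t) ^ a + 1) ≤
          t ^ (-1 - a) * (4 ^ a * t ^ a * q ^ a + (2 ^ a + 1)) :=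
        mul_le_mul_of_nonneg_left k4 (Real.rpow_nonneg ht.le _)
      have k11 : t ^ (-1 - a) * (4 ^ a * t ^ a * q ^ a + (2 ^ a + 1)) =
          4 ^ a * (t ^ (-1:ℝ) * q ^ a) + (2 ^ a + 1) * (t ^ (-1:ℝ) * t ^ (-a)) := by
        rw [mul_add, k7, k8]
      have k12 : (4:ℝ) ^ a * (t ^ (-1:ℝ) * q ^ a) + (2 ^ a + 1) * (t ^ (-1:ℝ) * t ^ (-a)) ≤
          ((4:ℝ) ^ a + 2 ^ a + 1) * ((1 / t) * (q ^ a + t ^ (-a))) := by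
        rw [← k9]
        have q1 : (0:ℝ) ≤ t ^ (-1:ℝ) := Real.rpow_nonneg ht.le _
        have q2 : (0:ℝ) ≤ q ^ a := Real.rpow_nonneg hq0 _
        have q3 : (0:ℝ) ≤ t ^ (-a) := Real.rpow_nonneg ht.le _
        have q4 : (0:ℝ) ≤ (2:ℝ) ^ a := Real.rpow_nonneg (by norm_num) _
        have q5 : (0:ℝ) ≤ (4:ℝ) ^ a := Real.rpow_nonneg (by norm_num) _
        have expand : ((4:ℝ) ^ a + 2 ^ a + 1) * (t ^ (-1:ℝ) * (q ^ a + t ^ (-a))) =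
            (4:ℝ) ^ a * (t ^ (-1:ℝ) * q ^ a) + (2 ^ a + 1) * (t ^ (-1:ℝ) * t ^ (-a)) +
            ((4:ℝ) ^ a * (t ^ (-1:ℝ) * t ^ (-a)) + 2 ^ a * (t ^ (-1:ℝ) * q ^ a) +
              t ^ (-1:ℝ) * q ^ a) := by ring
        rw [expand]
        have r1 : (0:ℝ) ≤ (4:ℝ) ^ a * (t ^ (-1:ℝ) * t ^ (-a)) :=
          mul_nonneg q5 (mul_nonneg q1 q3)
        have r2 : (0:ℝ) ≤ (2:ℝ) ^ a * (t ^ (-1:ℝ) * q ^ a) :=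
          mul_nonneg q4 (mul_nonneg q1 q2)
        have r3 : (0:ℝ) ≤ t ^ (-1:ℝ) * q ^ a := mul_nonneg q1 q2
        linarith
      calc t ^ (-1 - a) * ((m + t) ^ a + 1)
          ≤ t ^ (-1 - a) * (4 ^ a * t ^ a * q ^ a + (2 ^ a + 1)) := k10
        _ = 4 ^ a * (t ^ (-1:ℝ) * q ^ a) + (2 ^ a + 1) * (t ^ (-1:ℝ) * t ^ (-a)) := k11
        _ ≤ ((4:ℝ) ^ a + 2 ^ a + 1) * ((1 / t) * (q ^ a + t ^ (-a))) := k12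
    have hNge : 1 / t ≤ (N : ℝ) + 1 := by linarith
    have hx : (0:ℝ) ≤ (q ^ a + t ^ (-a)) / 2 * Real.exp (-(10 * p)) := by positivity
    have step : (1 / t) * ((q ^ a + t ^ (-a)) / 2 * Real.exp (-(10 * p))) ≤
        ((N : ℝ) + 1) * ((q ^ a + t ^ (-a)) / 2 * Real.exp (-(10 * p))) :=
      mul_le_mul_of_nonneg_right hNge hx
    have step2 : Real.exp (-(10 * p)) / (2 * ((4:ℝ) ^ a + 2 ^ a + 1)) *
        (t ^ (-1 - a) * ((m + t) ^ a + 1)) ≤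
        Real.exp (-(10 * p)) / (2 * ((4:ℝ) ^ a + 2 ^ a + 1)) *
        (((4:ℝ) ^ a + 2 ^ a + 1) * ((1 / t) * (q ^ a + t ^ (-a)))) :=
      mul_le_mul_of_nonneg_left key (by positivity)
    have step3 : Real.exp (-(10 * p)) / (2 * ((4:ℝ) ^ a + 2 ^ a + 1)) *
        (((4:ℝ) ^ a + 2 ^ a + 1) * ((1 / t) * (q ^ a + t ^ (-a)))) =
        (1 / t) * ((q ^ a + t ^ (-a)) / 2 * Real.exp (-(10 * p))) := by
      have h4a : ((4:ℝ) ^ a + 2 ^ a + 1) ≠ 0 := by positivity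
      field_simp
    exact le_trans (le_trans step2 (le_of_eq step3)) step
  linarith [hfin, hblock, htsum]


/-- Two-sided bound for the Fermi function difference. -/
lemma sp_fd_diff {t : ℝ} (ht : 0 < t) (ht1 : t ≤ 1) (x : ℝ) :
    (1 - Real.exp (-2)) / 4 * (t * Real.exp (-|x|)) ≤
      (1 + Real.exp (x - 2 * t))⁻¹ - (1 + Real.exp x)⁻¹ ∧
    (1 + Real.exp (x - 2 * t))⁻¹ - (1 + Real.exp x)⁻¹ ≤
      2 * Real.exp 2 * (t * Real.exp (-|x|)) := by
  set A := Real.exp (x - 2 * t) with hA_def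
  set B := Real.exp x with hB_def
  have hA : 0 < A := Real.exp_pos _
  have hB : 0 < B := Real.exp_pos _
  have hdiff : (1 + A)⁻¹ - (1 + B)⁻¹ = (B - A) / ((1 + A) * (1 + B)) := by
    field_simp; ring
  have hAB : A = B * Real.exp (-(2 * t)) := by
    rw [hA_def, hB_def, ← Real.exp_add]; ring_nf
  have hcvx : Real.exp (-(2 * t)) ≤ 1 - t * (1 - Real.exp (-2)) := by
    have hc := convexOn_exp.2 (Set.mem_univ (0:ℝ)) (Set.mem_univ (-2:ℝ))
      (by linarith : (0:ℝ) ≤ 1 - t) ht.le (by ring)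
    simp only [smul_eq_mul, mul_zero, zero_add, Real.exp_zero, mul_one] at hc
    calc Real.exp (-(2 * t)) = Real.exp ((1 - t) * 0 + t * (-2)) := by ring_nf
      _ ≤ (1 - t) * Real.exp 0 + t * Real.exp (-2) := by
          have := convexOn_exp.2 (Set.mem_univ (0:ℝ)) (Set.mem_univ (-2:ℝ))
            (by linarith : (0:ℝ) ≤ 1 - t) ht.le (by ring)
          simpa [smul_eq_mul] using this
      _ = 1 - t * (1 - Real.exp (-2)) := by rw [Real.exp_zero]; ring
  have hup2t : 1 - Real.exp (-(2 * t)) ≤ 2 * t := by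
    have := Real.add_one_le_exp (-(2 * t))
    linarith
  have hlo2t : t * (1 - Real.exp (-2)) ≤ 1 - Real.exp (-(2 * t)) := by linarith
  have hnum : B - A = B * (1 - Real.exp (-(2 * t))) := by rw [hAB]; ring
  have hAleB : A ≤ B := by
    rw [hA_def, hB_def]
    apply Real.exp_le_exp.2; linarith
  have hD_up : (1 + A) * (1 + B) ≤ (1 + B) ^ 2 := by nlinarith
  have hD_lo : Real.exp (-2) * (1 + B) ^ 2 ≤ (1 + A) * (1 + B) := by
    have h1 : Real.exp (-2) * (1 + B) ≤ 1 + A := by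
      have h2 : B * Real.exp (-2) ≤ A := by
        rw [hAB]
        apply mul_le_mul_of_nonneg_left _ hB.le
        apply Real.exp_le_exp.2; linarith
      have h3 : Real.exp (-2) ≤ 1 := by
        rw [show (1:ℝ) = Real.exp 0 by rw [Real.exp_zero]]
        apply Real.exp_le_exp.2; norm_num
      nlinarith
    nlinarith
  have hw_up : B * Real.exp |x| ≤ (1 + B) ^ 2 := by
    rcases le_or_gt 0 x with hx | hx
    · rw [abs_of_nonneg hx]
      have : B * B = Real.exp x * Real.exp x := by rw [hB_def]
      nlinarith [Real.exp_pos x]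
    · rw [abs_of_neg hx]
      have : B * Real.exp (-x) = 1 := by rw [hB_def, ← Real.exp_add]; simp
      nlinarith
  have hw_lo : (1 + B) ^ 2 ≤ 4 * (B * Real.exp |x|) := by
    rcases le_or_gt 0 x with hx | hx
    · rw [abs_of_nonneg hx]
      have h4 : (1:ℝ) ≤ B := by
        rw [hB_def, show (1:ℝ) = Real.exp 0 by rw [Real.exp_zero]]
        exact Real.exp_le_exp.2 hx
      have : B * Real.exp x = B * B := by rw [hB_def]
      nlinarith
    · rw [abs_of_neg hx]
      have h5 : B ≤ 1 := by
        rw [hB_def, show (1:ℝ) = Real.exp 0 by rw [Real.exp_zero]]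
        exact Real.exp_le_exp.2 hx.le
      have h6 : B * Real.exp (-x) = 1 := by rw [hB_def, ← Real.exp_add]; simp
      nlinarith
  have hD_pos : 0 < (1 + A) * (1 + B) := by nlinarith
  have hcpos : (0:ℝ) < 1 - Real.exp (-2) := by
    have := Real.exp_lt_one_iff.mpr (show -(2:ℝ) < 0 by norm_num)
    linarith
  constructor
  · -- lower bound
    rw [hdiff, le_div_iff₀ hD_pos]
    have l1 : (1 - Real.exp (-2)) / 4 * (t * Real.exp (-|x|)) * ((1 + A) * (1 + B)) ≤
        (1 - Real.exp (-2)) / 4 * (t * Real.exp (-|x|)) * (4 * (B * Real.exp |x|)) := by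
      apply mul_le_mul_of_nonneg_left (le_trans hD_up hw_lo)
        (mul_nonneg (by linarith) (by positivity))
    have l2 : Real.exp (-|x|) * Real.exp |x| = 1 := by
      rw [← Real.exp_add]; simp
    have l3 : (1 - Real.exp (-2)) / 4 * (t * Real.exp (-|x|)) * (4 * (B * Real.exp |x|)) =
        t * (1 - Real.exp (-2)) * B := by
      rw [show (1 - Real.exp (-2)) / 4 * (t * Real.exp (-|x|)) * (4 * (B * Real.exp |x|)) =
        t * (1 - Real.exp (-2)) * B * (Real.exp (-|x|) * Real.exp |x|) from by ring, l2]
      ring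
    have l4 : t * (1 - Real.exp (-2)) * B ≤ B - A := by
      rw [hnum]
      have := mul_le_mul_of_nonneg_left hlo2t hB.le
      nlinarith
    linarith [l1, l3 ▸ l1]
  · -- upper bound
    rw [hdiff, div_le_iff₀ hD_pos]
    have u1 : B - A ≤ 2 * t * B := by
      rw [hnum]
      nlinarith
    have u2 : 2 * t * B ≤ 2 * Real.exp 2 * (t * Real.exp (-|x|)) * ((1 + A) * (1 + B)) := by
      have u3 : Real.exp (-2) * (B * Real.exp |x|) ≤ Real.exp (-2) * (1 + B)^2 :=
        mul_le_mul_of_nonneg_left hw_up (Real.exp_pos _).le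
      have u4 : Real.exp (-2) * (B * Real.exp |x|) ≤ (1 + A) * (1 + B) :=
        le_trans u3 hD_lo
      have u5 : 2 * Real.exp 2 * (t * Real.exp (-|x|)) * (Real.exp (-2) * (B * Real.exp |x|)) =
          2 * t * B := by
        rw [show 2 * Real.exp 2 * (t * Real.exp (-|x|)) * (Real.exp (-2) * (B * Real.exp |x|)) =
          2 * t * B * ((Real.exp 2 * Real.exp (-2)) * (Real.exp (-|x|) * Real.exp |x|))
          from by ring, ← Real.exp_add, ← Real.exp_add]
        simp
      calc 2 * t * B
          = 2 * Real.exp 2 * (t * Real.exp (-|x|)) * (Real.exp (-2) * (B * Real.exp |x|)) :=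
            u5.symm
        _ ≤ 2 * Real.exp 2 * (t * Real.exp (-|x|)) * ((1 + A) * (1 + B)) := by
            apply mul_le_mul_of_nonneg_left u4 (by positivity)
    linarith

/-- Lower bound for the binomial coefficient. -/
lemma sp_choose_lower {d : ℕ} (hd : 1 ≤ d) (n : ℕ) :
    (n : ℝ) ^ (d - 1) ≤ (d - 1).factorial * ((n + d - 1).choose (d - 1)) := by
  set k := d - 1 with hk
  have hnd : n + d - 1 = n + k := by omega
  rw [hnd]
  have h1 : n ^ k ≤ k.factorial * ((n + k).choose k) := by
    calc n ^ k ≤ (n + 1) ^ k := Nat.pow_le_pow_left (by omega) k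
      _ ≤ (n + 1).ascFactorial k := Nat.pow_succ_le_ascFactorial (n + 1) k
      _ = k.factorial * ((n + k).choose k) := Nat.ascFactorial_eq_factorial_mul_choose n k
  exact_mod_cast h1

/-- Upper bound for the binomial coefficient. -/
lemma sp_choose_upper {d : ℕ} (hd : 1 ≤ d) {n : ℕ} (hn : 1 ≤ n) :
    ((n + d - 1).choose (d - 1) : ℝ) ≤ ((d : ℝ) * n) ^ (d - 1) := by
  set k := d - 1 with hk
  have hnd : n + d - 1 = n + k := by omega
  rw [hnd]
  have h1 : (n + k).choose k ≤ (d * n) ^ k := by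
    have h2 : k.factorial * ((n + k).choose k) = (n + 1).ascFactorial k :=
      (Nat.ascFactorial_eq_factorial_mul_choose n k).symm
    have h3 : (n + 1).ascFactorial k ≤ (n + k) ^ k := Nat.ascFactorial_le_pow_add n k
    have h4 : (n + k) ^ k ≤ (d * n) ^ k := by
      apply Nat.pow_le_pow_left
      have : k + 1 = d := by omega
      nlinarith [hn]
    have h5 : (n + k).choose k ≤ k.factorial * ((n + k).choose k) :=
      Nat.le_mul_of_pos_left _ (Nat.factorial_pos k)
    omega
  calc ((n + k).choose k : ℝ) ≤ ((d * n : ℕ) : ℝ) ^ k := by exact_mod_cast h1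
    _ = ((d : ℝ) * n) ^ k := by push_cast; ring




/-- `(u^p+1)/2 ≤ (u+1)^p ≤ 2^p (u^p+1)` for `u ≥ 0`, `p ≥ 1`. -/
lemma sp_add_one_rpow {u p : ℝ} (hu : 0 ≤ u) (hp : 1 ≤ p) :
    (u ^ p + 1) / 2 ≤ (u + 1) ^ p ∧ (u + 1) ^ p ≤ 2 ^ p * (u ^ p + 1) := by
  have hp0 : (0:ℝ) ≤ p := by linarith
  constructor
  · rcases le_total u 1 with h | h
    · have h1 : (1:ℝ) ≤ (u + 1) ^ p := by
        have := Real.one_le_rpow (show (1:ℝ) ≤ u + 1 by linarith) hp0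
        linarith
      have h2 : u ^ p ≤ 1 := Real.rpow_le_one hu h hp0
      linarith
    · have h1 : u ^ p ≤ (u + 1) ^ p := Real.rpow_le_rpow hu (by linarith) hp0
      have h2 : (1:ℝ) ≤ u ^ p := Real.one_le_rpow h hp0
      linarith
  · have := sp_add_rpow_le hu zero_le_one hp0
    rwa [Real.one_rpow] at this

/-- Two-sided per-term bound for the summand of `S^p`. -/
lemma sp_term_bound {d : ℕ} (hd : 1 ≤ d) {p : ℝ} (hp : 1 ≤ p) (μ : ℝ) {hb β : ℝ}
    (hb0 : 0 < hb) (hβ : 0 < β) (hβhb : β * hb ≤ 1) (n : ℕ) :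
    ((2 * Real.pi) ^ (d - 1) / (d - 1).factorial * ((1 - Real.exp (-2)) / 4) ^ p * 2 ^ (p / 2)) *
        (hb ^ (d - 1) * hb ^ (p / 2) * (β * hb) ^ p) *
        spF ((d : ℝ) - 1 + p / 2) p (β * hb) (β * (μ - d * hb)) n ≤
      (Nat.choose (n + d - 1) (d - 1) : ℝ) * (2 * Real.pi * hb) ^ (d - 1) *
        |FD β μ ((2 * (n : ℝ) + d) * hb) -
          FD β μ (if n = 0 then ((d : ℝ) - 2) * hb else (2 * ((n : ℝ) - 1) + d) * hb)| ^ p *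
        ((2 * (n : ℝ) + d) * hb - d * hb) ^ (p / 2) ∧
      (Nat.choose (n + d - 1) (d - 1) : ℝ) * (2 * Real.pi * hb) ^ (d - 1) *
        |FD β μ ((2 * (n : ℝ) + d) * hb) -
          FD β μ (if n = 0 then ((d : ℝ) - 2) * hb else (2 * ((n : ℝ) - 1) + d) * hb)| ^ p *
        ((2 * (n : ℝ) + d) * hb - d * hb) ^ (p / 2) ≤
      ((2 * Real.pi) ^ (d - 1) * (d : ℝ) ^ (d - 1) * (2 * Real.exp 2) ^ p * 2 ^ (p / 2)) *
        (hb ^ (d - 1) * hb ^ (p / 2) * (β * hb) ^ p) *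
        spF ((d : ℝ) - 1 + p / 2) p (β * hb) (β * (μ - d * hb)) n := by
  have hp0 : 0 < p := lt_of_lt_of_le one_pos hp
  have ht : 0 < β * hb := by positivity
  have hd1 : (1:ℝ) ≤ (d:ℝ) := by exact_mod_cast hd
  rcases Nat.eq_zero_or_pos n with hn | hn
  · -- n = 0 : both sides vanish
    subst hn
    have hzero : ((2 * ((0:ℕ) : ℝ) + d) * hb - d * hb) = 0 := by push_cast; ring
    have hlast : ((2 * ((0:ℕ) : ℝ) + d) * hb - d * hb) ^ (p / 2) = 0 := by
      rw [hzero, Real.zero_rpow (ne_of_gt (show (0:ℝ) < p / 2 by linarith))]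
    have hspf : spF ((d : ℝ) - 1 + p / 2) p (β * hb) (β * (μ - d * hb)) 0 = 0 := by
      unfold spF
      rw [Nat.cast_zero, Real.zero_rpow (ne_of_gt (show (0:ℝ) < (d:ℝ) - 1 + p / 2 by linarith)), zero_mul]
    rw [hlast, hspf]
    constructor <;> simp
  · -- n ≥ 1
    have hn0 : n ≠ 0 := Nat.pos_iff_ne_zero.mp hn
    have hnR : (1:ℝ) ≤ (n:ℝ) := by exact_mod_cast hn
    have hnpos : (0:ℝ) < (n:ℝ) := by linarith
    set t : ℝ := β * hb with ht_def
    set m : ℝ := β * (μ - d * hb) with hm_def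
    have ht1 : t ≤ 1 := hβhb
    set x : ℝ := 2 * (n : ℝ) * t - m with hx_def
    -- the Fermi values
    have e1 : FD β μ ((2 * (n : ℝ) + d) * hb) = (1 + Real.exp x)⁻¹ := by
      unfold FD
      congr 2
      rw [hx_def, ht_def, hm_def]; ring
    have e2 : FD β μ ((2 * ((n : ℝ) - 1) + d) * hb) = (1 + Real.exp (x - 2 * t))⁻¹ := by
      unfold FD
      congr 2
      rw [hx_def, ht_def, hm_def]; ring
    have hdd := sp_fd_diff ht ht1 x
    have hdelta_pos : 0 ≤ (1 + Real.exp (x - 2 * t))⁻¹ - (1 + Real.exp x)⁻¹ := by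
      have h0 : (0:ℝ) < (1 - Real.exp (-2)) / 4 * (t * Real.exp (-|x|)) := by
        have := Real.exp_lt_one_iff.mpr (show -(2:ℝ) < 0 by norm_num)
        have h2 := Real.exp_pos (-|x|)
        exact mul_pos (by linarith) (mul_pos ht h2)
      linarith [hdd.1]
    have habs : |FD β μ ((2 * (n : ℝ) + d) * hb) -
        FD β μ (if n = 0 then ((d : ℝ) - 2) * hb else (2 * ((n : ℝ) - 1) + d) * hb)| =
        (1 + Real.exp (x - 2 * t))⁻¹ - (1 + Real.exp x)⁻¹ := by
      rw [if_neg hn0, e1, e2, abs_sub_comm, abs_of_nonneg hdelta_pos]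
    -- rpow of the difference
    have hlow : ((1 - Real.exp (-2)) / 4) ^ p * ((t ^ p) * Real.exp (-(p * |x|))) ≤
        ((1 + Real.exp (x - 2 * t))⁻¹ - (1 + Real.exp x)⁻¹) ^ p := by
      have hc3 : (0:ℝ) ≤ (1 - Real.exp (-2)) / 4 := by
        have := Real.exp_lt_one_iff.mpr (show -(2:ℝ) < 0 by norm_num)
        linarith
      have h1 : ((1 - Real.exp (-2)) / 4 * (t * Real.exp (-|x|))) ^ p ≤
          ((1 + Real.exp (x - 2 * t))⁻¹ - (1 + Real.exp x)⁻¹) ^ p :=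
        Real.rpow_le_rpow (by positivity) hdd.1 hp0.le
      have h2 : ((1 - Real.exp (-2)) / 4 * (t * Real.exp (-|x|))) ^ p =
          ((1 - Real.exp (-2)) / 4) ^ p * ((t ^ p) * Real.exp (-(p * |x|))) := by
        rw [Real.mul_rpow hc3 (by positivity), Real.mul_rpow ht.le (Real.exp_pos _).le,
          ← Real.exp_mul]
        ring_nf
      rw [← h2]; exact h1
    have hhigh : ((1 + Real.exp (x - 2 * t))⁻¹ - (1 + Real.exp x)⁻¹) ^ p ≤
        (2 * Real.exp 2) ^ p * ((t ^ p) * Real.exp (-(p * |x|))) := by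
      have h1 : ((1 + Real.exp (x - 2 * t))⁻¹ - (1 + Real.exp x)⁻¹) ^ p ≤
          (2 * Real.exp 2 * (t * Real.exp (-|x|))) ^ p :=
        Real.rpow_le_rpow hdelta_pos hdd.2 hp0.le
      have h2 : (2 * Real.exp 2 * (t * Real.exp (-|x|))) ^ p =
          (2 * Real.exp 2) ^ p * ((t ^ p) * Real.exp (-(p * |x|))) := by
        rw [Real.mul_rpow (by positivity) (by positivity),
          Real.mul_rpow ht.le (Real.exp_pos _).le, ← Real.exp_mul]
        ring_nf
      rw [← h2]; exact h1
    -- the last factor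
    have hlast : ((2 * (n : ℝ) + d) * hb - d * hb) ^ (p / 2) =
        2 ^ (p / 2) * (n : ℝ) ^ (p / 2) * hb ^ (p / 2) := by
      rw [show (2 * (n : ℝ) + d) * hb - d * hb = 2 * (n:ℝ) * hb by ring,
        Real.mul_rpow (by positivity) hb0.le, Real.mul_rpow (by norm_num) hnpos.le]
    -- the (2πħ)^{d-1} factor
    have hpow : (2 * Real.pi * hb) ^ (d - 1) = (2 * Real.pi) ^ (d - 1) * hb ^ (d - 1) :=
      mul_pow _ _ _
    -- rpow splitting of n^a
    have hsplit : (n : ℝ) ^ ((d:ℝ) - 1 + p / 2) = (n : ℝ) ^ (d - 1) * (n : ℝ) ^ (p / 2) := by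
      rw [Real.rpow_add hnpos, ← Real.rpow_natCast (n:ℝ) (d - 1)]
      congr 2
      push_cast [Nat.cast_sub hd]; ring
    -- choose bounds
    have hch_lo : (n : ℝ) ^ (d - 1) / (d - 1).factorial ≤
        (Nat.choose (n + d - 1) (d - 1) : ℝ) := by
      rw [div_le_iff₀ (by positivity : (0:ℝ) < ((d-1).factorial : ℝ))]
      have := sp_choose_lower hd n
      push_cast at this ⊢
      linarith
    have hch_hi : (Nat.choose (n + d - 1) (d - 1) : ℝ) ≤ (d : ℝ) ^ (d - 1) * (n:ℝ) ^ (d - 1) := by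
      have := sp_choose_upper hd hn
      rwa [mul_pow] at this
    -- unfold spF
    have hspf : spF ((d : ℝ) - 1 + p / 2) p t m n =
        ((n : ℝ) ^ (d - 1) * (n : ℝ) ^ (p / 2)) * Real.exp (-(p * |x|)) := by
      unfold spF
      rw [← hsplit, hx_def]
    constructor
    · -- lower bound
      rw [habs, hlast, hpow, hspf]
      have key : ((2 * Real.pi) ^ (d - 1) / (d - 1).factorial *
            ((1 - Real.exp (-2)) / 4) ^ p * 2 ^ (p / 2)) *
          (hb ^ (d - 1) * hb ^ (p / 2) * t ^ p) *
          (((n : ℝ) ^ (d - 1) * (n : ℝ) ^ (p / 2)) * Real.exp (-(p * |x|))) =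
          ((n : ℝ) ^ (d - 1) / (d - 1).factorial) *
            ((2 * Real.pi) ^ (d - 1) * hb ^ (d - 1)) *
            (((1 - Real.exp (-2)) / 4) ^ p * ((t ^ p) * Real.exp (-(p * |x|)))) *
            (2 ^ (p / 2) * (n : ℝ) ^ (p / 2) * hb ^ (p / 2)) := by
        ring
      rw [key]
      have hBnn : (0:ℝ) ≤ (2 * Real.pi) ^ (d - 1) * hb ^ (d - 1) := by positivity
      have hLnn : (0:ℝ) ≤ 2 ^ (p / 2) * (n : ℝ) ^ (p / 2) * hb ^ (p / 2) := by positivity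
      have hlow_nn : (0:ℝ) ≤ ((1 - Real.exp (-2)) / 4) ^ p * ((t ^ p) * Real.exp (-(p * |x|))) := by
        have hc3 : (0:ℝ) ≤ (1 - Real.exp (-2)) / 4 := by
          have := Real.exp_lt_one_iff.mpr (show -(2:ℝ) < 0 by norm_num)
          linarith
        have := Real.rpow_nonneg hc3 p
        positivity
      have hq : (0:ℝ) ≤ (n : ℝ) ^ (d - 1) / (d - 1).factorial := by positivity
      apply mul_le_mul_of_nonneg_right _ hLnn
      exact mul_le_mul (mul_le_mul_of_nonneg_right hch_lo hBnn) hlow hlow_nn (by positivity)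
    · -- upper bound
      rw [habs, hlast, hpow, hspf]
      have key : ((2 * Real.pi) ^ (d - 1) * (d : ℝ) ^ (d - 1) * (2 * Real.exp 2) ^ p *
            2 ^ (p / 2)) * (hb ^ (d - 1) * hb ^ (p / 2) * t ^ p) *
          (((n : ℝ) ^ (d - 1) * (n : ℝ) ^ (p / 2)) * Real.exp (-(p * |x|))) =
          ((d : ℝ) ^ (d - 1) * (n:ℝ) ^ (d - 1)) *
            ((2 * Real.pi) ^ (d - 1) * hb ^ (d - 1)) *
            ((2 * Real.exp 2) ^ p * ((t ^ p) * Real.exp (-(p * |x|)))) *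
            (2 ^ (p / 2) * (n : ℝ) ^ (p / 2) * hb ^ (p / 2)) := by
        ring
      rw [key]
      have hBnn : (0:ℝ) ≤ (2 * Real.pi) ^ (d - 1) * hb ^ (d - 1) := by positivity
      have hLnn : (0:ℝ) ≤ 2 ^ (p / 2) * (n : ℝ) ^ (p / 2) * hb ^ (p / 2) := by positivity
      have hdel_nn : (0:ℝ) ≤ ((1 + Real.exp (x - 2 * t))⁻¹ - (1 + Real.exp x)⁻¹) ^ p :=
        Real.rpow_nonneg hdelta_pos p
      apply mul_le_mul_of_nonneg_right _ hLnn
      exact mul_le_mul (mul_le_mul_of_nonneg_right hch_hi hBnn) hhigh hdel_nn (by positivity)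




theorem stmt_11 (d : ℕ) (hd : 1 ≤ d) (p : ℝ) (hp : 1 ≤ p) :
    ∃ c C : ℝ, 0 < c ∧ c ≤ C ∧
      ∀ (μ hb β : ℝ), 0 < hb → hb ≤ 1 → 0 < β → β * hb ≤ 1 →
        ∀ S : ℝ, 0 ≤ S →
          S ^ p = (2 * Real.pi / hb ^ (p - 1)) *
            (∑' n : ℕ, (Nat.choose (n + d - 1) (d - 1) : ℝ) *
              (2 * Real.pi * hb) ^ (d - 1) *
              |FD β μ ((2 * (n : ℝ) + d) * hb) -
                FD β μ (if n = 0 then ((d : ℝ) - 2) * hb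
                  else (2 * ((n : ℝ) - 1) + d) * hb)| ^ p *
              ((2 * (n : ℝ) + d) * hb - d * hb) ^ (p / 2)) →
          (μ < d * hb →
            c * (β ^ ((1 : ℝ) / 2 - (d : ℝ) / p) * Real.exp (β * (μ - d * hb))) ≤ S ∧
              S ≤ C * (β ^ ((1 : ℝ) / 2 - (d : ℝ) / p) * Real.exp (β * (μ - d * hb)))) ∧
          (d * hb ≤ μ →
            c * (β ^ ((1 : ℝ) / 2 - (d : ℝ) / p) *
                ((β * (μ - d * hb + hb)) ^ ((1 : ℝ) / 2 + ((d : ℝ) - 1) / p) + 1)) ≤ S ∧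
              S ≤ C * (β ^ ((1 : ℝ) / 2 - (d : ℝ) / p) *
                ((β * (μ - d * hb + hb)) ^ ((1 : ℝ) / 2 + ((d : ℝ) - 1) / p) + 1))) := by
  have hp0 : (0:ℝ) < p := lt_of_lt_of_le one_pos hp
  have hd1 : (1:ℝ) ≤ (d:ℝ) := by exact_mod_cast hd
  have ha : (0:ℝ) < (d:ℝ) - 1 + p / 2 := by linarith
  have hexp2lt : Real.exp (-2) < 1 := Real.exp_lt_one_iff.mpr (by norm_num)
  obtain ⟨cn, Cn, hcn, hCn, hneg⟩ := sp_core_neg ha hp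
  obtain ⟨Cp2, hCp2, hposU⟩ := sp_core_pos_upper ha hp
  obtain ⟨cp2, hcp2, hposL⟩ := sp_core_pos_lower ha hp
  have hκ₁ : (0:ℝ) < (2 * Real.pi) ^ (d - 1) / (d - 1).factorial *
      ((1 - Real.exp (-2)) / 4) ^ p * 2 ^ (p / 2) := by
    have h1 : (0:ℝ) < (1 - Real.exp (-2)) / 4 := by linarith
    have h2 : (0:ℝ) < 2 * Real.pi := by linarith [Real.pi_pos]
    exact mul_pos (mul_pos (div_pos (pow_pos h2 _) (by exact_mod_cast (d-1).factorial_pos))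
      (Real.rpow_pos_of_pos h1 p)) (Real.rpow_pos_of_pos two_pos _)
  have hκ₂ : (0:ℝ) < (2 * Real.pi) ^ (d - 1) * (d : ℝ) ^ (d - 1) *
      (2 * Real.exp 2) ^ p * 2 ^ (p / 2) := by
    have h2 : (0:ℝ) < 2 * Real.pi := by linarith [Real.pi_pos]
    exact mul_pos (mul_pos (mul_pos (pow_pos h2 _) (pow_pos (by linarith) _))
      (Real.rpow_pos_of_pos (by positivity) p)) (Real.rpow_pos_of_pos two_pos _)
  set κ₁ : ℝ := (2 * Real.pi) ^ (d - 1) / (d - 1).factorial *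
      ((1 - Real.exp (-2)) / 4) ^ p * 2 ^ (p / 2) with hκ₁_def
  set κ₂ : ℝ := (2 * Real.pi) ^ (d - 1) * (d : ℝ) ^ (d - 1) *
      (2 * Real.exp 2) ^ p * 2 ^ (p / 2) with hκ₂_def
  have hK1 : (0:ℝ) < 2 * Real.pi * κ₁ * cn :=
    mul_pos (mul_pos (by linarith [Real.pi_pos]) hκ₁) hcn
  have hK2 : (0:ℝ) < 2 * Real.pi * κ₂ * Cn :=
    mul_pos (mul_pos (by linarith [Real.pi_pos]) hκ₂) hCn
  have hK3 : (0:ℝ) < 2 * Real.pi * κ₁ * cp2 / 2 ^ p :=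
    div_pos (mul_pos (mul_pos (by linarith [Real.pi_pos]) hκ₁) hcp2)
      (Real.rpow_pos_of_pos two_pos p)
  have hK4 : (0:ℝ) < 2 * Real.pi * κ₂ * Cp2 * 2 :=
    mul_pos (mul_pos (mul_pos (by linarith [Real.pi_pos]) hκ₂) hCp2) two_pos
  set c1 : ℝ := (2 * Real.pi * κ₁ * cn) ^ (1/p) with hc1_def
  set C1 : ℝ := (2 * Real.pi * κ₂ * Cn) ^ (1/p) with hC1_def
  set c2 : ℝ := (2 * Real.pi * κ₁ * cp2 / 2 ^ p) ^ (1/p) with hc2_def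
  set C2 : ℝ := (2 * Real.pi * κ₂ * Cp2 * 2) ^ (1/p) with hC2_def
  have hc1 : 0 < c1 := Real.rpow_pos_of_pos hK1 _
  have hC1 : 0 < C1 := Real.rpow_pos_of_pos hK2 _
  have hc2 : 0 < c2 := Real.rpow_pos_of_pos hK3 _
  have hC2 : 0 < C2 := Real.rpow_pos_of_pos hK4 _
  -- rpow of the constants
  have hc1p : c1 ^ p = 2 * Real.pi * κ₁ * cn := by
    rw [hc1_def, ← Real.rpow_mul hK1.le, one_div_mul_cancel hp0.ne', Real.rpow_one]
  have hC1p : C1 ^ p = 2 * Real.pi * κ₂ * Cn := by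
    rw [hC1_def, ← Real.rpow_mul hK2.le, one_div_mul_cancel hp0.ne', Real.rpow_one]
  have hc2p : c2 ^ p = 2 * Real.pi * κ₁ * cp2 / 2 ^ p := by
    rw [hc2_def, ← Real.rpow_mul hK3.le, one_div_mul_cancel hp0.ne', Real.rpow_one]
  have hC2p : C2 ^ p = 2 * Real.pi * κ₂ * Cp2 * 2 := by
    rw [hC2_def, ← Real.rpow_mul hK4.le, one_div_mul_cancel hp0.ne', Real.rpow_one]
  refine ⟨min c1 c2, max (max C1 C2) (min c1 c2), lt_min hc1 hc2, le_max_right _ _, ?_⟩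
  intro μ hb β hb0 hb1 hβ hβhb S hS0 hSp
  have ht : (0:ℝ) < β * hb := by positivity
  have ht1 : β * hb ≤ 1 := hβhb
  -- summability and tsum bounds
  have hEs : Summable (spF ((d : ℝ) - 1 + p / 2) p (β * hb) (β * (μ - d * hb))) :=
    sp_core_summable _ ha hp0 ht
  have hterm := fun n => sp_term_bound hd hp μ hb0 hβ hβhb n
  have hBIG0 : ∀ n : ℕ, (0:ℝ) ≤ (Nat.choose (n + d - 1) (d - 1) : ℝ) *
      (2 * Real.pi * hb) ^ (d - 1) *
      |FD β μ ((2 * (n : ℝ) + d) * hb) -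
        FD β μ (if n = 0 then ((d : ℝ) - 2) * hb else (2 * ((n : ℝ) - 1) + d) * hb)| ^ p *
      ((2 * (n : ℝ) + d) * hb - d * hb) ^ (p / 2) := by
    intro n
    refine le_trans ?_ (hterm n).1
    exact mul_nonneg (mul_nonneg hκ₁.le (by positivity)) (sp_core_nonneg _ _ _ _ n)
  have hBIGs : Summable (fun n : ℕ => (Nat.choose (n + d - 1) (d - 1) : ℝ) *
      (2 * Real.pi * hb) ^ (d - 1) *
      |FD β μ ((2 * (n : ℝ) + d) * hb) -
        FD β μ (if n = 0 then ((d : ℝ) - 2) * hb else (2 * ((n : ℝ) - 1) + d) * hb)| ^ p *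
      ((2 * (n : ℝ) + d) * hb - d * hb) ^ (p / 2)) := by
    refine Summable.of_nonneg_of_le hBIG0 (fun n => (hterm n).2) ?_
    exact hEs.mul_left _
  have hsum_lo : (κ₁ * (hb ^ (d - 1) * hb ^ (p / 2) * (β * hb) ^ p)) *
      ∑' n, spF ((d : ℝ) - 1 + p / 2) p (β * hb) (β * (μ - d * hb)) n ≤
      ∑' n : ℕ, (Nat.choose (n + d - 1) (d - 1) : ℝ) * (2 * Real.pi * hb) ^ (d - 1) *
        |FD β μ ((2 * (n : ℝ) + d) * hb) -
          FD β μ (if n = 0 then ((d : ℝ) - 2) * hb else (2 * ((n : ℝ) - 1) + d) * hb)| ^ p *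
        ((2 * (n : ℝ) + d) * hb - d * hb) ^ (p / 2) := by
    rw [← tsum_mul_left]
    exact Summable.tsum_le_tsum (fun n => (hterm n).1) (hEs.mul_left _) hBIGs
  have hsum_hi : (∑' n : ℕ, (Nat.choose (n + d - 1) (d - 1) : ℝ) *
        (2 * Real.pi * hb) ^ (d - 1) *
        |FD β μ ((2 * (n : ℝ) + d) * hb) -
          FD β μ (if n = 0 then ((d : ℝ) - 2) * hb else (2 * ((n : ℝ) - 1) + d) * hb)| ^ p *
        ((2 * (n : ℝ) + d) * hb - d * hb) ^ (p / 2)) ≤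
      (κ₂ * (hb ^ (d - 1) * hb ^ (p / 2) * (β * hb) ^ p)) *
      ∑' n, spF ((d : ℝ) - 1 + p / 2) p (β * hb) (β * (μ - d * hb)) n := by
    rw [← tsum_mul_left]
    exact Summable.tsum_le_tsum (fun n => (hterm n).2) hBIGs (hEs.mul_left _)
  have hpref : (0:ℝ) < 2 * Real.pi / hb ^ (p - 1) :=
    div_pos (by linarith [Real.pi_pos]) (Real.rpow_pos_of_pos hb0 _)
  have hSp_lo : (2 * Real.pi / hb ^ (p - 1)) *
      ((κ₁ * (hb ^ (d - 1) * hb ^ (p / 2) * (β * hb) ^ p)) *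
        ∑' n, spF ((d : ℝ) - 1 + p / 2) p (β * hb) (β * (μ - d * hb)) n) ≤ S ^ p := by
    rw [hSp]
    exact mul_le_mul_of_nonneg_left hsum_lo hpref.le
  have hSp_hi : S ^ p ≤ (2 * Real.pi / hb ^ (p - 1)) *
      ((κ₂ * (hb ^ (d - 1) * hb ^ (p / 2) * (β * hb) ^ p)) *
        ∑' n, spF ((d : ℝ) - 1 + p / 2) p (β * hb) (β * (μ - d * hb)) n) := by
    rw [hSp]
    exact mul_le_mul_of_nonneg_left hsum_hi hpref.le
  -- the key power-counting identity
  have hkey : (2 * Real.pi / hb ^ (p - 1)) *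
      ((hb ^ (d - 1) * hb ^ (p / 2) * (β * hb) ^ p) *
        (β * hb) ^ (-1 - ((d:ℝ) - 1 + p / 2))) =
      2 * Real.pi * β ^ (p - 1 - ((d:ℝ) - 1 + p / 2)) := by
    have h1 : (β * hb) ^ p * (β * hb) ^ (-1 - ((d:ℝ) - 1 + p / 2)) =
        β ^ (p - 1 - ((d:ℝ) - 1 + p / 2)) * hb ^ (p - 1 - ((d:ℝ) - 1 + p / 2)) := by
      rw [← Real.rpow_add ht, show p + (-1 - ((d:ℝ) - 1 + p / 2)) =
        p - 1 - ((d:ℝ) - 1 + p / 2) by ring, Real.mul_rpow hβ.le hb0.le]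
    have h2 : (hb : ℝ) ^ (d - 1) = hb ^ ((d:ℝ) - 1) := by
      rw [← Real.rpow_natCast hb (d - 1)]
      congr 1
      push_cast [Nat.cast_sub hd]; ring
    have h3 : hb ^ ((d:ℝ) - 1) * hb ^ (p / 2) * hb ^ (p - 1 - ((d:ℝ) - 1 + p / 2)) =
        hb ^ (p - 1) := by
      rw [← Real.rpow_add hb0, ← Real.rpow_add hb0]
      congr 1
      ring
    have h4 : hb ^ (p - 1) ≠ 0 := ne_of_gt (Real.rpow_pos_of_pos hb0 _)
    calc (2 * Real.pi / hb ^ (p - 1)) *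
        ((hb ^ (d - 1) * hb ^ (p / 2) * (β * hb) ^ p) *
          (β * hb) ^ (-1 - ((d:ℝ) - 1 + p / 2)))
        = (2 * Real.pi) * ((hb ^ ((d:ℝ) - 1) * hb ^ (p / 2) *
            hb ^ (p - 1 - ((d:ℝ) - 1 + p / 2))) / hb ^ (p - 1)) *
            β ^ (p - 1 - ((d:ℝ) - 1 + p / 2)) := by
          rw [h2, show (hb ^ ((d:ℝ) - 1) * hb ^ (p / 2) * (β * hb) ^ p) *
            (β * hb) ^ (-1 - ((d:ℝ) - 1 + p / 2)) = (hb ^ ((d:ℝ) - 1) * hb ^ (p / 2)) *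
            ((β * hb) ^ p * (β * hb) ^ (-1 - ((d:ℝ) - 1 + p / 2))) from by ring, h1]
          ring
      _ = 2 * Real.pi * β ^ (p - 1 - ((d:ℝ) - 1 + p / 2)) := by
          rw [h3, div_self h4]; ring
  -- exponent bookkeeping
  have hexpo1 : ((1:ℝ) / 2 - (d:ℝ) / p) * p = p - 1 - ((d:ℝ) - 1 + p / 2) := by
    field_simp; ring
  have hexpo2 : ((1:ℝ) / 2 + ((d:ℝ) - 1) / p) * p = (d:ℝ) - 1 + p / 2 := by
    field_simp; ring
  have hβe : (0:ℝ) ≤ β ^ ((1:ℝ) / 2 - (d:ℝ) / p) := Real.rpow_nonneg hβ.le _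
  constructor
  · -- case μ < d * hb
    intro hμ
    have hm0 : β * (μ - d * hb) ≤ 0 :=
      mul_nonpos_of_nonneg_of_nonpos hβ.le (by linarith)
    obtain ⟨hElo, hEhi⟩ := hneg (β * hb) (β * (μ - d * hb)) ht ht1 hm0
    have hX0 : (0:ℝ) ≤ β ^ ((1:ℝ) / 2 - (d:ℝ) / p) * Real.exp (β * (μ - d * hb)) := by
      positivity
    have hXp : ∀ K : ℝ, 0 ≤ K → (K * (β ^ ((1:ℝ) / 2 - (d:ℝ) / p) *
        Real.exp (β * (μ - d * hb)))) ^ p =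
        K ^ p * (β ^ (p - 1 - ((d:ℝ) - 1 + p / 2)) *
          Real.exp (p * (β * (μ - d * hb)))) := by
      intro K hK
      rw [Real.mul_rpow hK hX0, Real.mul_rpow hβe (Real.exp_pos _).le,
        ← Real.rpow_mul hβ.le, hexpo1, ← Real.exp_mul, mul_comm (β * (μ - d * hb)) p]
    have hcore_lo : 2 * Real.pi * κ₁ * cn * (β ^ (p - 1 - ((d:ℝ) - 1 + p / 2)) *
        Real.exp (p * (β * (μ - d * hb)))) ≤ S ^ p := by
      have h1 : (κ₁ * (hb ^ (d - 1) * hb ^ (p / 2) * (β * hb) ^ p)) *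
          (cn * ((β * hb) ^ (-1 - ((d:ℝ) - 1 + p / 2)) *
            Real.exp (p * (β * (μ - d * hb))))) ≤
          (κ₁ * (hb ^ (d - 1) * hb ^ (p / 2) * (β * hb) ^ p)) *
          ∑' n, spF ((d : ℝ) - 1 + p / 2) p (β * hb) (β * (μ - d * hb)) n := by
        apply mul_le_mul_of_nonneg_left hElo
        exact mul_nonneg hκ₁.le (by positivity)
      have h2 := mul_le_mul_of_nonneg_left h1 hpref.le
      have h3 : (2 * Real.pi / hb ^ (p - 1)) *
          ((κ₁ * (hb ^ (d - 1) * hb ^ (p / 2) * (β * hb) ^ p)) *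
          (cn * ((β * hb) ^ (-1 - ((d:ℝ) - 1 + p / 2)) *
            Real.exp (p * (β * (μ - d * hb)))))) =
          κ₁ * cn * Real.exp (p * (β * (μ - d * hb))) *
          ((2 * Real.pi / hb ^ (p - 1)) *
            ((hb ^ (d - 1) * hb ^ (p / 2) * (β * hb) ^ p) *
              (β * hb) ^ (-1 - ((d:ℝ) - 1 + p / 2)))) := by ring
      rw [h3, hkey] at h2
      calc 2 * Real.pi * κ₁ * cn * (β ^ (p - 1 - ((d:ℝ) - 1 + p / 2)) *
            Real.exp (p * (β * (μ - d * hb)))) =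
          κ₁ * cn * Real.exp (p * (β * (μ - d * hb))) *
            (2 * Real.pi * β ^ (p - 1 - ((d:ℝ) - 1 + p / 2))) := by ring
        _ ≤ S ^ p := le_trans h2 hSp_lo
    have hcore_hi : S ^ p ≤ 2 * Real.pi * κ₂ * Cn * (β ^ (p - 1 - ((d:ℝ) - 1 + p / 2)) *
        Real.exp (p * (β * (μ - d * hb)))) := by
      have h1 : (κ₂ * (hb ^ (d - 1) * hb ^ (p / 2) * (β * hb) ^ p)) *
          (∑' n, spF ((d : ℝ) - 1 + p / 2) p (β * hb) (β * (μ - d * hb)) n) ≤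
          (κ₂ * (hb ^ (d - 1) * hb ^ (p / 2) * (β * hb) ^ p)) *
          (Cn * ((β * hb) ^ (-1 - ((d:ℝ) - 1 + p / 2)) *
            Real.exp (p * (β * (μ - d * hb))))) := by
        apply mul_le_mul_of_nonneg_left hEhi
        exact mul_nonneg hκ₂.le (by positivity)
      have h2 := mul_le_mul_of_nonneg_left h1 hpref.le
      have h3 : (2 * Real.pi / hb ^ (p - 1)) *
          ((κ₂ * (hb ^ (d - 1) * hb ^ (p / 2) * (β * hb) ^ p)) *
          (Cn * ((β * hb) ^ (-1 - ((d:ℝ) - 1 + p / 2)) *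
            Real.exp (p * (β * (μ - d * hb)))))) =
          κ₂ * Cn * Real.exp (p * (β * (μ - d * hb))) *
          ((2 * Real.pi / hb ^ (p - 1)) *
            ((hb ^ (d - 1) * hb ^ (p / 2) * (β * hb) ^ p) *
              (β * hb) ^ (-1 - ((d:ℝ) - 1 + p / 2)))) := by ring
      rw [h3, hkey] at h2
      calc S ^ p ≤ κ₂ * Cn * Real.exp (p * (β * (μ - d * hb))) *
            (2 * Real.pi * β ^ (p - 1 - ((d:ℝ) - 1 + p / 2))) := le_trans hSp_hi h2
        _ = 2 * Real.pi * κ₂ * Cn * (β ^ (p - 1 - ((d:ℝ) - 1 + p / 2)) *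
            Real.exp (p * (β * (μ - d * hb)))) := by ring
    constructor
    · -- lower
      have hle : (c1 * (β ^ ((1:ℝ) / 2 - (d:ℝ) / p) * Real.exp (β * (μ - d * hb)))) ^ p ≤
          S ^ p := by
        rw [hXp c1 hc1.le, hc1p]
        exact hcore_lo
      have h5 : c1 * (β ^ ((1:ℝ) / 2 - (d:ℝ) / p) * Real.exp (β * (μ - d * hb))) ≤ S :=
        (Real.rpow_le_rpow_iff (by positivity) hS0 hp0).mp hle
      calc min c1 c2 * (β ^ ((1:ℝ) / 2 - (d:ℝ) / p) * Real.exp (β * (μ - d * hb))) ≤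
          c1 * (β ^ ((1:ℝ) / 2 - (d:ℝ) / p) * Real.exp (β * (μ - d * hb))) := by
            apply mul_le_mul_of_nonneg_right (min_le_left _ _) (by positivity)
        _ ≤ S := h5
    · -- upper
      have hle : S ^ p ≤
          (C1 * (β ^ ((1:ℝ) / 2 - (d:ℝ) / p) * Real.exp (β * (μ - d * hb)))) ^ p := by
        rw [hXp C1 hC1.le, hC1p]
        exact hcore_hi
      have h5 : S ≤ C1 * (β ^ ((1:ℝ) / 2 - (d:ℝ) / p) * Real.exp (β * (μ - d * hb))) :=
        (Real.rpow_le_rpow_iff hS0 (by positivity) hp0).mp hle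
      calc S ≤ C1 * (β ^ ((1:ℝ) / 2 - (d:ℝ) / p) * Real.exp (β * (μ - d * hb))) := h5
        _ ≤ max (max C1 C2) (min c1 c2) *
            (β ^ ((1:ℝ) / 2 - (d:ℝ) / p) * Real.exp (β * (μ - d * hb))) := by
          apply mul_le_mul_of_nonneg_right
            (le_trans (le_max_left _ _) (le_max_left _ _)) (by positivity)
  · -- case d * hb ≤ μ
    intro hμ
    have hm0 : 0 ≤ β * (μ - d * hb) := mul_nonneg hβ.le (by linarith)
    have hElo := hposL (β * hb) (β * (μ - d * hb)) ht ht1 hm0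
    have hEhi := hposU (β * hb) (β * (μ - d * hb)) ht ht1 hm0
    have hY : β * (μ - d * hb + hb) = β * (μ - d * hb) + β * hb := by ring
    have hYpos : (0:ℝ) < β * (μ - d * hb) + β * hb := by
      have := ht; linarith
    set Y : ℝ := β * (μ - d * hb) + β * hb with hY_def
    set u : ℝ := Y ^ ((1:ℝ) / 2 + ((d:ℝ) - 1) / p) with hu_def
    have hu0 : 0 ≤ u := Real.rpow_nonneg hYpos.le _
    have hup : u ^ p = Y ^ ((d:ℝ) - 1 + p / 2) := by
      rw [hu_def, ← Real.rpow_mul hYpos.le, hexpo2]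
    have hsand := sp_add_one_rpow hu0 hp
    have hX0 : (0:ℝ) ≤ β ^ ((1:ℝ) / 2 - (d:ℝ) / p) * (u + 1) := by positivity
    have hXp : ∀ K : ℝ, 0 ≤ K →
        (K * (β ^ ((1:ℝ) / 2 - (d:ℝ) / p) * (u + 1))) ^ p =
        K ^ p * (β ^ (p - 1 - ((d:ℝ) - 1 + p / 2)) * (u + 1) ^ p) := by
      intro K hK
      rw [Real.mul_rpow hK hX0, Real.mul_rpow hβe (by positivity),
        ← Real.rpow_mul hβ.le, hexpo1]
    have hcore_lo : 2 * Real.pi * κ₁ * cp2 * (β ^ (p - 1 - ((d:ℝ) - 1 + p / 2)) *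
        (Y ^ ((d:ℝ) - 1 + p / 2) + 1)) ≤ S ^ p := by
      have h1 : (κ₁ * (hb ^ (d - 1) * hb ^ (p / 2) * (β * hb) ^ p)) *
          (cp2 * ((β * hb) ^ (-1 - ((d:ℝ) - 1 + p / 2)) *
            ((β * (μ - d * hb) + β * hb) ^ ((d:ℝ) - 1 + p / 2) + 1))) ≤
          (κ₁ * (hb ^ (d - 1) * hb ^ (p / 2) * (β * hb) ^ p)) *
          ∑' n, spF ((d : ℝ) - 1 + p / 2) p (β * hb) (β * (μ - d * hb)) n := by
        apply mul_le_mul_of_nonneg_left hElo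
        exact mul_nonneg hκ₁.le (by positivity)
      have h2 := mul_le_mul_of_nonneg_left h1 hpref.le
      have h3 : (2 * Real.pi / hb ^ (p - 1)) *
          ((κ₁ * (hb ^ (d - 1) * hb ^ (p / 2) * (β * hb) ^ p)) *
          (cp2 * ((β * hb) ^ (-1 - ((d:ℝ) - 1 + p / 2)) *
            ((β * (μ - d * hb) + β * hb) ^ ((d:ℝ) - 1 + p / 2) + 1)))) =
          κ₁ * cp2 * ((β * (μ - d * hb) + β * hb) ^ ((d:ℝ) - 1 + p / 2) + 1) *
          ((2 * Real.pi / hb ^ (p - 1)) *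
            ((hb ^ (d - 1) * hb ^ (p / 2) * (β * hb) ^ p) *
              (β * hb) ^ (-1 - ((d:ℝ) - 1 + p / 2)))) := by ring
      rw [h3, hkey] at h2
      calc 2 * Real.pi * κ₁ * cp2 * (β ^ (p - 1 - ((d:ℝ) - 1 + p / 2)) *
            (Y ^ ((d:ℝ) - 1 + p / 2) + 1)) =
          κ₁ * cp2 * ((β * (μ - d * hb) + β * hb) ^ ((d:ℝ) - 1 + p / 2) + 1) *
            (2 * Real.pi * β ^ (p - 1 - ((d:ℝ) - 1 + p / 2))) := by rw [hY_def]; ring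
        _ ≤ S ^ p := le_trans h2 hSp_lo
    have hcore_hi : S ^ p ≤ 2 * Real.pi * κ₂ * Cp2 *
        (β ^ (p - 1 - ((d:ℝ) - 1 + p / 2)) * (Y ^ ((d:ℝ) - 1 + p / 2) + 1)) := by
      have h1 : (κ₂ * (hb ^ (d - 1) * hb ^ (p / 2) * (β * hb) ^ p)) *
          (∑' n, spF ((d : ℝ) - 1 + p / 2) p (β * hb) (β * (μ - d * hb)) n) ≤
          (κ₂ * (hb ^ (d - 1) * hb ^ (p / 2) * (β * hb) ^ p)) *
          (Cp2 * ((β * hb) ^ (-1 - ((d:ℝ) - 1 + p / 2)) *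
            ((β * (μ - d * hb) + β * hb) ^ ((d:ℝ) - 1 + p / 2) + 1))) := by
        apply mul_le_mul_of_nonneg_left hEhi
        exact mul_nonneg hκ₂.le (by positivity)
      have h2 := mul_le_mul_of_nonneg_left h1 hpref.le
      have h3 : (2 * Real.pi / hb ^ (p - 1)) *
          ((κ₂ * (hb ^ (d - 1) * hb ^ (p / 2) * (β * hb) ^ p)) *
          (Cp2 * ((β * hb) ^ (-1 - ((d:ℝ) - 1 + p / 2)) *
            ((β * (μ - d * hb) + β * hb) ^ ((d:ℝ) - 1 + p / 2) + 1)))) =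
          κ₂ * Cp2 * ((β * (μ - d * hb) + β * hb) ^ ((d:ℝ) - 1 + p / 2) + 1) *
          ((2 * Real.pi / hb ^ (p - 1)) *
            ((hb ^ (d - 1) * hb ^ (p / 2) * (β * hb) ^ p) *
              (β * hb) ^ (-1 - ((d:ℝ) - 1 + p / 2)))) := by ring
      rw [h3, hkey] at h2
      calc S ^ p ≤ κ₂ * Cp2 * ((β * (μ - d * hb) + β * hb) ^ ((d:ℝ) - 1 + p / 2) + 1) *
            (2 * Real.pi * β ^ (p - 1 - ((d:ℝ) - 1 + p / 2))) := le_trans hSp_hi h2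
        _ = 2 * Real.pi * κ₂ * Cp2 * (β ^ (p - 1 - ((d:ℝ) - 1 + p / 2)) *
            (Y ^ ((d:ℝ) - 1 + p / 2) + 1)) := by rw [hY_def]; ring
    have hgoalY : β * (μ - d * hb + hb) = Y := by rw [hY_def]; ring
    rw [hgoalY]
    constructor
    · -- lower
      have hle : (c2 * (β ^ ((1:ℝ) / 2 - (d:ℝ) / p) * (u + 1))) ^ p ≤ S ^ p := by
        rw [hXp c2 hc2.le, hc2p]
        have h6 : (u + 1) ^ p ≤ 2 ^ p * (Y ^ ((d:ℝ) - 1 + p / 2) + 1) := by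
          rw [← hup]; exact hsand.2
        have h7 : 2 * Real.pi * κ₁ * cp2 / 2 ^ p *
            (β ^ (p - 1 - ((d:ℝ) - 1 + p / 2)) * (u + 1) ^ p) ≤
            2 * Real.pi * κ₁ * cp2 / 2 ^ p *
            (β ^ (p - 1 - ((d:ℝ) - 1 + p / 2)) *
              (2 ^ p * (Y ^ ((d:ℝ) - 1 + p / 2) + 1))) := by
          apply mul_le_mul_of_nonneg_left _ hK3.le
          exact mul_le_mul_of_nonneg_left h6 (Real.rpow_nonneg hβ.le _)
        have h8 : 2 * Real.pi * κ₁ * cp2 / 2 ^ p *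
            (β ^ (p - 1 - ((d:ℝ) - 1 + p / 2)) *
              (2 ^ p * (Y ^ ((d:ℝ) - 1 + p / 2) + 1))) =
            2 * Real.pi * κ₁ * cp2 * (β ^ (p - 1 - ((d:ℝ) - 1 + p / 2)) *
              (Y ^ ((d:ℝ) - 1 + p / 2) + 1)) := by
          field_simp
        calc 2 * Real.pi * κ₁ * cp2 / 2 ^ p *
            (β ^ (p - 1 - ((d:ℝ) - 1 + p / 2)) * (u + 1) ^ p) ≤
            2 * Real.pi * κ₁ * cp2 * (β ^ (p - 1 - ((d:ℝ) - 1 + p / 2)) *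
              (Y ^ ((d:ℝ) - 1 + p / 2) + 1)) := by rw [← h8]; exact h7
          _ ≤ S ^ p := hcore_lo
      have h5 : c2 * (β ^ ((1:ℝ) / 2 - (d:ℝ) / p) * (u + 1)) ≤ S :=
        (Real.rpow_le_rpow_iff (by positivity) hS0 hp0).mp hle
      calc min c1 c2 * (β ^ ((1:ℝ) / 2 - (d:ℝ) / p) * (u + 1)) ≤
          c2 * (β ^ ((1:ℝ) / 2 - (d:ℝ) / p) * (u + 1)) :=
            mul_le_mul_of_nonneg_right (min_le_right _ _) hX0
        _ ≤ S := h5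
    · -- upper
      have hle : S ^ p ≤ (C2 * (β ^ ((1:ℝ) / 2 - (d:ℝ) / p) * (u + 1))) ^ p := by
        rw [hXp C2 hC2.le, hC2p]
        have h6 : Y ^ ((d:ℝ) - 1 + p / 2) + 1 ≤ 2 * (u + 1) ^ p := by
          rw [← hup]
          have := hsand.1
          linarith
        have h7 : 2 * Real.pi * κ₂ * Cp2 * (β ^ (p - 1 - ((d:ℝ) - 1 + p / 2)) *
            (Y ^ ((d:ℝ) - 1 + p / 2) + 1)) ≤
            2 * Real.pi * κ₂ * Cp2 * (β ^ (p - 1 - ((d:ℝ) - 1 + p / 2)) *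
              (2 * (u + 1) ^ p)) := by
          apply mul_le_mul_of_nonneg_left _ (by positivity)
          exact mul_le_mul_of_nonneg_left h6 (Real.rpow_nonneg hβ.le _)
        have h8 : 2 * Real.pi * κ₂ * Cp2 * (β ^ (p - 1 - ((d:ℝ) - 1 + p / 2)) *
            (2 * (u + 1) ^ p)) =
            2 * Real.pi * κ₂ * Cp2 * 2 * (β ^ (p - 1 - ((d:ℝ) - 1 + p / 2)) *
              (u + 1) ^ p) := by ring
        calc S ^ p ≤ 2 * Real.pi * κ₂ * Cp2 * (β ^ (p - 1 - ((d:ℝ) - 1 + p / 2)) *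
              (Y ^ ((d:ℝ) - 1 + p / 2) + 1)) := hcore_hi
          _ ≤ 2 * Real.pi * κ₂ * Cp2 * 2 * (β ^ (p - 1 - ((d:ℝ) - 1 + p / 2)) *
              (u + 1) ^ p) := by rw [← h8]; exact h7
      have h5 : S ≤ C2 * (β ^ ((1:ℝ) / 2 - (d:ℝ) / p) * (u + 1)) :=
        (Real.rpow_le_rpow_iff hS0 (by positivity) hp0).mp hle
      calc S ≤ C2 * (β ^ ((1:ℝ) / 2 - (d:ℝ) / p) * (u + 1)) := h5
        _ ≤ max (max C1 C2) (min c1 c2) * (β ^ ((1:ℝ) / 2 - (d:ℝ) / p) * (u + 1)) :=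
          mul_le_mul_of_nonneg_right
            (le_trans (le_max_right _ _) (le_max_left _ _)) hX0
end

section
/- Let d ≥ 1 be an integer, p ∈ [1,∞), β > 0, μ ∈ ℝ, and let A : ℝ^d → ℝ^d be continuously differentiable with bounded derivative. Let f^A_{β,μ}(x,ξ) = (1 + exp(β(|ξ − A(x)|² + |x|² − μ)))^{-1} and f_{β,μ}(x,ξ) = (1 + exp(β(|ξ|² + |x|² − μ)))^{-1}. Then ‖∇_x f^A_{β,μ}‖_{L^p(ℝ^{2d})} ≤ (sup_{x ∈ ℝ^d} √(1 + ‖DA(x)‖²)) · ‖∇_z f_{β,μ}‖_{L^p(ℝ^{2d})}, where ‖DA(x)‖ is the operator norm of the derivative of A at x, ∇_x is the gradient in the x variable, and ∇_z f = (∇_x f, ∇_ξ f) is the full phase-space gradient. -/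
open MeasureTheory

/-- The magnetic classical Fermi–Dirac distribution
`f^A_{β,μ}(x,ξ) = (1 + exp(β(|ξ − A(x)|² + |x|² − μ)))⁻¹`. -/
noncomputable def fermiDiracMag (d : ℕ) (β μ : ℝ)
    (A : EuclideanSpace ℝ (Fin d) → EuclideanSpace ℝ (Fin d))
    (x ξ : EuclideanSpace ℝ (Fin d)) : ℝ :=
  (1 + Real.exp (β * (‖ξ - A x‖ ^ 2 + ‖x‖ ^ 2 - μ)))⁻¹

/-! ### Auxiliary definitions -/

/-- The profile function `F(r) = (1+exp(β(r-μ)))⁻¹`. -/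
noncomputable def FDfun (β μ r : ℝ) : ℝ := (1 + Real.exp (β * (r - μ)))⁻¹

/-- The derivative of `FDfun`. -/
noncomputable def FDder (β μ r : ℝ) : ℝ :=
  -(Real.exp (β * (r - μ)) * β / (1 + Real.exp (β * (r - μ))) ^ 2)

lemma FD_pos_denom (β μ r : ℝ) : (0:ℝ) < 1 + Real.exp (β * (r - μ)) := by positivity

lemma hasDerivAt_FDfun (β μ r : ℝ) : HasDerivAt (FDfun β μ) (FDder β μ r) r := by
  have h1 : HasDerivAt (fun r : ℝ => β * (r - μ)) β r := by
    simpa using ((hasDerivAt_id r).sub_const μ).const_mul β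
  have h4 := ((h1.exp).const_add 1).inv (ne_of_gt (FD_pos_denom β μ r))
  unfold FDfun FDder
  exact h4.congr_deriv (by ring)

lemma abs_FDder_le (β μ r : ℝ) (hβ : 0 < β) :
    |FDder β μ r| ≤ β * Real.exp (-(β * (r - μ))) := by
  set e := Real.exp (β * (r - μ)) with he
  have hepos : 0 < e := Real.exp_pos _
  have habs : |FDder β μ r| = e * β / (1 + e) ^ 2 := by
    rw [FDder, abs_neg, abs_div, abs_of_nonneg (by positivity), abs_of_nonneg (by positivity)]
  rw [habs]
  have h1 : e * β / (1 + e) ^ 2 ≤ e * β / e ^ 2 := by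
    apply div_le_div_of_nonneg_left (by positivity) (by positivity)
    nlinarith
  have h2 : e * β / e ^ 2 = β * e⁻¹ := by field_simp
  rw [Real.exp_neg]
  nlinarith [h1, h2]

section Derivatives

variable {d : ℕ} {β μ : ℝ} {A : EuclideanSpace ℝ (Fin d) → EuclideanSpace ℝ (Fin d)}

local notation "E" => EuclideanSpace ℝ (Fin d)

lemma fermi_eq (x ξ : E) :
    fermiDiracMag d β μ A x ξ = FDfun β μ (‖ξ - A x‖ ^ 2 + ‖x‖ ^ 2) := rfl

/-- The `x`-derivative of the magnetic Fermi–Dirac function. -/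
noncomputable def PhiL (d : ℕ) (β μ : ℝ)
    (A : EuclideanSpace ℝ (Fin d) → EuclideanSpace ℝ (Fin d))
    (z : EuclideanSpace ℝ (Fin d) × EuclideanSpace ℝ (Fin d)) :
    EuclideanSpace ℝ (Fin d) →L[ℝ] ℝ :=
  ((2:ℝ) * FDder β μ (‖z.2 - A z.1‖ ^ 2 + ‖z.1‖ ^ 2)) •
    ((innerSL ℝ (z.2 - A z.1)).comp (-(fderiv ℝ A z.1)) + innerSL ℝ z.1)

lemma hasFDerivAt_mag (hA : ContDiff ℝ 1 A) (z : E × E) :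
    HasFDerivAt (fun x => fermiDiracMag d β μ A x z.2) (PhiL d β μ A z) z.1 := by
  obtain ⟨x, ξ⟩ := z
  have hAd : HasFDerivAt A (fderiv ℝ A x) x :=
    (hA.differentiable one_ne_zero x).hasFDerivAt
  have h1 : HasFDerivAt (fun x => ξ - A x) (-(fderiv ℝ A x)) x := hAd.const_sub ξ
  have h2 := h1.norm_sq
  have h3 : HasFDerivAt (fun x : E => ‖x‖ ^ 2) ((2:ℕ) • (innerSL ℝ x)) x := by
    simpa using (hasFDerivAt_id x).norm_sq
  have h4 := h2.add h3
  have h5 := (hasDerivAt_FDfun β μ (‖ξ - A x‖ ^ 2 + ‖x‖ ^ 2)).comp_hasFDerivAt x h4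
  refine h5.congr_fderiv ?_
  ext y
  simp [PhiL, ContinuousLinearMap.smul_apply, two_smul]
  ring

lemma norm_PhiL_le (z : E × E) :
    ‖PhiL d β μ A z‖ ≤ |FDder β μ (‖z.2 - A z.1‖ ^ 2 + ‖z.1‖ ^ 2)| *
      (2 * (‖fderiv ℝ A z.1‖ * ‖z.2 - A z.1‖ + ‖z.1‖)) := by
  have h1 : ‖PhiL d β μ A z‖ ≤ |(2:ℝ) * FDder β μ (‖z.2 - A z.1‖ ^ 2 + ‖z.1‖ ^ 2)| *
      (‖(innerSL ℝ (z.2 - A z.1)).comp (-(fderiv ℝ A z.1))‖ + ‖innerSL ℝ z.1‖) := by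
    have h := norm_smul ((2:ℝ) * FDder β μ (‖z.2 - A z.1‖ ^ 2 + ‖z.1‖ ^ 2))
      ((innerSL ℝ (z.2 - A z.1)).comp (-(fderiv ℝ A z.1)) + innerSL ℝ z.1)
    rw [PhiL, h, Real.norm_eq_abs]
    gcongr
    exact norm_add_le _ _
  have h2 : ‖(innerSL ℝ (z.2 - A z.1)).comp (-(fderiv ℝ A z.1))‖ ≤
      ‖z.2 - A z.1‖ * ‖fderiv ℝ A z.1‖ := by
    calc ‖(innerSL ℝ (z.2 - A z.1)).comp (-(fderiv ℝ A z.1))‖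
        ≤ ‖innerSL ℝ (z.2 - A z.1)‖ * ‖-(fderiv ℝ A z.1)‖ :=
          ContinuousLinearMap.opNorm_comp_le _ _
      _ = ‖z.2 - A z.1‖ * ‖fderiv ℝ A z.1‖ := by rw [innerSL_apply_norm, norm_neg]
  have h3 : ‖innerSL (𝕜 := ℝ) z.1‖ = ‖z.1‖ := innerSL_apply_norm ℝ z.1
  rw [abs_mul, abs_two] at h1
  calc ‖PhiL d β μ A z‖ ≤ _ := h1
    _ ≤ 2 * |FDder β μ (‖z.2 - A z.1‖ ^ 2 + ‖z.1‖ ^ 2)| *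
        (‖z.2 - A z.1‖ * ‖fderiv ℝ A z.1‖ + ‖z.1‖) := by
        rw [h3]; gcongr
    _ = _ := by ring

lemma continuous_FDder : Continuous (FDder β μ) := by
  apply Continuous.neg
  apply Continuous.div (by fun_prop) (by fun_prop)
  intro r
  positivity

lemma continuous_PhiL (hA : ContDiff ℝ 1 A) : Continuous (PhiL d β μ A) := by
  have hA0 : Continuous A := hA.continuous
  have hDA : Continuous (fderiv ℝ A) := hA.continuous_fderiv one_ne_zero
  have hsub : Continuous (fun z : E × E => z.2 - A z.1) := by fun_prop
  have hinner1 : Continuous (fun z : E × E => innerSL ℝ (z.2 - A z.1)) :=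
    (innerSL ℝ).continuous.comp hsub
  have hinner2 : Continuous (fun z : E × E => innerSL (𝕜 := ℝ) z.1) :=
    (innerSL ℝ).continuous.comp continuous_fst
  have hcomp : Continuous (fun z : E × E =>
      (innerSL ℝ (z.2 - A z.1)).comp (-(fderiv ℝ A z.1))) :=
    hinner1.clm_comp ((hDA.comp continuous_fst).neg)
  have hR : Continuous (fun z : E × E => ‖z.2 - A z.1‖ ^ 2 + ‖z.1‖ ^ 2) := by fun_prop
  exact ((continuous_const.mul (continuous_FDder.comp hR))).smul (hcomp.add hinner2)

/-- The `x`-derivative of the free (A = 0) Fermi–Dirac function. -/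
noncomputable def ThetaL (d : ℕ) (β μ : ℝ)
    (z : EuclideanSpace ℝ (Fin d) × EuclideanSpace ℝ (Fin d)) :
    EuclideanSpace ℝ (Fin d) →L[ℝ] ℝ :=
  ((2:ℝ) * FDder β μ (‖z.2‖ ^ 2 + ‖z.1‖ ^ 2)) • innerSL ℝ z.1

/-- The `ξ`-derivative of the free (A = 0) Fermi–Dirac function. -/
noncomputable def XiL (d : ℕ) (β μ : ℝ)
    (z : EuclideanSpace ℝ (Fin d) × EuclideanSpace ℝ (Fin d)) :
    EuclideanSpace ℝ (Fin d) →L[ℝ] ℝ :=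
  ((2:ℝ) * FDder β μ (‖z.2‖ ^ 2 + ‖z.1‖ ^ 2)) • innerSL ℝ z.2

lemma hasFDerivAt_free_fst (z : E × E) :
    HasFDerivAt (fun x => fermiDiracMag d β μ (fun _ => 0) x z.2) (ThetaL d β μ z) z.1 := by
  obtain ⟨x, ξ⟩ := z
  have hfun : (fun x : E => fermiDiracMag d β μ (fun _ => 0) x ξ) =
      fun x : E => FDfun β μ (‖ξ‖ ^ 2 + ‖x‖ ^ 2) := by
    funext y; simp [fermiDiracMag, FDfun]
  rw [hfun]
  have h3 : HasFDerivAt (fun x : E => ‖x‖ ^ 2) ((2:ℕ) • (innerSL ℝ x)) x := by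
    simpa using (hasFDerivAt_id x).norm_sq
  have h4 := h3.const_add (‖ξ‖ ^ 2)
  have h5 := (hasDerivAt_FDfun β μ (‖ξ‖ ^ 2 + ‖x‖ ^ 2)).comp_hasFDerivAt x h4
  refine h5.congr_fderiv ?_
  ext y
  simp [ThetaL, ContinuousLinearMap.smul_apply, two_smul]
  ring

lemma hasFDerivAt_free_snd (z : E × E) :
    HasFDerivAt (fun ξ => fermiDiracMag d β μ (fun _ => 0) z.1 ξ) (XiL d β μ z) z.2 := by
  obtain ⟨x, ξ⟩ := z
  have hfun : (fun ξ : E => fermiDiracMag d β μ (fun _ => 0) x ξ) =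
      fun ξ : E => FDfun β μ (‖ξ‖ ^ 2 + ‖x‖ ^ 2) := by
    funext y; simp [fermiDiracMag, FDfun]
  rw [hfun]
  have h3 : HasFDerivAt (fun ξ : E => ‖ξ‖ ^ 2) ((2:ℕ) • (innerSL ℝ ξ)) ξ := by
    simpa using (hasFDerivAt_id ξ).norm_sq
  have h4 := h3.add_const (‖x‖ ^ 2)
  have h5 := (hasDerivAt_FDfun β μ (‖ξ‖ ^ 2 + ‖x‖ ^ 2)).comp_hasFDerivAt ξ h4
  refine h5.congr_fderiv ?_
  ext y
  simp [XiL, ContinuousLinearMap.smul_apply, two_smul]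
  ring

lemma norm_ThetaL (z : E × E) :
    ‖ThetaL d β μ z‖ = 2 * |FDder β μ (‖z.2‖ ^ 2 + ‖z.1‖ ^ 2)| * ‖z.1‖ := by
  have h := norm_smul ((2:ℝ) * FDder β μ (‖z.2‖ ^ 2 + ‖z.1‖ ^ 2)) (innerSL ℝ z.1)
  rw [ThetaL, h, Real.norm_eq_abs, abs_mul, abs_two, innerSL_apply_norm]

lemma norm_XiL (z : E × E) :
    ‖XiL d β μ z‖ = 2 * |FDder β μ (‖z.2‖ ^ 2 + ‖z.1‖ ^ 2)| * ‖z.2‖ := by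
  have h := norm_smul ((2:ℝ) * FDder β μ (‖z.2‖ ^ 2 + ‖z.1‖ ^ 2)) (innerSL ℝ z.2)
  rw [XiL, h, Real.norm_eq_abs, abs_mul, abs_two, innerSL_apply_norm]

lemma continuous_ThetaL : Continuous (ThetaL (β := β) (μ := μ) d) := by
  have hR : Continuous (fun z : E × E => ‖z.2‖ ^ 2 + ‖z.1‖ ^ 2) := by fun_prop
  exact (continuous_const.mul (continuous_FDder.comp hR)).smul
    ((innerSL ℝ).continuous.comp continuous_fst)

lemma continuous_XiL : Continuous (XiL (β := β) (μ := μ) d) := by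
  have hR : Continuous (fun z : E × E => ‖z.2‖ ^ 2 + ‖z.1‖ ^ 2) := by fun_prop
  exact (continuous_const.mul (continuous_FDder.comp hR)).smul
    ((innerSL ℝ).continuous.comp continuous_snd)

lemma norm_gradient_eq (f : E → ℝ) (x : E) : ‖gradient f x‖ = ‖fderiv ℝ f x‖ :=
  (InnerProductSpace.toDual ℝ E).symm.norm_map _

end Derivatives

/-- Elementary Cauchy–Schwarz step. -/
lemma cs_aux (a b c : ℝ) (ha : 0 ≤ a) (hb : 0 ≤ b) (hc : 0 ≤ c) :
    a * b + c ≤ Real.sqrt (1 + a ^ 2) * Real.sqrt (b ^ 2 + c ^ 2) := by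
  have h2 : (a * b + c) ^ 2 ≤ (1 + a ^ 2) * (b ^ 2 + c ^ 2) := by
    nlinarith [sq_nonneg (a * c - b)]
  calc a * b + c = Real.sqrt ((a * b + c) ^ 2) := by
        rw [Real.sqrt_sq (by positivity)]
    _ ≤ Real.sqrt ((1 + a ^ 2) * (b ^ 2 + c ^ 2)) := Real.sqrt_le_sqrt h2
    _ = Real.sqrt (1 + a ^ 2) * Real.sqrt (b ^ 2 + c ^ 2) :=
        Real.sqrt_mul (by positivity) _

/-- Gaussian integrability on a finite-dimensional inner product space (real version). -/
lemma integrable_gauss {d : ℕ} {c : ℝ} (hc : 0 < c) :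
    Integrable (fun v : EuclideanSpace ℝ (Fin d) => Real.exp (-c * ‖v‖ ^ 2)) := by
  have h := (GaussianFourier.integrable_cexp_neg_mul_sq_norm_add
    (V := EuclideanSpace ℝ (Fin d)) (b := (c : ℂ)) (by simpa using hc) 0 0).norm
  apply h.congr
  filter_upwards with v
  rw [Complex.norm_exp]
  congr 1
  simp [← Complex.ofReal_pow]

theorem stmt_15 (d : ℕ) (hd : 1 ≤ d) (p : ℝ) (hp : 1 ≤ p) (β μ : ℝ) (hβ : 0 < β)
    (A : EuclideanSpace ℝ (Fin d) → EuclideanSpace ℝ (Fin d))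
    (hA : ContDiff ℝ 1 A) (hA' : ∃ K : ℝ, ∀ x, ‖fderiv ℝ A x‖ ≤ K) :
    (∫ z : EuclideanSpace ℝ (Fin d) × EuclideanSpace ℝ (Fin d),
        ‖gradient (fun x => fermiDiracMag d β μ A x z.2) z.1‖ ^ p) ^ (1 / p) ≤
      (⨆ x : EuclideanSpace ℝ (Fin d), Real.sqrt (1 + ‖fderiv ℝ A x‖ ^ 2)) *
        (∫ z : EuclideanSpace ℝ (Fin d) × EuclideanSpace ℝ (Fin d),
          (‖gradient (fun x => fermiDiracMag d β μ (fun _ => 0) x z.2) z.1‖ ^ 2 +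
            ‖gradient (fun ξ => fermiDiracMag d β μ (fun _ => 0) z.1 ξ) z.2‖ ^ 2) ^
            (p / 2)) ^ (1 / p) := by
  have hp0 : (0:ℝ) < p := lt_of_lt_of_le one_pos hp
  obtain ⟨K, hK⟩ := hA'
  set M := ⨆ x : EuclideanSpace ℝ (Fin d), Real.sqrt (1 + ‖fderiv ℝ A x‖ ^ 2) with hM
  have hMnonneg : 0 ≤ M := Real.iSup_nonneg fun x => Real.sqrt_nonneg _
  have hbdd : BddAbove (Set.range fun x : EuclideanSpace ℝ (Fin d) =>
      Real.sqrt (1 + ‖fderiv ℝ A x‖ ^ 2)) := by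
    refine ⟨Real.sqrt (1 + K ^ 2), ?_⟩
    rintro _ ⟨x, rfl⟩
    apply Real.sqrt_le_sqrt
    have h0 : 0 ≤ ‖fderiv ℝ A x‖ := norm_nonneg _
    nlinarith [hK x]
  have hMle : ∀ x, Real.sqrt (1 + ‖fderiv ℝ A x‖ ^ 2) ≤ M := fun x => le_ciSup hbdd x
  set lhsF : EuclideanSpace ℝ (Fin d) × EuclideanSpace ℝ (Fin d) → ℝ :=
    fun z => ‖PhiL d β μ A z‖ ^ p with hlhsF
  set rhsF : EuclideanSpace ℝ (Fin d) × EuclideanSpace ℝ (Fin d) → ℝ :=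
    fun z => (‖ThetaL d β μ z‖ ^ 2 + ‖XiL d β μ z‖ ^ 2) ^ (p / 2) with hrhsF
  have hlhs0 : ∀ z, 0 ≤ lhsF z := fun z => Real.rpow_nonneg (norm_nonneg _) p
  have hrhs0 : ∀ z, 0 ≤ rhsF z := fun z => Real.rpow_nonneg (by positivity) _
  -- rewrite the integrands
  have e1 : (∫ z : EuclideanSpace ℝ (Fin d) × EuclideanSpace ℝ (Fin d),
      ‖gradient (fun x => fermiDiracMag d β μ A x z.2) z.1‖ ^ p) = ∫ z, lhsF z := by
    apply integral_congr_ae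
    filter_upwards with z
    rw [norm_gradient_eq, (hasFDerivAt_mag hA z).fderiv]
  have e2 : (∫ z : EuclideanSpace ℝ (Fin d) × EuclideanSpace ℝ (Fin d),
      (‖gradient (fun x => fermiDiracMag d β μ (fun _ => 0) x z.2) z.1‖ ^ 2 +
        ‖gradient (fun ξ => fermiDiracMag d β μ (fun _ => 0) z.1 ξ) z.2‖ ^ 2) ^ (p / 2)) =
      ∫ z, rhsF z := by
    apply integral_congr_ae
    filter_upwards with z
    rw [norm_gradient_eq, norm_gradient_eq, (hasFDerivAt_free_fst z).fderiv,
      (hasFDerivAt_free_snd z).fderiv]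
  rw [e1, e2]
  -- continuity
  have hcontL : Continuous lhsF :=
    ((continuous_PhiL hA).norm).rpow_const (fun z => Or.inr hp0.le)
  have hcontR : Continuous rhsF :=
    ((((continuous_ThetaL (d := d) (β := β) (μ := μ)).norm).pow 2).add
      (((continuous_XiL (d := d) (β := β) (μ := μ)).norm).pow 2)).rpow_const
      (fun z => Or.inr (by positivity))
  -- the sum of squares of the free gradients
  have hS : ∀ z : EuclideanSpace ℝ (Fin d) × EuclideanSpace ℝ (Fin d),
      ‖ThetaL d β μ z‖ ^ 2 + ‖XiL d β μ z‖ ^ 2 =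
        4 * (FDder β μ (‖z.2‖ ^ 2 + ‖z.1‖ ^ 2)) ^ 2 * (‖z.2‖ ^ 2 + ‖z.1‖ ^ 2) := by
    intro z
    rw [norm_ThetaL, norm_XiL, ← sq_abs (FDder β μ (‖z.2‖ ^ 2 + ‖z.1‖ ^ 2))]
    ring
  -- Gaussian domination of rhsF
  set c₀ : ℝ := β * p / 2 with hc₀
  have hc₀pos : 0 < c₀ := by positivity
  set C : ℝ := (4 * β * Real.exp (2 * β * μ)) ^ (p / 2) with hC
  have hRbound : ∀ z : EuclideanSpace ℝ (Fin d) × EuclideanSpace ℝ (Fin d),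
      rhsF z ≤ C * (Real.exp (-c₀ * ‖z.1‖ ^ 2) * Real.exp (-c₀ * ‖z.2‖ ^ 2)) := by
    intro z
    have hSz := hS z
    set R : ℝ := ‖z.2‖ ^ 2 + ‖z.1‖ ^ 2 with hR
    have hR0 : 0 ≤ R := by positivity
    have hcb : |FDder β μ R| ≤ β * Real.exp (-(β * (R - μ))) := abs_FDder_le β μ R hβ
    have hc2 : (FDder β μ R) ^ 2 ≤ (β * Real.exp (-(β * (R - μ)))) ^ 2 := by
      rw [← sq_abs (FDder β μ R)]
      apply pow_le_pow_left₀ (abs_nonneg _) hcb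
    have hRle : R ≤ β⁻¹ * Real.exp (β * R) := by
      have h := Real.add_one_le_exp (β * R)
      rw [le_inv_mul_iff₀ hβ]
      linarith
    have hchain : 4 * (FDder β μ R) ^ 2 * R ≤
        (4 * β * Real.exp (2 * β * μ)) * Real.exp (-β * R) := by
      have h1 : 4 * (FDder β μ R) ^ 2 * R ≤ 4 * (β * Real.exp (-(β * (R - μ)))) ^ 2 *
          (β⁻¹ * Real.exp (β * R)) := by
        apply mul_le_mul (by nlinarith [sq_nonneg (FDder β μ R)]) hRle hR0 (by positivity)
      refine h1.trans (le_of_eq ?_)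
      have hsq : (β * Real.exp (-(β * (R - μ)))) ^ 2 =
          β ^ 2 * Real.exp (2 * -(β * (R - μ))) := by
        rw [mul_pow, sq (Real.exp (-(β * (R - μ)))), ← Real.exp_add, two_mul]
      rw [hsq]
      have hexp : Real.exp (2 * -(β * (R - μ))) * Real.exp (β * R) =
          Real.exp (2 * β * μ) * Real.exp (-β * R) := by
        rw [← Real.exp_add, ← Real.exp_add]
        congr 1
        ring
      have hββ : β ^ 2 * β⁻¹ = β := by
        field_simp [sq]
      calc 4 * (β ^ 2 * Real.exp (2 * -(β * (R - μ)))) * (β⁻¹ * Real.exp (β * R))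
          = 4 * (β ^ 2 * β⁻¹) * (Real.exp (2 * -(β * (R - μ))) * Real.exp (β * R)) := by ring
        _ = 4 * β * (Real.exp (2 * β * μ) * Real.exp (-β * R)) := by rw [hexp, hββ]
        _ = _ := by ring
    show (‖ThetaL d β μ z‖ ^ 2 + ‖XiL d β μ z‖ ^ 2) ^ (p / 2) ≤ _
    rw [hSz]
    calc (4 * FDder β μ R ^ 2 * R) ^ (p / 2)
        ≤ ((4 * β * Real.exp (2 * β * μ)) * Real.exp (-β * R)) ^ (p / 2) :=
          Real.rpow_le_rpow (by positivity) hchain (by positivity)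
      _ = C * Real.exp (-β * R) ^ (p / 2) :=
          Real.mul_rpow (by positivity) (Real.exp_nonneg _)
      _ = C * (Real.exp (-c₀ * ‖z.1‖ ^ 2) * Real.exp (-c₀ * ‖z.2‖ ^ 2)) := by
          rw [← Real.exp_mul, ← Real.exp_add]
          congr 1
          rw [hR, hc₀]
          ring
  -- integrability of rhsF
  have hIntBound : Integrable (fun z : EuclideanSpace ℝ (Fin d) × EuclideanSpace ℝ (Fin d) =>
      C * (Real.exp (-c₀ * ‖z.1‖ ^ 2) * Real.exp (-c₀ * ‖z.2‖ ^ 2))) := by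
    have hg := integrable_gauss (d := d) hc₀pos
    have h2 := hg.mul_prod hg
    rw [← Measure.volume_eq_prod] at h2
    exact h2.const_mul C
  have hIntR : Integrable rhsF := by
    apply hIntBound.mono' hcontR.aestronglyMeasurable
    filter_upwards with z
    rw [Real.norm_eq_abs, abs_of_nonneg (hrhs0 z)]
    exact hRbound z
  -- the translation map
  set T : EuclideanSpace ℝ (Fin d) × EuclideanSpace ℝ (Fin d) →
      EuclideanSpace ℝ (Fin d) × EuclideanSpace ℝ (Fin d) :=
    fun z => (z.1, z.2 + A z.1) with hT
  have hTmp : MeasurePreserving T volume volume := by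
    rw [Measure.volume_eq_prod]
    exact (MeasurePreserving.id volume).skew_product
      (g := fun x ξ => ξ + A x)
      (measurable_snd.add (hA.continuous.measurable.comp measurable_fst))
      (Filter.Eventually.of_forall fun x => map_add_right_eq_self volume (A x))
  have hTcont : Continuous T :=
    continuous_fst.prodMk (continuous_snd.add (hA.continuous.comp continuous_fst))
  let Th : Homeomorph (EuclideanSpace ℝ (Fin d) × EuclideanSpace ℝ (Fin d))
      (EuclideanSpace ℝ (Fin d) × EuclideanSpace ℝ (Fin d)) :=
    { toFun := T
      invFun := fun z => (z.1, z.2 - A z.1)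
      left_inv := fun z => by simp [hT]
      right_inv := fun z => by simp [hT]
      continuous_toFun := hTcont
      continuous_invFun :=
        continuous_fst.prodMk (continuous_snd.sub (hA.continuous.comp continuous_fst)) }
  have hTemb : MeasurableEmbedding T := Th.measurableEmbedding
  -- pointwise key inequality
  have hkey : ∀ z, lhsF (T z) ≤ M ^ p * rhsF z := by
    rintro ⟨x, u⟩
    have h1 : ‖PhiL d β μ A (x, u + A x)‖ ≤
        |FDder β μ (‖u‖ ^ 2 + ‖x‖ ^ 2)| * (2 * (‖fderiv ℝ A x‖ * ‖u‖ + ‖x‖)) := by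
      have h := norm_PhiL_le (A := A) (β := β) (μ := μ)
        ((x, u + A x) : EuclideanSpace ℝ (Fin d) × EuclideanSpace ℝ (Fin d))
      simp only [add_sub_cancel_right] at h
      exact h
    set c := FDder β μ (‖u‖ ^ 2 + ‖x‖ ^ 2) with hc
    set S := ‖ThetaL d β μ (x, u)‖ ^ 2 + ‖XiL d β μ (x, u)‖ ^ 2 with hSdef
    have hSval : S = 4 * c ^ 2 * (‖u‖ ^ 2 + ‖x‖ ^ 2) := hS (x, u)
    have hS0 : 0 ≤ S := by positivity
    have hsqrtS : Real.sqrt S = 2 * |c| * Real.sqrt (‖u‖ ^ 2 + ‖x‖ ^ 2) := by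
      rw [hSval, show 4 * c ^ 2 * (‖u‖ ^ 2 + ‖x‖ ^ 2) =
          (2 * |c|) ^ 2 * (‖u‖ ^ 2 + ‖x‖ ^ 2) from by rw [mul_pow, sq_abs]; ring,
        Real.sqrt_mul (by positivity), Real.sqrt_sq (by positivity)]
    have h2 : ‖fderiv ℝ A x‖ * ‖u‖ + ‖x‖ ≤
        Real.sqrt (1 + ‖fderiv ℝ A x‖ ^ 2) * Real.sqrt (‖u‖ ^ 2 + ‖x‖ ^ 2) :=
      cs_aux _ _ _ (norm_nonneg _) (norm_nonneg _) (norm_nonneg _)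
    have h3 : ‖PhiL d β μ A (x, u + A x)‖ ≤ M * Real.sqrt S := by
      rw [hsqrtS]
      calc ‖PhiL d β μ A (x, u + A x)‖
          ≤ |c| * (2 * (‖fderiv ℝ A x‖ * ‖u‖ + ‖x‖)) := h1
        _ ≤ |c| * (2 * (Real.sqrt (1 + ‖fderiv ℝ A x‖ ^ 2) *
            Real.sqrt (‖u‖ ^ 2 + ‖x‖ ^ 2))) := by gcongr
        _ ≤ |c| * (2 * (M * Real.sqrt (‖u‖ ^ 2 + ‖x‖ ^ 2))) := by
            gcongr
            exact hMle x
        _ = M * (2 * |c| * Real.sqrt (‖u‖ ^ 2 + ‖x‖ ^ 2)) := by ring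
    have h4 := Real.rpow_le_rpow (norm_nonneg _) h3 hp0.le
    calc lhsF (T (x, u)) = ‖PhiL d β μ A (x, u + A x)‖ ^ p := rfl
      _ ≤ (M * Real.sqrt S) ^ p := h4
      _ = M ^ p * Real.sqrt S ^ p := Real.mul_rpow hMnonneg (Real.sqrt_nonneg _)
      _ = M ^ p * S ^ (p / 2) := by
          rw [Real.sqrt_eq_rpow, ← Real.rpow_mul hS0,
            show (1 / 2 : ℝ) * p = p / 2 from by ring]
      _ = M ^ p * rhsF (x, u) := rfl
  -- integrability of the left side composed with T
  have hIntL : Integrable (fun z => lhsF (T z)) := by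
    apply (hIntR.const_mul (M ^ p)).mono' ((hcontL.comp hTcont).aestronglyMeasurable)
    filter_upwards with z
    calc ‖lhsF (T z)‖ = lhsF (T z) := Real.norm_of_nonneg (hlhs0 _)
      _ ≤ M ^ p * rhsF z := hkey z
  have hIL : ∫ z, lhsF z = ∫ z, lhsF (T z) := (hTmp.integral_comp hTemb lhsF).symm
  have hmono : ∫ z, lhsF (T z) ≤ ∫ z, M ^ p * rhsF z :=
    integral_mono hIntL (hIntR.const_mul _) fun z => hkey z
  have hconst : ∫ z, M ^ p * rhsF z = M ^ p * ∫ z, rhsF z := integral_const_mul _ _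
  have hR0 : 0 ≤ ∫ z, rhsF z := integral_nonneg hrhs0
  have hL0 : 0 ≤ ∫ z, lhsF z := integral_nonneg hlhs0
  have hfinal : ∫ z, lhsF z ≤ M ^ p * ∫ z, rhsF z := by
    rw [hIL]
    exact hmono.trans (le_of_eq hconst)
  calc (∫ z, lhsF z) ^ (1 / p) ≤ (M ^ p * ∫ z, rhsF z) ^ (1 / p) :=
        Real.rpow_le_rpow hL0 hfinal (by positivity)
    _ = (M ^ p) ^ (1 / p) * (∫ z, rhsF z) ^ (1 / p) :=
        Real.mul_rpow (Real.rpow_nonneg hMnonneg p) hR0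
    _ = M * (∫ z, rhsF z) ^ (1 / p) := by
        rw [← Real.rpow_mul hMnonneg, mul_one_div, div_self (ne_of_gt hp0), Real.rpow_one]
end

section
/- There exists a universal constant C > 0 such that the following holds. Let δ ∈ ℝ, σ = (σ₁,σ₂,σ₃) ∈ (0,∞)³, p ≥ 1 a real number and j ∈ {1,2,3}, and denote by j+1 the index j+1 taken modulo 3 (in {1,2,3}). Then Σ := Σ_{n ∈ ℕ₀³, σ·n ≥ δ} e^{−σ·n + δ} n_j^{p/2} satisfies: if δ < 0 then Σ ≤ C (p/e)^{p/2} (e^{δ}/σ_j^{p/2}) Π_{i=1}^{3} (⟨σ_i⟩/σ_i), and if δ ≥ 0 then Σ ≤ (C/σ_j^{p/2}) ((p^{p/2} + (2δ)^{p/2}) + (1 + δ/⟨σ_{j+1}⟩) δ^{p/2+1}/⟨σ_j⟩) Π_{k=1}^{3} (⟨σ_k⟩/σ_k). The constant C is independent of δ, σ, p and j. -/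
open Real ENNReal

/-- sup of x^q e^{-x} -/
lemma aux_sup {q x : ℝ} (hq : 0 < q) (hx : 0 ≤ x) :
    x ^ q * Real.exp (-x) ≤ q ^ q * Real.exp (-q) := by
  rcases eq_or_lt_of_le hx with h | h
  · rw [← h, Real.zero_rpow hq.ne']
    have : (0:ℝ) < q ^ q * Real.exp (-q) := by positivity
    linarith
  · have hlog : Real.log (x / q) ≤ x / q - 1 :=
      Real.log_le_sub_one_of_pos (by positivity)
    have h2 : q * Real.log x - x ≤ q * Real.log q - q := by
      rw [Real.log_div h.ne' hq.ne'] at hlog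
      have := mul_le_mul_of_nonneg_left hlog hq.le
      have hx' : q * (x / q - 1) = x - q := by field_simp
      nlinarith
    have e1 : x ^ q * Real.exp (-x) = Real.exp (q * Real.log x - x) := by
      rw [Real.rpow_def_of_pos h, ← Real.exp_add]
      ring_nf
    have e2 : q ^ q * Real.exp (-q) = Real.exp (q * Real.log q - q) := by
      rw [Real.rpow_def_of_pos hq, ← Real.exp_add]
      ring_nf
    rw [e1, e2]
    exact Real.exp_le_exp.2 h2

/-- x^q e^{-cx} ≤ (q/(e c))^q -/
lemma aux_sup2 {q c x : ℝ} (hq : 0 < q) (hc : 0 < c) (hx : 0 ≤ x) :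
    x ^ q * Real.exp (-(c * x)) ≤ (q / (Real.exp 1 * c)) ^ q := by
  have h := aux_sup hq (x := c * x) (by positivity)
  have hcx : (c * x) ^ q = c ^ q * x ^ q := Real.mul_rpow hc.le hx
  have hrhs : (q / (Real.exp 1 * c)) ^ q = q ^ q * Real.exp (-q) / c ^ q := by
    rw [Real.div_rpow hq.le (by positivity), Real.mul_rpow (Real.exp_pos 1).le hc.le,
      ← Real.exp_one_rpow (-q), Real.rpow_neg (Real.exp_pos 1).le, Real.exp_one_rpow]
    field_simp
  rw [hrhs, le_div_iff₀ (by positivity)]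
  calc x ^ q * Real.exp (-(c * x)) * c ^ q = (c * x) ^ q * Real.exp (-(c * x)) := by
        rw [hcx]; ring
    _ ≤ q ^ q * Real.exp (-q) := h

/-- (1-e^{-s})⁻¹ ≤ 2√(1+s²)/s -/
lemma aux_inv_bound {s : ℝ} (hs : 0 < s) :
    (1 - Real.exp (-s))⁻¹ ≤ 2 * (Real.sqrt (1 + s ^ 2) / s) := by
  have h1 : s + 1 ≤ Real.exp s := by have := Real.add_one_le_exp s; linarith
  have hes : 0 < Real.exp (-s) := Real.exp_pos _
  have hexp : Real.exp (-s) ≤ 1 / (1 + s) := by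
    rw [Real.exp_neg]
    rw [inv_le_comm₀ (Real.exp_pos s) (by positivity)]
    calc (1 / (1+s))⁻¹ = 1 + s := by field_simp
      _ ≤ Real.exp s := by linarith
  have hlow : s / (1 + s) ≤ 1 - Real.exp (-s) := by
    have : 1 - 1/(1+s) = s/(1+s) := by field_simp; ring
    linarith [this]
  have hpos : 0 < s / (1 + s) := by positivity
  have h2 : (1 - Real.exp (-s))⁻¹ ≤ (1 + s) / s := by
    rw [show (1+s)/s = (s/(1+s))⁻¹ by rw [inv_div]]
    exact inv_anti₀ hpos hlow
  refine h2.trans ?_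
  have hsq : 1 + s ≤ 2 * Real.sqrt (1 + s ^ 2) := by
    have h3 : (1 + s) ≤ Real.sqrt ((1+s)^2) := by
      rw [Real.sqrt_sq (by linarith)]
    have h4 : Real.sqrt ((1+s)^2) ≤ Real.sqrt (2 * (1 + s^2)) := by
      apply Real.sqrt_le_sqrt; nlinarith [sq_nonneg (s - 1)]
    have h5 : Real.sqrt (2 * (1 + s^2)) ≤ 2 * Real.sqrt (1 + s^2) := by
      rw [Real.sqrt_mul (by norm_num)]
      have h6 : Real.sqrt 2 ≤ 2 := by
        nlinarith [Real.sq_sqrt (by norm_num : (0:ℝ) ≤ 2), Real.sqrt_nonneg 2]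
      nlinarith [Real.sqrt_nonneg (1 + s^2)]
    linarith
  rw [show 2 * (Real.sqrt (1 + s ^ 2) / s) = (2 * Real.sqrt (1 + s^2)) / s by ring]
  gcongr

/-- geometric series bound in ENNReal -/
lemma aux_geom {s : ℝ} (hs : 0 < s) :
    ∑' (a : ℕ), ENNReal.ofReal (Real.exp (-(s * a))) ≤
      ENNReal.ofReal (2 * (Real.sqrt (1 + s ^ 2) / s)) := by
  have hlt : Real.exp (-s) < 1 := Real.exp_lt_one_iff.2 (by linarith)
  have h1 : ∀ a : ℕ, ENNReal.ofReal (Real.exp (-(s * a))) =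
      ENNReal.ofReal (Real.exp (-s)) ^ a := by
    intro a
    rw [← ENNReal.ofReal_pow (Real.exp_nonneg _), ← Real.exp_nat_mul]
    ring_nf
  calc ∑' (a : ℕ), ENNReal.ofReal (Real.exp (-(s * a)))
      = ∑' (a : ℕ), ENNReal.ofReal (Real.exp (-s)) ^ a := by
        exact tsum_congr h1
    _ = (1 - ENNReal.ofReal (Real.exp (-s)))⁻¹ := ENNReal.tsum_geometric _
    _ = ENNReal.ofReal ((1 - Real.exp (-s))⁻¹) := by
        rw [← ENNReal.ofReal_one, ← ENNReal.ofReal_sub _ (Real.exp_nonneg _),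
          ENNReal.ofReal_inv_of_pos (by linarith)]
    _ ≤ _ := ENNReal.ofReal_le_ofReal (aux_inv_bound hs)

/-- shifted geometric bound -/
lemma aux_shift {s : ℝ} (hs : 0 < s) (ρ : ℝ) :
    ∑' (a : ℕ), (if ρ ≤ s * a then ENNReal.ofReal (Real.exp (ρ - s * a)) else 0) ≤
      ENNReal.ofReal (2 * (Real.sqrt (1 + s ^ 2) / s)) := by
  set f : ℕ → ℝ≥0∞ := fun a => if ρ ≤ s * a then ENNReal.ofReal (Real.exp (ρ - s * a)) else 0 with hf
  set a₀ : ℕ := ⌈ρ / s⌉₊ with ha₀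
  have hshift : ∑' (a : ℕ), f (a₀ + a) = ∑' a, f a := by
    apply Function.Injective.tsum_eq (add_right_injective a₀)
    intro a ha
    simp only [Function.mem_support, ne_eq] at ha
    rcases le_or_gt a₀ a with h | h
    · exact ⟨a - a₀, by show a₀ + (a - a₀) = a; omega⟩
    · exfalso
      apply ha
      have h1 : (a : ℝ) < ρ / s := Nat.lt_ceil.1 h
      have h2 : s * a < ρ := by
        rw [lt_div_iff₀ hs] at h1
        linarith
      rw [hf]
      exact if_neg (not_le.2 h2)
  rw [← hshift]
  have hterm : ∀ a : ℕ, f (a₀ + a) ≤ ENNReal.ofReal (Real.exp (-(s * a))) := by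
    intro a
    have hρ : ρ ≤ s * a₀ := by
      have := Nat.le_ceil (ρ / s)
      rw [div_le_iff₀ hs] at this
      rw [ha₀]; linarith
    have hcond : ρ ≤ s * (a₀ + a : ℕ) := by
      push_cast
      have : (0:ℝ) ≤ s * a := by positivity
      nlinarith
    rw [hf]
    simp only [if_pos hcond]
    apply ENNReal.ofReal_le_ofReal
    apply Real.exp_le_exp.2
    push_cast
    nlinarith
  exact le_trans (ENNReal.tsum_le_tsum hterm) (aux_geom hs)

/-- shifted geometric with min-gain -/
lemma aux_shift_min {u : ℝ} (hu : 0 < u) (ρ : ℝ) :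
    ∑' (c : ℕ), (if ρ ≤ u * c then ENNReal.ofReal (Real.exp (ρ - u * c)) else 0) ≤
      ENNReal.ofReal (2 * (Real.sqrt (1 + u ^ 2) / u) * min 1 (Real.exp ρ)) := by
  rcases le_or_gt ρ 0 with h | h
  · have hmin : min 1 (Real.exp ρ) = Real.exp ρ := min_eq_right (Real.exp_le_one_iff.2 h)
    rw [hmin]
    have hterm : ∀ c : ℕ, (if ρ ≤ u * c then ENNReal.ofReal (Real.exp (ρ - u * c)) else 0) ≤
        ENNReal.ofReal (Real.exp ρ) * ENNReal.ofReal (Real.exp (-(u * c))) := by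
      intro c
      split
      · rw [← ENNReal.ofReal_mul (Real.exp_nonneg _), ← Real.exp_add]
        apply ENNReal.ofReal_le_ofReal
        apply Real.exp_le_exp.2
        linarith
      · exact zero_le
    calc ∑' (c:ℕ), (if ρ ≤ u * c then ENNReal.ofReal (Real.exp (ρ - u * c)) else 0)
        ≤ ∑' (c:ℕ), ENNReal.ofReal (Real.exp ρ) * ENNReal.ofReal (Real.exp (-(u * c))) :=
          ENNReal.tsum_le_tsum hterm
      _ = ENNReal.ofReal (Real.exp ρ) * ∑' (c:ℕ), ENNReal.ofReal (Real.exp (-(u * c))) :=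
          ENNReal.tsum_mul_left
      _ ≤ ENNReal.ofReal (Real.exp ρ) * ENNReal.ofReal (2 * (Real.sqrt (1 + u ^ 2) / u)) :=
          mul_le_mul_right (aux_geom hu) _
      _ = ENNReal.ofReal (2 * (Real.sqrt (1 + u ^ 2) / u) * Real.exp ρ) := by
          rw [← ENNReal.ofReal_mul (Real.exp_nonneg _)]
          ring_nf
  · have hmin : min 1 (Real.exp ρ) = 1 := min_eq_left (by
      have : (1:ℝ) < Real.exp ρ := by
        rw [show (1:ℝ) = Real.exp 0 by simp]
        exact Real.exp_lt_exp.2 h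
      linarith)
    rw [hmin, mul_one]
    exact aux_shift hu ρ

/-- counting bound: sum of min 1 e^{ν - t b} -/
lemma aux_count {t : ℝ} (ht : 0 < t) (ν : ℝ) :
    ∑' (b : ℕ), ENNReal.ofReal (min 1 (Real.exp (ν - t * b))) ≤
      ENNReal.ofReal (max ν 0 / t + 1 + 2 * (Real.sqrt (1 + t ^ 2) / t)) := by
  have hterm : ∀ b : ℕ, ENNReal.ofReal (min 1 (Real.exp (ν - t * b))) ≤
      ENNReal.ofReal (if (b:ℝ) ≤ ν / t then 1 else 0) +
        (if ν ≤ t * b then ENNReal.ofReal (Real.exp (ν - t * b)) else 0) := by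
    intro b
    rcases le_or_gt (b : ℝ) (ν / t) with h | h
    · rw [if_pos h]
      calc ENNReal.ofReal (min 1 (Real.exp (ν - t * b))) ≤ ENNReal.ofReal 1 :=
            ENNReal.ofReal_le_ofReal (min_le_left _ _)
        _ ≤ _ := le_add_of_nonneg_right zero_le
    · rw [if_neg (not_le.2 h)]
      have h2 : ν ≤ t * b := by
        rw [div_lt_iff₀ ht] at h
        nlinarith
      rw [if_pos h2, ENNReal.ofReal_zero, zero_add]
      exact ENNReal.ofReal_le_ofReal (min_le_right _ _)
  calc ∑' (b : ℕ), ENNReal.ofReal (min 1 (Real.exp (ν - t * b)))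
      ≤ ∑' (b : ℕ), (ENNReal.ofReal (if (b:ℝ) ≤ ν / t then 1 else 0) +
          (if ν ≤ t * b then ENNReal.ofReal (Real.exp (ν - t * b)) else 0)) :=
        ENNReal.tsum_le_tsum hterm
    _ = (∑' (b : ℕ), ENNReal.ofReal (if (b:ℝ) ≤ ν / t then 1 else 0)) +
        ∑' (b : ℕ), (if ν ≤ t * b then ENNReal.ofReal (Real.exp (ν - t * b)) else 0) :=
        ENNReal.tsum_add
    _ ≤ ENNReal.ofReal (max ν 0 / t + 1) + ENNReal.ofReal (2 * (Real.sqrt (1 + t ^ 2) / t)) := by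
        gcongr
        · set N : ℕ := ⌊ν / t⌋₊ + 1 with hN
          have hvanish : ∀ b ∉ Finset.range N, ENNReal.ofReal (if (b:ℝ) ≤ ν / t then 1 else 0) = 0 := by
            intro b hb
            simp only [Finset.mem_range, not_lt] at hb
            have h1 : ν / t < (N:ℝ) := by
              rw [hN]; push_cast; exact Nat.lt_floor_add_one _
            have h2 : ¬ ((b:ℝ) ≤ ν / t) := by
              push_neg
              calc ν / t < (N:ℝ) := h1
                _ ≤ (b:ℝ) := by exact_mod_cast Nat.cast_le.2 hb
            rw [if_neg h2, ENNReal.ofReal_zero]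
          rw [tsum_eq_sum hvanish]
          calc ∑ b ∈ Finset.range N, ENNReal.ofReal (if (b:ℝ) ≤ ν / t then 1 else 0)
              ≤ ∑ _b ∈ Finset.range N, ENNReal.ofReal 1 := by
                apply Finset.sum_le_sum
                intro i _
                apply ENNReal.ofReal_le_ofReal
                split <;> norm_num
            _ = N * ENNReal.ofReal 1 := by
                rw [Finset.sum_const, nsmul_eq_mul, Finset.card_range]
            _ = ENNReal.ofReal N := by
                rw [ENNReal.ofReal_one, mul_one, ENNReal.ofReal_natCast]
            _ ≤ ENNReal.ofReal (max ν 0 / t + 1) := by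
                apply ENNReal.ofReal_le_ofReal
                rcases le_or_gt ν 0 with hν | hν
                · have : ν / t ≤ 0 := div_nonpos_of_nonpos_of_nonneg hν ht.le
                  have hfl : ⌊ν / t⌋₊ = 0 := Nat.floor_eq_zero.2 (lt_of_le_of_lt this one_pos)
                  rw [hN, hfl]
                  have : max ν 0 = 0 := max_eq_right hν
                  rw [this]
                  simp [div_nonneg, ht.le]
                · have hfl : (⌊ν / t⌋₊ : ℝ) ≤ ν / t := Nat.floor_le (by positivity)
                  have : max ν 0 = ν := max_eq_left hν.le
                  rw [this, hN]
                  push_cast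
                  linarith
        · exact aux_shift ht ν
    _ ≤ _ := by
        rw [← ENNReal.ofReal_add (by positivity) (by positivity)]

/-- sum of a^q over a < δ/s -/
lemma aux_sumAq {s δ q : ℝ} (hs : 0 < s) (hδ : 0 ≤ δ) (hq : 0 < q) :
    ∑' (a : ℕ), (if s * a < δ then ENNReal.ofReal ((a:ℝ) ^ q) else 0) ≤
      ENNReal.ofReal ((δ / s) ^ (q + 1)) := by
  set N : ℕ := ⌈δ / s⌉₊ with hN
  have hvanish : ∀ a ∉ Finset.Ico 1 N, (if s * (a:ℕ) < δ then ENNReal.ofReal ((a:ℝ) ^ q) else 0) = 0 := by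
    intro a ha
    simp only [Finset.mem_Ico, not_and_or, not_le, not_lt] at ha
    rcases ha with h | h
    · interval_cases a
      split
      · rw [Nat.cast_zero, Real.zero_rpow hq.ne', ENNReal.ofReal_zero]
      · rfl
    · have h1 : δ / s ≤ (a : ℝ) := le_trans (Nat.le_ceil _) (by exact_mod_cast Nat.cast_le.2 h)
      have h2 : δ ≤ s * a := by
        rw [div_le_iff₀ hs] at h1
        linarith
      rw [if_neg (not_lt.2 h2)]
  rw [tsum_eq_sum hvanish]
  rcases Nat.eq_zero_or_pos N with h0 | hNpos
  · rw [h0]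
    simp
  calc ∑ a ∈ Finset.Ico 1 N, (if s * (a:ℕ) < δ then ENNReal.ofReal ((a:ℝ) ^ q) else 0)
      ≤ ∑ _a ∈ Finset.Ico 1 N, ENNReal.ofReal ((δ/s) ^ q) := by
        apply Finset.sum_le_sum
        intro a ha
        split
        · apply ENNReal.ofReal_le_ofReal
          apply Real.rpow_le_rpow (Nat.cast_nonneg a) _ hq.le
          rename_i hlt
          rw [le_div_iff₀ hs]
          linarith
        · exact zero_le
    _ = (N - 1 : ℕ) * ENNReal.ofReal ((δ/s) ^ q) := by
        rw [Finset.sum_const, Nat.card_Ico, nsmul_eq_mul]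
    _ ≤ ENNReal.ofReal (δ/s) * ENNReal.ofReal ((δ/s) ^ q) := by
        gcongr
        rw [← ENNReal.ofReal_natCast]
        apply ENNReal.ofReal_le_ofReal
        have h3 : (((N - 1 : ℕ)) : ℝ) < δ / s := Nat.lt_ceil.1 (by rw [← hN]; omega)
        linarith
    _ = ENNReal.ofReal ((δ/s) ^ (q + 1)) := by
        rw [← ENNReal.ofReal_mul (by positivity)]
        congr 1
        rcases eq_or_lt_of_le hδ with h | h
        · rw [← h]
          simp only [zero_div]
          rw [Real.zero_rpow hq.ne', Real.zero_rpow (by linarith)]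
          ring
        · rw [Real.rpow_add (by positivity), Real.rpow_one]
          ring

/-- splitting x^q ≤ (2δ)^q + (2(x-δ))^q -/
lemma aux_split {q δ x : ℝ} (hq : 0 < q) (hδ : 0 ≤ δ) (hδx : δ ≤ x) :
    x ^ q ≤ (2*δ) ^ q + (2*(x-δ)) ^ q := by
  rcases le_total x (2*δ) with h | h
  · calc x ^ q ≤ (2*δ)^q := Real.rpow_le_rpow (by linarith) h hq.le
      _ ≤ _ := le_add_of_nonneg_right (Real.rpow_nonneg (by linarith) _)
  · calc x ^ q ≤ (2*(x-δ))^q := Real.rpow_le_rpow (by linarith) (by linarith) hq.le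
      _ ≤ _ := le_add_of_nonneg_left (Real.rpow_nonneg (by linarith) _)

/-- key pointwise bound for region sa ≥ δ -/
lemma aux_W {q δ x : ℝ} (hq : 0 < q) (hδ : 0 ≤ δ) (hδx : δ ≤ x) :
    x ^ q * Real.exp (δ - x) ≤ ((2*q) ^ q + (2*δ) ^ q) * Real.exp ((δ - x)/2) := by
  set y := x - δ with hy
  have hy0 : 0 ≤ y := by simp [hy]; linarith
  have e1 : Real.exp (δ - x) = Real.exp (-(y/2)) * Real.exp (-(y/2)) := by
    rw [← Real.exp_add]; congr 1; simp [hy]; ring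
  have e2 : Real.exp ((δ - x)/2) = Real.exp (-(y/2)) := by congr 1; simp [hy]; ring
  have hsplit := aux_split hq hδ hδx
  have hterm1 : (2*δ)^q * Real.exp (δ - x) ≤ (2*δ)^q * Real.exp ((δ-x)/2) := by
    apply mul_le_mul_of_nonneg_left _ (Real.rpow_nonneg (by linarith) _)
    apply Real.exp_le_exp.2
    linarith
  have hterm2 : (2*y)^q * Real.exp (δ - x) ≤ (2*q)^q * Real.exp ((δ-x)/2) := by
    rw [e1, e2, ← mul_assoc]
    apply mul_le_mul_of_nonneg_right _ (Real.exp_nonneg _)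
    have h24 : (2*y) ^ q * Real.exp (-((1/4) * (2*y))) ≤ (q / (Real.exp 1 * (1/4))) ^ q :=
      aux_sup2 hq (by norm_num) (by linarith)
    have heq : -((1/4:ℝ) * (2*y)) = -(y/2) := by ring
    rw [heq] at h24
    refine h24.trans ?_
    apply Real.rpow_le_rpow (by positivity) _ hq.le
    rw [div_le_iff₀ (by positivity)]
    have he : (2:ℝ) ≤ Real.exp 1 := by
      have := Real.add_one_le_exp 1; linarith
    nlinarith
  have hexp : 0 ≤ Real.exp (δ - x) := Real.exp_nonneg _
  calc x ^ q * Real.exp (δ - x) ≤ ((2*δ)^q + (2*y)^q) * Real.exp (δ - x) := by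
        apply mul_le_mul_of_nonneg_right _ hexp
        simpa [hy] using hsplit
    _ = (2*δ)^q * Real.exp (δ - x) + (2*y)^q * Real.exp (δ - x) := by ring
    _ ≤ (2*δ)^q * Real.exp ((δ-x)/2) + (2*q)^q * Real.exp ((δ-x)/2) := add_le_add hterm1 hterm2
    _ = _ := by ring

def mk3 (j : Fin 3) (x : ℕ × ℕ × ℕ) : Fin 3 → ℕ :=
  fun i => if i = j then x.1 else if i = j + 1 then x.2.1 else x.2.2

def eqv3 (j : Fin 3) : (ℕ × ℕ × ℕ) ≃ (Fin 3 → ℕ) where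
  toFun := mk3 j
  invFun := fun n => (n j, n (j + 1), n (j + 2))
  left_inv := by
    intro ⟨a, b, c⟩
    have h1 : j + 1 ≠ j := by fin_cases j <;> decide
    have h2 : j + 2 ≠ j := by fin_cases j <;> decide
    have h3 : j + 2 ≠ j + 1 := by fin_cases j <;> decide
    simp [mk3, h1, h2, h3]
  right_inv := by
    intro n
    funext i
    have key : i = j ∨ (i ≠ j ∧ i = j + 1) ∨ (i ≠ j ∧ i ≠ j + 1 ∧ i = j + 2) := by
      fin_cases j <;> fin_cases i <;> decide
    rcases key with h | ⟨h1, h2⟩ | ⟨h1, h2, h3⟩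
    · simp [mk3, h]
    · simp [mk3, h1, h2]
    · simp [mk3, h1, h2, h3]

lemma sum3 {M : Type*} [AddCommMonoid M] (j : Fin 3) (g : Fin 3 → M) :
    ∑ i, g i = g j + g (j + 1) + g (j + 2) := by
  fin_cases j <;> simp [Fin.sum_univ_three] <;> abel

lemma prod3 {M : Type*} [CommMonoid M] (j : Fin 3) (g : Fin 3 → M) :
    ∏ i, g i = g j * g (j + 1) * g (j + 2) := by
  fin_cases j <;> simp [Fin.prod_univ_three]
  · exact mul_rotate _ _ _
  · exact (mul_rotate _ _ _).symm

lemma mk3_j (j : Fin 3) (x : ℕ × ℕ × ℕ) : mk3 j x j = x.1 := by simp [mk3]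

lemma mk3_sum (j : Fin 3) (x : ℕ × ℕ × ℕ) (σ : Fin 3 → ℝ) :
    ∑ i, σ i * (mk3 j x i : ℝ) =
      σ j * x.1 + σ (j+1) * x.2.1 + σ (j+2) * x.2.2 := by
  have h1 : j + 1 ≠ j := by fin_cases j <;> decide
  have h2 : j + 2 ≠ j := by fin_cases j <;> decide
  have h3 : j + 2 ≠ j + 1 := by fin_cases j <;> decide
  rw [sum3 j]
  simp [mk3, h1, h2, h3]

/-- reduction from real tsum to ENNReal tsum -/
lemma aux_reduce {ι : Type*} {f : ι → ℝ} (hf : ∀ n, 0 ≤ f n) {R : ℝ} (hR : 0 ≤ R)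
    (h : ∑' n, ENNReal.ofReal (f n) ≤ ENNReal.ofReal R) : ∑' n, f n ≤ R := by
  by_cases hs : Summable f
  · rw [← ENNReal.ofReal_le_ofReal_iff hR, ENNReal.ofReal_tsum_of_nonneg hf hs]
    exact h
  · rw [tsum_eq_zero_of_not_summable hs]
    exact hR

/-- product tsum in ENNReal -/
lemma tsum_pair {α β : Type*} (A : α → ℝ≥0∞) (B : β → ℝ≥0∞) :
    ∑' (y : α × β), A y.1 * B y.2 = (∑' a, A a) * (∑' b, B b) := by
  rw [ENNReal.tsum_prod (f := fun a b => A a * B b)]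
  calc ∑' (a : α), ∑' (b : β), A a * B b = ∑' (a : α), A a * ∑' (b : β), B b :=
        tsum_congr fun a => ENNReal.tsum_mul_left
    _ = _ := ENNReal.tsum_mul_right

lemma tsum_triple (A B C : ℕ → ℝ≥0∞) :
    ∑' (x : ℕ × ℕ × ℕ), A x.1 * (B x.2.1 * C x.2.2) =
      (∑' a, A a) * ((∑' b, B b) * (∑' c, C c)) := by
  calc ∑' (x : ℕ × ℕ × ℕ), A x.1 * (B x.2.1 * C x.2.2)
      = (∑' a, A a) * (∑' (y : ℕ × ℕ), B y.1 * C y.2) :=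
        tsum_pair A (fun y : ℕ × ℕ => B y.1 * C y.2)
    _ = _ := by rw [tsum_pair]

/-- halved geometric constant absorbs -/
lemma aux_half {s : ℝ} (hs : 0 < s) :
    2 * (Real.sqrt (1 + (s/2) ^ 2) / (s/2)) ≤ 4 * (Real.sqrt (1 + s ^ 2) / s) := by
  have h1 : Real.sqrt (1 + (s/2)^2) ≤ Real.sqrt (1 + s^2) := by
    apply Real.sqrt_le_sqrt; nlinarith
  have h2 : 2 * (Real.sqrt (1 + (s/2) ^ 2) / (s/2)) = 4 * (Real.sqrt (1 + (s/2)^2) / s) := by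
    field_simp; ring
  rw [h2]
  have := Real.sqrt_nonneg (1 + (s/2)^2)
  gcongr

/-- sum over a of shifted terms with rpow weight -/
lemma aux_Asum {s δ p : ℝ} (hs : 0 < s) (hδ : 0 ≤ δ) (hp : 1 ≤ p) :
    ∑' (a : ℕ), (if δ ≤ s * a then
        ENNReal.ofReal (Real.exp (δ - s * a) * (a:ℝ) ^ (p/2)) else 0) ≤
      ENNReal.ofReal ((p ^ (p/2) + (2*δ) ^ (p/2)) / s ^ (p/2) * (4 * (Real.sqrt (1 + s ^ 2) / s))) := by
  have hq : 0 < p/2 := by linarith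
  have hterm : ∀ a : ℕ, (if δ ≤ s * a then
        ENNReal.ofReal (Real.exp (δ - s * a) * (a:ℝ) ^ (p/2)) else 0) ≤
      ENNReal.ofReal ((p ^ (p/2) + (2*δ) ^ (p/2)) / s ^ (p/2)) *
        (if δ/2 ≤ s/2 * a then ENNReal.ofReal (Real.exp (δ/2 - s/2 * a)) else 0) := by
    intro a
    split
    · rename_i h
      have hW := aux_W hq hδ (x := s * a) h
      have ha : (a:ℝ) ^ (p/2) = (s * a) ^ (p/2) / s ^ (p/2) := by
        rw [← Real.div_rpow (by positivity) hs.le]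
        congr 1
        field_simp
      have hreal : Real.exp (δ - s * a) * (a:ℝ) ^ (p/2) ≤
          ((p ^ (p/2) + (2*δ) ^ (p/2)) / s ^ (p/2)) * Real.exp (δ/2 - s/2 * a) := by
        have h2q : (2 * (p/2)) = p := by ring
        rw [h2q] at hW
        have hh : Real.exp ((δ - s*a)/2) = Real.exp (δ/2 - s/2 * a) := by
          congr 1; ring
        rw [hh] at hW
        calc Real.exp (δ - s * a) * (a:ℝ) ^ (p/2)
            = ((s*a) ^ (p/2) * Real.exp (δ - s*a)) / s ^ (p/2) := by
              rw [ha]; ring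
          _ ≤ ((p ^ (p/2) + (2*δ) ^ (p/2)) * Real.exp (δ/2 - s/2 * a)) / s ^ (p/2) := by
              gcongr
          _ = _ := by ring
      have hcond : δ/2 ≤ s/2 * a := by linarith
      rw [if_pos hcond, ← ENNReal.ofReal_mul (by positivity)]
      exact ENNReal.ofReal_le_ofReal hreal
    · exact zero_le
  calc ∑' (a : ℕ), (if δ ≤ s * a then
        ENNReal.ofReal (Real.exp (δ - s * a) * (a:ℝ) ^ (p/2)) else 0)
      ≤ ∑' (a : ℕ), ENNReal.ofReal ((p ^ (p/2) + (2*δ) ^ (p/2)) / s ^ (p/2)) *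
          (if δ/2 ≤ s/2 * a then ENNReal.ofReal (Real.exp (δ/2 - s/2 * a)) else 0) :=
        ENNReal.tsum_le_tsum hterm
    _ = ENNReal.ofReal ((p ^ (p/2) + (2*δ) ^ (p/2)) / s ^ (p/2)) *
          ∑' (a : ℕ), (if δ/2 ≤ s/2 * a then ENNReal.ofReal (Real.exp (δ/2 - s/2 * a)) else 0) :=
        ENNReal.tsum_mul_left
    _ ≤ ENNReal.ofReal ((p ^ (p/2) + (2*δ) ^ (p/2)) / s ^ (p/2)) *
          ENNReal.ofReal (2 * (Real.sqrt (1 + (s/2) ^ 2) / (s/2))) :=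
        mul_le_mul_right (aux_shift (half_pos hs) (δ/2)) _
    _ ≤ ENNReal.ofReal ((p ^ (p/2) + (2*δ) ^ (p/2)) / s ^ (p/2)) *
          ENNReal.ofReal (4 * (Real.sqrt (1 + s ^ 2) / s)) :=
        mul_le_mul_right (ENNReal.ofReal_le_ofReal (aux_half hs)) _
    _ = _ := by
        rw [← ENNReal.ofReal_mul (by positivity)]

/-- the transverse plane sum -/
lemma aux_H {t u δ ν : ℝ} (ht : 0 < t) (hu : 0 < u) (hδ : 0 ≤ δ) (hν : ν ≤ δ) :
    ∑' (y : ℕ × ℕ), (if ν ≤ t * y.1 + u * y.2 then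
        ENNReal.ofReal (Real.exp (ν - (t * y.1 + u * y.2))) else 0) ≤
      ENNReal.ofReal (6 * (Real.sqrt (1 + t ^ 2) / t) * (Real.sqrt (1 + u ^ 2) / u) *
        (1 + δ / Real.sqrt (1 + t ^ 2))) := by
  rw [ENNReal.tsum_prod (f := fun (b c : ℕ) => (if ν ≤ t * b + u * c then
        ENNReal.ofReal (Real.exp (ν - (t * b + u * c))) else 0))]
  have hinner : ∀ b : ℕ, (∑' (c : ℕ), (if ν ≤ t * b + u * c then
        ENNReal.ofReal (Real.exp (ν - (t * b + u * c))) else 0)) ≤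
      ENNReal.ofReal (2 * (Real.sqrt (1 + u ^ 2) / u)) *
        ENNReal.ofReal (min 1 (Real.exp (ν - t * b))) := by
    intro b
    have hre : ∀ c : ℕ, (if ν ≤ t * b + u * c then
        ENNReal.ofReal (Real.exp (ν - (t * b + u * c))) else 0) =
        (if (ν - t * b) ≤ u * c then ENNReal.ofReal (Real.exp ((ν - t * b) - u * c)) else 0) := by
      intro c
      rw [show ν - (t * (b:ℝ) + u * c) = (ν - t * b) - u * c by ring]
      exact if_congr (by constructor <;> intro <;> linarith) rfl rfl
    rw [tsum_congr hre]
    refine le_trans (aux_shift_min hu (ν - t * b)) ?_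
    rw [ENNReal.ofReal_mul (by positivity)]
  calc ∑' (b : ℕ), (∑' (c : ℕ), (if ν ≤ t * b + u * c then
        ENNReal.ofReal (Real.exp (ν - (t * b + u * c))) else 0))
      ≤ ∑' (b : ℕ), ENNReal.ofReal (2 * (Real.sqrt (1 + u ^ 2) / u)) *
          ENNReal.ofReal (min 1 (Real.exp (ν - t * b))) :=
        ENNReal.tsum_le_tsum hinner
    _ = ENNReal.ofReal (2 * (Real.sqrt (1 + u ^ 2) / u)) *
          ∑' (b : ℕ), ENNReal.ofReal (min 1 (Real.exp (ν - t * b))) := ENNReal.tsum_mul_left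
    _ ≤ ENNReal.ofReal (2 * (Real.sqrt (1 + u ^ 2) / u)) *
          ENNReal.ofReal (max ν 0 / t + 1 + 2 * (Real.sqrt (1 + t ^ 2) / t)) :=
        mul_le_mul_right (aux_count ht ν) _
    _ = ENNReal.ofReal (2 * (Real.sqrt (1 + u ^ 2) / u) *
          (max ν 0 / t + 1 + 2 * (Real.sqrt (1 + t ^ 2) / t))) := by
        rw [← ENNReal.ofReal_mul (by positivity)]
    _ ≤ _ := by
        apply ENNReal.ofReal_le_ofReal
        set T := Real.sqrt (1 + t ^ 2) with hT
        set U := Real.sqrt (1 + u ^ 2) with hU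
        have hT1 : t ≤ T := by
          rw [hT]
          nlinarith [Real.sq_sqrt (by positivity : (0:ℝ) ≤ 1 + t^2),
            Real.sqrt_nonneg (1 + t^2), sq_nonneg (Real.sqrt (1+t^2) - t)]
        have hTpos : 0 < T := lt_of_lt_of_le ht hT1
        have hU0 : 0 ≤ U := Real.sqrt_nonneg _
        have hmax : max ν 0 ≤ δ := max_le hν hδ
        have hmax0 : 0 ≤ max ν 0 := le_max_right _ _
        have key : max ν 0 / t + 1 + 2 * (T / t) ≤ 3 * (T / t) * (1 + δ / T) := by
          have e1 : 3 * (T / t) * (1 + δ / T) = 3 * (T/t) + 3 * (δ/t) := by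
            field_simp
          rw [e1]
          have h1 : max ν 0 / t ≤ δ / t := by gcongr
          have h2 : 1 ≤ T / t := (one_le_div ht).2 hT1
          have h3 : 0 ≤ δ / t := by positivity
          linarith
        calc 2 * (U / u) * (max ν 0 / t + 1 + 2 * (T / t))
            ≤ 2 * (U / u) * (3 * (T / t) * (1 + δ / T)) := by
              have : 0 ≤ U / u := by positivity
              nlinarith [key]
          _ = 6 * (T / t) * (U / u) * (1 + δ / T) := by ring

theorem stmt_19 :
    ∃ C : ℝ, 0 < C ∧
      ∀ (δ : ℝ) (σ : Fin 3 → ℝ) (p : ℝ) (j : Fin 3),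
        (∀ i, 0 < σ i) → 1 ≤ p →
          ((δ < 0 →
            (∑' n : Fin 3 → ℕ,
                if δ ≤ ∑ i, σ i * n i then
                  Real.exp (-(∑ i, σ i * n i) + δ) * ((n j : ℝ)) ^ (p / 2)
                else 0) ≤
              C * (p / Real.exp 1) ^ (p / 2) * (Real.exp δ / σ j ^ (p / 2)) *
                ∏ i : Fin 3, Real.sqrt (1 + σ i ^ 2) / σ i) ∧
          (0 ≤ δ →
            (∑' n : Fin 3 → ℕ,
                if δ ≤ ∑ i, σ i * n i then
                  Real.exp (-(∑ i, σ i * n i) + δ) * ((n j : ℝ)) ^ (p / 2)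
                else 0) ≤
              C / σ j ^ (p / 2) *
                ((p ^ (p / 2) + (2 * δ) ^ (p / 2)) +
                  (1 + δ / Real.sqrt (1 + σ (j + 1) ^ 2)) * δ ^ (p / 2 + 1) /
                    Real.sqrt (1 + σ j ^ 2)) *
                ∏ k : Fin 3, Real.sqrt (1 + σ k ^ 2) / σ k)) := by
  refine ⟨16, by norm_num, ?_⟩
  intro δ σ p j hσ hp
  have hq : 0 < p / 2 := by linarith
  have hs : 0 < σ j := hσ j
  have ht : 0 < σ (j+1) := hσ (j+1)
  have hu : 0 < σ (j+2) := hσ (j+2)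
  set G : ℕ × ℕ × ℕ → ℝ := fun x =>
    if δ ≤ σ j * x.1 + σ (j+1) * x.2.1 + σ (j+2) * x.2.2 then
      Real.exp (-(σ j * x.1 + σ (j+1) * x.2.1 + σ (j+2) * x.2.2) + δ) * ((x.1 : ℝ)) ^ (p/2)
    else 0 with hG
  have hEq : (∑' n : Fin 3 → ℕ,
      if δ ≤ ∑ i, σ i * n i then
        Real.exp (-(∑ i, σ i * n i) + δ) * ((n j : ℝ)) ^ (p / 2)
      else 0) = ∑' x : ℕ × ℕ × ℕ, G x := by
    conv_lhs => rw [← Equiv.tsum_eq (eqv3 j)]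
    apply tsum_congr
    intro x
    show (if δ ≤ ∑ i, σ i * (mk3 j x i : ℝ) then
        Real.exp (-(∑ i, σ i * (mk3 j x i : ℝ)) + δ) * ((mk3 j x j : ℝ)) ^ (p / 2)
      else 0) = G x
    rw [mk3_sum, mk3_j, hG]
  have hG0 : ∀ x, 0 ≤ G x := by
    intro x
    rw [hG]
    dsimp only
    split
    · positivity
    · exact le_refl 0
  rw [hEq]
  constructor
  · -- δ < 0 branch
    intro hδ
    have hP0 : (0:ℝ) ≤ ∏ i : Fin 3, Real.sqrt (1 + σ i ^ 2) / σ i :=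
      Finset.prod_nonneg (fun i _ => by have := hσ i; positivity)
    have hR0 : (0:ℝ) ≤ 16 * (p / Real.exp 1) ^ (p / 2) * (Real.exp δ / σ j ^ (p / 2)) *
        ∏ i : Fin 3, Real.sqrt (1 + σ i ^ 2) / σ i := by
      apply mul_nonneg _ hP0
      positivity
    refine aux_reduce hG0 hR0 ?_
    set K := ENNReal.ofReal (Real.exp δ * (p / (Real.exp 1 * σ j)) ^ (p/2)) with hK
    set A : ℕ → ℝ≥0∞ := fun a => ENNReal.ofReal (Real.exp (-(σ j / 2 * a))) with hA
    set B : ℕ → ℝ≥0∞ := fun b => ENNReal.ofReal (Real.exp (-(σ (j+1) * b))) with hB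
    set Cc : ℕ → ℝ≥0∞ := fun c => ENNReal.ofReal (Real.exp (-(σ (j+2) * c))) with hC
    have hterm : ∀ x : ℕ × ℕ × ℕ, ENNReal.ofReal (G x) ≤ K * (A x.1 * (B x.2.1 * Cc x.2.2)) := by
      rintro ⟨a, b, c⟩
      rw [hG, hK, hA, hB, hC]
      dsimp only
      have hS0 : (0:ℝ) ≤ σ j * a + σ (j+1) * b + σ (j+2) * c := by positivity
      rw [if_pos (le_trans hδ.le hS0)]
      have hsc := aux_sup2 (q := p/2) hq (half_pos hs) (Nat.cast_nonneg a)
      have hcc : (p/2) / (Real.exp 1 * (σ j / 2)) = p / (Real.exp 1 * σ j) := by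
        rw [div_eq_div_iff (by positivity) (by positivity)]
        ring
      rw [hcc] at hsc
      have hreal : Real.exp (-(σ j * a + σ (j+1) * b + σ (j+2) * c) + δ) * (a:ℝ) ^ (p/2) ≤
          (Real.exp δ * (p / (Real.exp 1 * σ j)) ^ (p/2)) *
            (Real.exp (-(σ j / 2 * a)) * (Real.exp (-(σ (j+1) * b)) * Real.exp (-(σ (j+2) * c)))) := by
        have hsplit : Real.exp (-(σ j * a + σ (j+1) * b + σ (j+2) * c) + δ) =
            Real.exp (-(σ j / 2 * a)) * (Real.exp δ * (Real.exp (-(σ j / 2 * a)) *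
              (Real.exp (-(σ (j+1) * b)) * Real.exp (-(σ (j+2) * c))))) := by
          simp only [← Real.exp_add]
          congr 1
          ring
        calc Real.exp (-(σ j * a + σ (j+1) * b + σ (j+2) * c) + δ) * (a:ℝ) ^ (p/2)
            = ((a:ℝ) ^ (p/2) * Real.exp (-(σ j / 2 * a))) *
              (Real.exp δ * (Real.exp (-(σ j / 2 * a)) *
                (Real.exp (-(σ (j+1) * b)) * Real.exp (-(σ (j+2) * c))))) := by
              rw [hsplit]; ring
          _ ≤ ((p / (Real.exp 1 * σ j)) ^ (p/2)) *
              (Real.exp δ * (Real.exp (-(σ j / 2 * a)) *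
                (Real.exp (-(σ (j+1) * b)) * Real.exp (-(σ (j+2) * c))))) := by
              apply mul_le_mul_of_nonneg_right hsc (by positivity)
          _ = _ := by ring
      calc ENNReal.ofReal (Real.exp (-(σ j * a + σ (j+1) * b + σ (j+2) * c) + δ) * (a:ℝ) ^ (p/2))
          ≤ ENNReal.ofReal ((Real.exp δ * (p / (Real.exp 1 * σ j)) ^ (p/2)) *
              (Real.exp (-(σ j / 2 * a)) * (Real.exp (-(σ (j+1) * b)) * Real.exp (-(σ (j+2) * c))))) :=
            ENNReal.ofReal_le_ofReal hreal
        _ = _ := by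
            rw [ENNReal.ofReal_mul (by positivity), ENNReal.ofReal_mul (Real.exp_nonneg _),
              ENNReal.ofReal_mul (Real.exp_nonneg _), ENNReal.ofReal_mul (Real.exp_nonneg _)]
    have hAs : ∑' a, A a ≤ ENNReal.ofReal (4 * (Real.sqrt (1 + σ j ^ 2) / σ j)) := by
      rw [hA]
      have h1 := aux_geom (half_pos hs)
      have h2 : ∀ a : ℕ, Real.exp (-(σ j / 2 * a)) = Real.exp (-(σ j / 2 * a)) := fun _ => rfl
      exact le_trans h1 (ENNReal.ofReal_le_ofReal (aux_half hs))
    have hBs : ∑' b, B b ≤ ENNReal.ofReal (2 * (Real.sqrt (1 + σ (j+1) ^ 2) / σ (j+1))) := by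
      rw [hB]; exact aux_geom ht
    have hCs : ∑' c, Cc c ≤ ENNReal.ofReal (2 * (Real.sqrt (1 + σ (j+2) ^ 2) / σ (j+2))) := by
      rw [hC]; exact aux_geom hu
    calc ∑' x : ℕ × ℕ × ℕ, ENNReal.ofReal (G x)
        ≤ ∑' x : ℕ × ℕ × ℕ, K * (A x.1 * (B x.2.1 * Cc x.2.2)) := ENNReal.tsum_le_tsum hterm
      _ = K * ((∑' a, A a) * ((∑' b, B b) * (∑' c, Cc c))) := by
          rw [ENNReal.tsum_mul_left, tsum_triple]
      _ ≤ K * (ENNReal.ofReal (4 * (Real.sqrt (1 + σ j ^ 2) / σ j)) *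
            (ENNReal.ofReal (2 * (Real.sqrt (1 + σ (j+1) ^ 2) / σ (j+1))) *
             ENNReal.ofReal (2 * (Real.sqrt (1 + σ (j+2) ^ 2) / σ (j+2))))) := by
          gcongr
      _ = ENNReal.ofReal ((Real.exp δ * (p / (Real.exp 1 * σ j)) ^ (p/2)) *
            (4 * (Real.sqrt (1 + σ j ^ 2) / σ j) *
            (2 * (Real.sqrt (1 + σ (j+1) ^ 2) / σ (j+1)) *
             (2 * (Real.sqrt (1 + σ (j+2) ^ 2) / σ (j+2)))))) := by
          rw [hK, ← ENNReal.ofReal_mul (by positivity), ← ENNReal.ofReal_mul (by positivity),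
            ← ENNReal.ofReal_mul (by positivity)]
      _ ≤ _ := by
          apply ENNReal.ofReal_le_ofReal
          rw [prod3 j]
          have hdr : (p / (Real.exp 1 * σ j)) ^ (p/2) =
              (p / Real.exp 1) ^ (p/2) / σ j ^ (p/2) := by
            rw [show p / (Real.exp 1 * σ j) = (p / Real.exp 1) / σ j by ring]
            exact Real.div_rpow (by positivity) hs.le _
          rw [hdr]
          apply le_of_eq
          ring
  · intro hδ
    have hSj : 0 < Real.sqrt (1 + σ j ^ 2) := Real.sqrt_pos.2 (by positivity)
    have hSj1 : 0 < Real.sqrt (1 + σ (j+1) ^ 2) := Real.sqrt_pos.2 (by positivity)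
    have hSj2 : 0 < Real.sqrt (1 + σ (j+2) ^ 2) := Real.sqrt_pos.2 (by positivity)
    have hZ : (0:ℝ) < σ j ^ (p/2) := Real.rpow_pos_of_pos hs _
    have hX1 : (0:ℝ) ≤ p ^ (p/2) + (2*δ) ^ (p/2) := by positivity
    have hY : (0:ℝ) ≤ δ ^ (p/2+1) := Real.rpow_nonneg hδ _
    have hD1 : (0:ℝ) ≤ 1 + δ / Real.sqrt (1 + σ (j+1) ^ 2) := by positivity
    have hP0 : (0:ℝ) ≤ ∏ k : Fin 3, Real.sqrt (1 + σ k ^ 2) / σ k :=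
      Finset.prod_nonneg (fun i _ => by have := hσ i; positivity)
    have hR0 : (0:ℝ) ≤ 16 / σ j ^ (p / 2) *
        ((p ^ (p / 2) + (2 * δ) ^ (p / 2)) +
          (1 + δ / Real.sqrt (1 + σ (j + 1) ^ 2)) * δ ^ (p / 2 + 1) /
            Real.sqrt (1 + σ j ^ 2)) *
        ∏ k : Fin 3, Real.sqrt (1 + σ k ^ 2) / σ k := by
      apply mul_nonneg _ hP0
      apply mul_nonneg (by positivity)
      apply add_nonneg hX1
      positivity
    refine aux_reduce hG0 hR0 ?_
    set A1 : ℕ → ℝ≥0∞ := fun a => if δ ≤ σ j * a then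
        ENNReal.ofReal (Real.exp (δ - σ j * a) * (a:ℝ) ^ (p/2)) else 0 with hA1
    set B : ℕ → ℝ≥0∞ := fun b => ENNReal.ofReal (Real.exp (-(σ (j+1) * b))) with hB
    set Cc : ℕ → ℝ≥0∞ := fun c => ENNReal.ofReal (Real.exp (-(σ (j+2) * c))) with hC
    set D : ℕ → ℝ≥0∞ := fun a => if σ j * a < δ then
        ENNReal.ofReal ((a:ℝ) ^ (p/2)) else 0 with hD
    set E : ℕ → ℕ × ℕ → ℝ≥0∞ := fun a y => if δ - σ j * a ≤ σ (j+1) * y.1 + σ (j+2) * y.2 then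
        ENNReal.ofReal (Real.exp ((δ - σ j * a) - (σ (j+1) * y.1 + σ (j+2) * y.2))) else 0 with hE
    have hterm : ∀ x : ℕ × ℕ × ℕ, ENNReal.ofReal (G x) ≤
        A1 x.1 * (B x.2.1 * Cc x.2.2) + D x.1 * E x.1 x.2 := by
      rintro ⟨a, b, c⟩
      rw [hG, hA1, hB, hC, hD, hE]
      dsimp only
      have hb0 : (0:ℝ) ≤ σ (j+1) * b := by positivity
      have hc0 : (0:ℝ) ≤ σ (j+2) * c := by positivity
      rcases le_or_gt δ (σ j * a) with h | h
      · have hS : δ ≤ σ j * a + σ (j+1) * b + σ (j+2) * c := by linarith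
        rw [if_pos hS, if_pos h, if_neg (not_lt.2 h), zero_mul, add_zero]
        apply le_of_eq
        have hre : Real.exp (-(σ j * (a:ℝ) + σ (j+1) * b + σ (j+2) * c) + δ) * (a:ℝ) ^ (p/2) =
            (Real.exp (δ - σ j * a) * (a:ℝ) ^ (p/2)) *
              (Real.exp (-(σ (j+1) * b)) * Real.exp (-(σ (j+2) * c))) := by
          rw [show -(σ j * (a:ℝ) + σ (j+1) * b + σ (j+2) * c) + δ =
            (δ - σ j * a) + (-(σ (j+1) * b) + -(σ (j+2) * c)) by ring, Real.exp_add,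
            Real.exp_add]
          ring
        rw [hre, ENNReal.ofReal_mul (by positivity), ENNReal.ofReal_mul (Real.exp_nonneg _),
          ENNReal.ofReal_mul (Real.exp_nonneg _)]
      · rw [if_neg (not_le.2 h), zero_mul, zero_add, if_pos h]
        split
        · rename_i hS
          have hcond : δ - σ j * a ≤ σ (j+1) * b + σ (j+2) * c := by linarith
          rw [if_pos hcond]
          apply le_of_eq
          rw [← ENNReal.ofReal_mul (by positivity)]
          congr 1
          rw [show -(σ j * (a:ℝ) + σ (j+1) * b + σ (j+2) * c) + δ =
            (δ - σ j * a) - (σ (j+1) * b + σ (j+2) * c) by ring]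
          ring
        · simp
    have hT1 : ∑' x : ℕ × ℕ × ℕ, A1 x.1 * (B x.2.1 * Cc x.2.2) ≤
        ENNReal.ofReal (((p ^ (p/2) + (2*δ) ^ (p/2)) / σ j ^ (p/2) *
            (4 * (Real.sqrt (1 + σ j ^ 2) / σ j))) *
          ((2 * (Real.sqrt (1 + σ (j+1) ^ 2) / σ (j+1))) *
           (2 * (Real.sqrt (1 + σ (j+2) ^ 2) / σ (j+2))))) := by
      rw [tsum_triple]
      calc (∑' a, A1 a) * ((∑' b, B b) * (∑' c, Cc c))
          ≤ ENNReal.ofReal ((p ^ (p/2) + (2*δ) ^ (p/2)) / σ j ^ (p/2) *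
              (4 * (Real.sqrt (1 + σ j ^ 2) / σ j))) *
            (ENNReal.ofReal (2 * (Real.sqrt (1 + σ (j+1) ^ 2) / σ (j+1))) *
             ENNReal.ofReal (2 * (Real.sqrt (1 + σ (j+2) ^ 2) / σ (j+2)))) := by
            gcongr
            · exact aux_Asum hs hδ hp
            · exact aux_geom ht
            · exact aux_geom hu
        _ = _ := by
            rw [← ENNReal.ofReal_mul (by positivity), ← ENNReal.ofReal_mul (by positivity)]
    have hK2 : ∀ a : ℕ, ∑' y : ℕ × ℕ, E a y ≤
        ENNReal.ofReal (6 * (Real.sqrt (1 + σ (j+1) ^ 2) / σ (j+1)) *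
          (Real.sqrt (1 + σ (j+2) ^ 2) / σ (j+2)) *
          (1 + δ / Real.sqrt (1 + σ (j+1) ^ 2))) := by
      intro a
      rw [hE]
      refine aux_H ht hu hδ ?_
      have h0 : (0:ℝ) ≤ σ j * a := by positivity
      linarith
    have hT2 : ∑' x : ℕ × ℕ × ℕ, D x.1 * E x.1 x.2 ≤
        ENNReal.ofReal ((δ / σ j) ^ (p/2+1) *
          (6 * (Real.sqrt (1 + σ (j+1) ^ 2) / σ (j+1)) *
            (Real.sqrt (1 + σ (j+2) ^ 2) / σ (j+2)) *
            (1 + δ / Real.sqrt (1 + σ (j+1) ^ 2)))) := by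
      calc ∑' x : ℕ × ℕ × ℕ, D x.1 * E x.1 x.2
          = ∑' a : ℕ, ∑' y : ℕ × ℕ, D a * E a y :=
            ENNReal.tsum_prod (f := fun a y => D a * E a y)
        _ = ∑' a : ℕ, D a * ∑' y : ℕ × ℕ, E a y :=
            tsum_congr fun a => ENNReal.tsum_mul_left
        _ ≤ ∑' a : ℕ, D a * ENNReal.ofReal (6 * (Real.sqrt (1 + σ (j+1) ^ 2) / σ (j+1)) *
              (Real.sqrt (1 + σ (j+2) ^ 2) / σ (j+2)) *
              (1 + δ / Real.sqrt (1 + σ (j+1) ^ 2))) :=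
            ENNReal.tsum_le_tsum fun a => mul_le_mul_right (hK2 a) _
        _ = (∑' a : ℕ, D a) * ENNReal.ofReal (6 * (Real.sqrt (1 + σ (j+1) ^ 2) / σ (j+1)) *
              (Real.sqrt (1 + σ (j+2) ^ 2) / σ (j+2)) *
              (1 + δ / Real.sqrt (1 + σ (j+1) ^ 2))) := ENNReal.tsum_mul_right
        _ ≤ ENNReal.ofReal ((δ / σ j) ^ (p/2+1)) *
            ENNReal.ofReal (6 * (Real.sqrt (1 + σ (j+1) ^ 2) / σ (j+1)) *
              (Real.sqrt (1 + σ (j+2) ^ 2) / σ (j+2)) *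
              (1 + δ / Real.sqrt (1 + σ (j+1) ^ 2))) := by
            gcongr
            rw [hD]
            exact aux_sumAq hs hδ hq
        _ = _ := by
            rw [← ENNReal.ofReal_mul (Real.rpow_nonneg (by positivity) _)]
    calc ∑' x : ℕ × ℕ × ℕ, ENNReal.ofReal (G x)
        ≤ ∑' x : ℕ × ℕ × ℕ, (A1 x.1 * (B x.2.1 * Cc x.2.2) + D x.1 * E x.1 x.2) :=
          ENNReal.tsum_le_tsum hterm
      _ = (∑' x : ℕ × ℕ × ℕ, A1 x.1 * (B x.2.1 * Cc x.2.2)) +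
          ∑' x : ℕ × ℕ × ℕ, D x.1 * E x.1 x.2 := ENNReal.tsum_add
      _ ≤ ENNReal.ofReal (((p ^ (p/2) + (2*δ) ^ (p/2)) / σ j ^ (p/2) *
              (4 * (Real.sqrt (1 + σ j ^ 2) / σ j))) *
            ((2 * (Real.sqrt (1 + σ (j+1) ^ 2) / σ (j+1))) *
             (2 * (Real.sqrt (1 + σ (j+2) ^ 2) / σ (j+2))))) +
          ENNReal.ofReal ((δ / σ j) ^ (p/2+1) *
            (6 * (Real.sqrt (1 + σ (j+1) ^ 2) / σ (j+1)) *
              (Real.sqrt (1 + σ (j+2) ^ 2) / σ (j+2)) *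
              (1 + δ / Real.sqrt (1 + σ (j+1) ^ 2)))) := add_le_add hT1 hT2
      _ = ENNReal.ofReal ((((p ^ (p/2) + (2*δ) ^ (p/2)) / σ j ^ (p/2) *
              (4 * (Real.sqrt (1 + σ j ^ 2) / σ j))) *
            ((2 * (Real.sqrt (1 + σ (j+1) ^ 2) / σ (j+1))) *
             (2 * (Real.sqrt (1 + σ (j+2) ^ 2) / σ (j+2))))) +
          ((δ / σ j) ^ (p/2+1) *
            (6 * (Real.sqrt (1 + σ (j+1) ^ 2) / σ (j+1)) *
              (Real.sqrt (1 + σ (j+2) ^ 2) / σ (j+2)) *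
              (1 + δ / Real.sqrt (1 + σ (j+1) ^ 2))))) := by
          rw [ENNReal.ofReal_add (by positivity) (by positivity)]
      _ ≤ _ := by
          apply ENNReal.ofReal_le_ofReal
          rw [prod3 j]
          have hrp : (δ / σ j) ^ (p/2+1) = δ ^ (p/2+1) / (σ j ^ (p/2) * σ j) := by
            rw [Real.div_rpow hδ hs.le, Real.rpow_add hs, Real.rpow_one]
          rw [hrp]
          set X := p ^ (p/2) + (2*δ) ^ (p/2) with hX
          set Y := δ ^ (p/2+1) with hYd
          set Z := σ j ^ (p/2) with hZd
          set S0 := Real.sqrt (1 + σ j ^ 2) with hS0d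
          set S1 := Real.sqrt (1 + σ (j+1) ^ 2) with hS1d
          set S2 := Real.sqrt (1 + σ (j+2) ^ 2) with hS2d
          have e1 : 16 / Z * (X + (1 + δ / S1) * Y / S0) * (S0 / σ j * (S1 / σ (j+1)) * (S2 / σ (j+2)))
              = X / Z * (4 * (S0 / σ j)) * (2 * (S1 / σ (j+1)) * (2 * (S2 / σ (j+2)))) +
                16 * ((1 + δ / S1) * (Y / (Z * σ j)) * ((S1 / σ (j+1)) * (S2 / σ (j+2)))) := by
            field_simp
            ring
          have e2 : Y / (Z * σ j) * (6 * (S1 / σ (j+1)) * (S2 / σ (j+2)) * (1 + δ / S1))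
              = 6 * ((1 + δ / S1) * (Y / (Z * σ j)) * ((S1 / σ (j+1)) * (S2 / σ (j+2)))) := by
            ring
          rw [e1, e2]
          have hPn : (0:ℝ) ≤ (1 + δ / S1) * (Y / (Z * σ j)) * ((S1 / σ (j+1)) * (S2 / σ (j+2))) := by
            positivity
          linarith
end
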